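/- arXiv:math/0401404 — 8 statements merged into one kernel-verified Lean document; each statement's English description precedes it below -/
import Mathlib

section
/- Let P be a finite poset and Θ an equivalence relation on P such that (i) every equivalence class is an interval, (ii) the map π↓ sending each element to the minimum of its class is order-preserving, and (iii) the map π↑ sending each element to the maximum of its class is order-preserving. Then the quotient poset P/Θ (ordered by [a] ≤ [b] iff there exist x ∈ [a], y ∈ [b] with x ≤ y) is isomorphic to the induced subposet π↓(P) of P. -/
/-- For a finite poset `P` with an order congruence `θ`
(classes are intervals, downward projection `pd` and upward projection `pu`
are order-preserving), the quotient poset `P/θ` (with `[a] ≤ [b]` iff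
`∃ x ∈ [a], y ∈ [b], x ≤ y`) is isomorphic to the induced subposet `pd(P)`. -/
theorem stmt_0 {P : Type*} [PartialOrder P] [Fintype P] (θ : Setoid P)
    (hint : ∀ a : P, ∃ x y : P, {z : P | θ.r z a} = Set.Icc x y)
    (pd pu : P → P)
    (hpd : ∀ a : P, θ.r (pd a) a ∧ ∀ z : P, θ.r z a → pd a ≤ z)
    (hpu : ∀ a : P, θ.r (pu a) a ∧ ∀ z : P, θ.r z a → z ≤ pu a)
    (hpdm : Monotone pd) (hpum : Monotone pu) :
    ∃ e : Quotient θ ≃ Set.range pd,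
      ∀ a b : P,
        (∃ x y : P, θ.r x a ∧ θ.r y b ∧ x ≤ y) ↔
          (e (Quotient.mk θ a) : P) ≤ (e (Quotient.mk θ b) : P) := by
  -- pd is constant on classes
  have hconst : ∀ a b : P, θ.r a b → pd a = pd b := by
    intro a b hab
    have h1 : θ.r (pd b) a := θ.iseqv.trans (hpd b).1 (θ.iseqv.symm hab)
    have h2 : θ.r (pd a) b := θ.iseqv.trans (hpd a).1 hab
    exact le_antisymm ((hpd a).2 _ h1) ((hpd b).2 _ h2)
  let f : Quotient θ → Set.range pd :=
    Quotient.lift (fun a => (⟨pd a, ⟨a, rfl⟩⟩ : Set.range pd))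
      (fun a b hab => Subtype.ext (hconst a b hab))
  have hfmk : ∀ a : P, (f (Quotient.mk θ a) : P) = pd a := fun a => rfl
  have hinj : Function.Injective f := by
    intro x y
    refine Quotient.inductionOn₂ x y ?_
    intro a b h
    have h' : pd a = pd b := congrArg Subtype.val h
    refine Quotient.sound ?_
    exact θ.iseqv.trans (θ.iseqv.symm (hpd a).1) (h' ▸ (hpd b).1)
  have hsurj : Function.Surjective f := by
    rintro ⟨_, x, rfl⟩
    exact ⟨Quotient.mk θ x, rfl⟩
  refine ⟨Equiv.ofBijective f ⟨hinj, hsurj⟩, ?_⟩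
  intro a b
  constructor
  · rintro ⟨x, y, hxa, hyb, hxy⟩
    show pd a ≤ pd b
    rw [← hconst x a hxa, ← hconst y b hyb]
    exact hpdm hxy
  · intro h
    exact ⟨pd a, pd b, (hpd a).1, (hpd b).1, h⟩
end

section
/- Let L be a finite lattice and Θ₁, Θ₂ lattice congruences on L with downward projections (π↓)₁ and (π↓)₂. Let π↓ be the downward projection of the join Θ₁ ∨ Θ₂ in the congruence lattice of L. Then for x ∈ L, π↓(x) = x if and only if (π↓)₁(x) = x and (π↓)₂(x) = x; consequently L/(Θ₁ ∨ Θ₂) is isomorphic to the induced subposet ((π↓)₁L) ∩ ((π↓)₂L) of L. -/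
/-- A lattice congruence on `L`, as a setoid respecting joins and meets. -/
def IsLatticeCongruence {L : Type*} [Lattice L] (θ : Setoid L) : Prop :=
  ∀ a₁ a₂ b₁ b₂ : L, θ.r a₁ a₂ → θ.r b₁ b₂ →
    θ.r (a₁ ⊔ b₁) (a₂ ⊔ b₂) ∧ θ.r (a₁ ⊓ b₁) (a₂ ⊓ b₂)

/-- Let `θ₁, θ₂` be lattice congruences on a finite lattice `L` with
downward projections `pd₁, pd₂`, and let `θ` be their join in the congruence lattice
(the smallest congruence containing both), with downward projection `pd`. Then
`pd x = x` iff `pd₁ x = x` and `pd₂ x = x`; consequently `L/(θ₁ ∨ θ₂)`, which is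
isomorphic to the induced subposet `pd(L)`, coincides with `pd₁(L) ∩ pd₂(L)`. -/
theorem stmt_4 {L : Type*} [Lattice L] [Fintype L] (θ₁ θ₂ θ : Setoid L)
    (h1 : IsLatticeCongruence θ₁) (h2 : IsLatticeCongruence θ₂)
    (h : IsLatticeCongruence θ)
    (hle1 : ∀ x y : L, θ₁.r x y → θ.r x y)
    (hle2 : ∀ x y : L, θ₂.r x y → θ.r x y)
    (hmin : ∀ φ : Setoid L, IsLatticeCongruence φ →
      (∀ x y : L, θ₁.r x y → φ.r x y) → (∀ x y : L, θ₂.r x y → φ.r x y) →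
      ∀ x y : L, θ.r x y → φ.r x y)
    (pd pd₁ pd₂ : L → L)
    (hpd : ∀ a : L, θ.r (pd a) a ∧ ∀ z : L, θ.r z a → pd a ≤ z)
    (hpd1 : ∀ a : L, θ₁.r (pd₁ a) a ∧ ∀ z : L, θ₁.r z a → pd₁ a ≤ z)
    (hpd2 : ∀ a : L, θ₂.r (pd₂ a) a ∧ ∀ z : L, θ₂.r z a → pd₂ a ≤ z) :
    (∀ x : L, pd x = x ↔ pd₁ x = x ∧ pd₂ x = x) ∧
    Set.range pd = Set.range pd₁ ∩ Set.range pd₂ := by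
  -- the generating relation of the join
  set r : L → L → Prop := fun a b => θ₁.r a b ∨ θ₂.r a b with hr
  -- compatibility of the equivalence closure with sup/inf against a fixed element
  have hsi : ∀ a b : L, Relation.EqvGen r a b → ∀ c : L,
      Relation.EqvGen r (a ⊔ c) (b ⊔ c) ∧ Relation.EqvGen r (a ⊓ c) (b ⊓ c) := by
    intro a b hab
    induction hab with
    | rel a b hab =>
      intro c
      rcases hab with hab | hab
      · exact ⟨Relation.EqvGen.rel _ _ (Or.inl (h1 a b c c hab (θ₁.iseqv.refl c)).1),
          Relation.EqvGen.rel _ _ (Or.inl (h1 a b c c hab (θ₁.iseqv.refl c)).2)⟩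
      · exact ⟨Relation.EqvGen.rel _ _ (Or.inr (h2 a b c c hab (θ₂.iseqv.refl c)).1),
          Relation.EqvGen.rel _ _ (Or.inr (h2 a b c c hab (θ₂.iseqv.refl c)).2)⟩
    | refl a => exact fun c => ⟨Relation.EqvGen.refl _, Relation.EqvGen.refl _⟩
    | symm a b _ ih =>
      exact fun c => ⟨Relation.EqvGen.symm _ _ (ih c).1, Relation.EqvGen.symm _ _ (ih c).2⟩
    | trans a b c _ _ ih1 ih2 =>
      exact fun d => ⟨Relation.EqvGen.trans _ _ _ (ih1 d).1 (ih2 d).1,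
        Relation.EqvGen.trans _ _ _ (ih1 d).2 (ih2 d).2⟩
  -- the equivalence closure is a lattice congruence
  have hcong : IsLatticeCongruence (Relation.EqvGen.setoid r) := by
    intro a₁ a₂ b₁ b₂ ha hb
    have ha' : Relation.EqvGen r a₁ a₂ := ha
    have hb' : Relation.EqvGen r b₁ b₂ := hb
    constructor
    · refine Relation.EqvGen.trans _ (a₂ ⊔ b₁) _ ((hsi _ _ ha' b₁).1) ?_
      have := (hsi _ _ hb' a₂).1
      rw [sup_comm b₁ a₂, sup_comm b₂ a₂] at this
      exact this
    · refine Relation.EqvGen.trans _ (a₂ ⊓ b₁) _ ((hsi _ _ ha' b₁).2) ?_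
      have := (hsi _ _ hb' a₂).2
      rw [inf_comm b₁ a₂, inf_comm b₂ a₂] at this
      exact this
  -- θ is contained in the equivalence closure
  have hθφ : ∀ a b : L, θ.r a b → Relation.EqvGen r a b :=
    hmin (Relation.EqvGen.setoid r) hcong
      (fun x y hxy => Relation.EqvGen.rel _ _ (Or.inl hxy))
      (fun x y hxy => Relation.EqvGen.rel _ _ (Or.inr hxy))
  -- key chain lemma
  have key : ∀ x : L, pd₁ x = x → pd₂ x = x → ∀ a b : L, Relation.EqvGen r a b →
      (x ⊓ a = x ↔ x ⊓ b = x) := by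
    intro x hx1 hx2 a b hab
    induction hab with
    | rel a b hab =>
      have step : ∀ c d : L, r c d → x ⊓ c = x → x ⊓ d = x := by
        intro c d hcd hxc
        rcases hcd with hcd | hcd
        · have hxd : θ₁.r (x ⊓ c) (x ⊓ d) := (h1 x x c d (θ₁.iseqv.refl x) hcd).2
          rw [hxc] at hxd
          have : pd₁ x ≤ x ⊓ d := (hpd1 x).2 _ (θ₁.iseqv.symm hxd)
          rw [hx1] at this
          exact le_antisymm inf_le_left (le_inf le_rfl (le_trans this inf_le_right))
        · have hxd : θ₂.r (x ⊓ c) (x ⊓ d) := (h2 x x c d (θ₂.iseqv.refl x) hcd).2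
          rw [hxc] at hxd
          have : pd₂ x ≤ x ⊓ d := (hpd2 x).2 _ (θ₂.iseqv.symm hxd)
          rw [hx2] at this
          exact le_antisymm inf_le_left (le_inf le_rfl (le_trans this inf_le_right))
      have hba : r b a := by
        rcases hab with hab | hab
        · exact Or.inl (θ₁.iseqv.symm hab)
        · exact Or.inr (θ₂.iseqv.symm hab)
      exact ⟨step a b hab, step b a hba⟩
    | refl a => exact Iff.rfl
    | symm a b _ ih => exact ih.symm
    | trans a b c _ _ ih1 ih2 => exact ih1.trans ih2
  -- the main equivalence
  have main : ∀ x : L, pd x = x ↔ pd₁ x = x ∧ pd₂ x = x := by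
    intro x
    constructor
    · intro hx
      constructor
      · refine le_antisymm ((hpd1 x).2 x (θ₁.iseqv.refl x)) ?_
        have : θ.r (pd₁ x) x := hle1 _ _ (hpd1 x).1
        have := (hpd x).2 _ this
        rwa [hx] at this
      · refine le_antisymm ((hpd2 x).2 x (θ₂.iseqv.refl x)) ?_
        have : θ.r (pd₂ x) x := hle2 _ _ (hpd2 x).1
        have := (hpd x).2 _ this
        rwa [hx] at this
    · rintro ⟨hx1, hx2⟩
      have hchain : Relation.EqvGen r x (pd x) := hθφ _ _ (θ.iseqv.symm (hpd x).1)
      have : x ⊓ pd x = x := (key x hx1 hx2 x (pd x) hchain).1 (inf_idem x)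
      exact le_antisymm ((hpd x).2 x (θ.iseqv.refl x)) (le_trans this.symm.le inf_le_right)
  refine ⟨main, ?_⟩
  -- idempotence of projections
  have idem : ∀ a : L, pd (pd a) = pd a := by
    intro a
    refine le_antisymm ((hpd (pd a)).2 _ (θ.iseqv.refl _)) ?_
    exact (hpd a).2 _ (θ.iseqv.trans (hpd (pd a)).1 (hpd a).1)
  have idem1 : ∀ a : L, pd₁ (pd₁ a) = pd₁ a := by
    intro a
    refine le_antisymm ((hpd1 (pd₁ a)).2 _ (θ₁.iseqv.refl _)) ?_
    exact (hpd1 a).2 _ (θ₁.iseqv.trans (hpd1 (pd₁ a)).1 (hpd1 a).1)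
  have idem2 : ∀ a : L, pd₂ (pd₂ a) = pd₂ a := by
    intro a
    refine le_antisymm ((hpd2 (pd₂ a)).2 _ (θ₂.iseqv.refl _)) ?_
    exact (hpd2 a).2 _ (θ₂.iseqv.trans (hpd2 (pd₂ a)).1 (hpd2 a).1)
  ext x
  constructor
  · rintro ⟨a, rfl⟩
    have hx : pd (pd a) = pd a := idem a
    obtain ⟨hx1, hx2⟩ := (main (pd a)).1 hx
    exact ⟨⟨pd a, hx1⟩, ⟨pd a, hx2⟩⟩
  · rintro ⟨⟨a, ha⟩, ⟨b, hb⟩⟩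
    have hx1 : pd₁ x = x := by rw [← ha, idem1]
    have hx2 : pd₂ x = x := by rw [← hb, idem2]
    exact ⟨x, (main x).2 ⟨hx1, hx2⟩⟩
end

section
/- Let (W,S) be a finite Coxeter system and K ⊆ S. The map η_K : w ↦ w_K (where w = w_K · ᴷw is the unique factorization with w_K ∈ W_K, l(w) = l(w_K) + l(ᴷw), and l(w_K) maximal) is a lattice homomorphism from the right weak order on W onto the right weak order on W_K. -/
/-!
Write `Inv w` for the set of left inversions of `w`. The weak order is inclusion of inversion
sets, and `W_K` is a lower set for it. If `w = u * c` with `u ∈ W_K` and `c` of minimal length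
in `W_K c`, then `c` has no left inversion in `W_K`, so `Inv u = Inv w ∩ W_K`; the maximality
of `ℓ (η w)` makes `(η w)⁻¹ * w` such a `c`. Hence `η` is monotone and fixes `W_K`, which gives
meets. For joins, if `c₀` is minimal in the coset `W_K w₀` of the longest element, then
`Inv (η z * c₀) = Inv (η z) ∪ (T \ W_K)`, so `η z * c₀` bounds `x` and `y` from above as
soon as `z` bounds `η x` and `η y`.

Mathlib lacks the strong exchange condition; we obtain it, as in Björner–Brenti (Thm. 1.4.3),
from an action of `W` on `W × ZMod 2` whose second coordinate gives the cocycle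
`Inv (a * b) = Inv a ∆ a (Inv b) a⁻¹`.
-/

/-- One step up in the right weak order: multiply on the right by a simple
reflection, increasing length by one. -/
def weakStep {B W : Type*} [Group W] {M : CoxeterMatrix B} (cs : CoxeterSystem M W)
    (u w : W) : Prop :=
  ∃ i : B, w = u * cs.simple i ∧ cs.length w = cs.length u + 1

/-- The right weak order on a Coxeter group. -/
def weakLE {B W : Type*} [Group W] {M : CoxeterMatrix B} (cs : CoxeterSystem M W) :
    W → W → Prop :=
  Relation.ReflTransGen (weakStep cs)

/-- `j` is the join of `x` and `y` in the weak order. -/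
def isWeakJoin {B W : Type*} [Group W] {M : CoxeterMatrix B} (cs : CoxeterSystem M W)
    (x y j : W) : Prop :=
  weakLE cs x j ∧ weakLE cs y j ∧ ∀ z : W, weakLE cs x z → weakLE cs y z → weakLE cs j z

/-- `m` is the meet of `x` and `y` in the weak order. -/
def isWeakMeet {B W : Type*} [Group W] {M : CoxeterMatrix B} (cs : CoxeterSystem M W)
    (x y m : W) : Prop :=
  weakLE cs m x ∧ weakLE cs m y ∧ ∀ z : W, weakLE cs z x → weakLE cs z y → weakLE cs z m

theorem Subgroup.inv_mul_mul_mem_iff {G : Type*} [Group G] (H : Subgroup G) {a t : G}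
    (ha : a ∈ H) : a⁻¹ * t * a ∈ H ↔ t ∈ H := by
  rw [H.mul_mem_cancel_right ha, H.mul_mem_cancel_left (inv_mem ha)]

namespace CoxeterSystem

open List

variable {B W : Type*} [Group W] {M : CoxeterMatrix B} (cs : CoxeterSystem M W)

local prefix:100 "s" => cs.simple
local prefix:100 "π" => cs.wordProd
local prefix:100 "ℓ" => cs.length
local prefix:100 "lis" => cs.leftInvSeq

section Cocycle

open scoped Classical

noncomputable def cocycleGen (i : B) : Function.End (W × ZMod 2) :=
  fun p => (s i * p.1 * s i, p.2 + if p.1 = s i then 1 else 0)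

theorem count_leftInvSeq_cons (i : B) (ω : List B) (t : W) :
    (lis (i :: ω)).count t = (if t = s i then 1 else 0) + (lis ω).count (s i * t * s i) := by
  have hconj : t = MulAut.conj (s i) (s i * t * s i) := by
    simp [mul_assoc, cs.simple_mul_simple_cancel_left]
  rw [leftInvSeq, count_cons, hconj, count_map_of_injective _ _ (MulEquiv.injective _)]
  simp only [beq_iff_eq, ← hconj, eq_comm (a := s i), add_comm]

theorem prod_map_cocycleGen_reverse (ω : List B) (t : W) (ε : ZMod 2) :
    (ω.reverse.map cs.cocycleGen).prod (t, ε) =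
      ((π ω)⁻¹ * t * π ω, ε + ((lis ω).count t : ZMod 2)) := by
  induction ω generalizing t ε with
  | nil =>
    change (t, ε) = _
    simp
  | cons i ω ih =>
    rw [reverse_cons, map_append, prod_append, map_singleton, prod_singleton]
    change (ω.reverse.map cs.cocycleGen).prod (s i * t * s i, ε + if t = s i then 1 else 0) = _
    rw [ih, count_leftInvSeq_cons, wordProd_cons, mul_inv_rev, inv_simple]
    push_cast
    refine Prod.ext (by simp only [mul_assoc]) ?_
    split_ifs <;> simp [add_assoc]

theorem leftInvSeq_alternatingWord_eq_append (i j : B) :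
    lis (alternatingWord i j (2 * M i j)) =
      (lis (alternatingWord i j (2 * M i j))).take (M i j) ++
        (lis (alternatingWord i j (2 * M i j))).take (M i j) := by
  conv_lhs => rw [← take_append_drop (M i j) (lis (alternatingWord i j (2 * M i j)))]
  congr 1
  apply ext_getElem (by simp; omega)
  intro k h₁ h₂
  simp only [getElem_drop, getElem_take]
  simp only [length_drop, length_leftInvSeq, length_alternatingWord] at h₁
  rw [cs.getElem_leftInvSeq_alternatingWord i j _ _ (by omega),
    cs.getElem_leftInvSeq_alternatingWord i j _ _ (by omega),
    cs.prod_alternatingWord_eq_mul_pow, cs.prod_alternatingWord_eq_mul_pow]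
  have h₃ : (2 * (M i j + k) + 1) / 2 = M i j + k := by omega
  have h₄ : (2 * k + 1) / 2 = k := by omega
  simp [h₃, h₄, pow_add]

theorem isLiftable_cocycleGen : M.IsLiftable cs.cocycleGen := by
  intro i j
  have hpow : ∀ p, (cs.cocycleGen i * cs.cocycleGen j) ^ p =
      ((alternatingWord j i (2 * p)).reverse.map cs.cocycleGen).prod := by
    intro p
    induction p with
    | zero => simp [alternatingWord]
    | succ p ih =>
      rw [show 2 * (p + 1) = 2 * p + 1 + 1 by ring, alternatingWord_succ', alternatingWord_succ']
      simp [pow_succ, ih]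
  funext ⟨t, ε⟩
  change _ = (t, ε)
  rw [hpow, prod_map_cocycleGen_reverse, M.symmetric, leftInvSeq_alternatingWord_eq_append,
    count_append, cs.prod_alternatingWord_eq_mul_pow]
  simp [CharTwo.add_self_eq_zero]

noncomputable def cocycleHom : W →* Function.End (W × ZMod 2) :=
  cs.lift ⟨cs.cocycleGen, cs.isLiftable_cocycleGen⟩

theorem cocycleHom_wordProd (ω : List B) :
    cs.cocycleHom (π ω) = (ω.map cs.cocycleGen).prod := by
  rw [wordProd, map_list_prod, map_map]
  congr 2
  exact funext (cs.lift_apply_simple cs.isLiftable_cocycleGen)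

theorem cocycleHom_wordProd_inv_apply (ω : List B) (t : W) (ε : ZMod 2) :
    cs.cocycleHom (π ω)⁻¹ (t, ε) =
      ((π ω)⁻¹ * t * π ω, ε + ((lis ω).count t : ZMod 2)) := by
  rw [← wordProd_reverse, cocycleHom_wordProd, prod_map_cocycleGen_reverse, wordProd_reverse]

noncomputable def inversionParity (w t : W) : ZMod 2 := (cs.cocycleHom w⁻¹ (t, 0)).2

theorem inversionParity_wordProd (ω : List B) (t : W) :
    cs.inversionParity (π ω) t = (lis ω).count t := by
  rw [inversionParity, cocycleHom_wordProd_inv_apply, zero_add]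

theorem cocycleHom_inv_apply (w t : W) (ε : ZMod 2) :
    cs.cocycleHom w⁻¹ (t, ε) = (w⁻¹ * t * w, ε + cs.inversionParity w t) := by
  obtain ⟨ω, rfl⟩ := cs.wordProd_surjective w
  rw [inversionParity_wordProd, cocycleHom_wordProd_inv_apply]

theorem inversionParity_mul (a b t : W) :
    cs.inversionParity (a * b) t =
      cs.inversionParity a t + cs.inversionParity b (a⁻¹ * t * a) := by
  rw [inversionParity, mul_inv_rev, map_mul]
  change (cs.cocycleHom b⁻¹ (cs.cocycleHom a⁻¹ (t, 0))).2 = _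
  rw [cocycleHom_inv_apply, cocycleHom_inv_apply, zero_add]

theorem inversionParity_one (t : W) : cs.inversionParity 1 t = 0 := by
  simpa using cs.inversionParity_wordProd [] t

theorem inversionParity_simple (i : B) (t : W) :
    cs.inversionParity (s i) t = if t = s i then 1 else 0 := by
  rw [← wordProd_singleton, inversionParity_wordProd, leftInvSeq_singleton, count_singleton]
  by_cases h : t = s i
  · simp [h]
  · simp [h, Ne.symm h]

theorem inversionParity_self {t : W} (ht : cs.IsReflection t) : cs.inversionParity t t = 1 := by
  obtain ⟨u, i, rfl⟩ := ht
  have hconj : u⁻¹ * (u * s i * u⁻¹) * u = s i := by group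
  have hcancel := cs.inversionParity_mul u u⁻¹ (u * s i * u⁻¹)
  rw [mul_inv_cancel, inversionParity_one, hconj] at hcancel
  rw [mul_assoc u, inversionParity_mul, inversionParity_mul, ← mul_assoc, hconj, inv_simple,
    cs.simple_mul_simple_self, one_mul, inversionParity_simple, if_pos rfl]
  linear_combination -hcancel

theorem isLeftInversion_of_inversionParity_eq_one {w t : W} (h : cs.inversionParity w t = 1) :
    cs.IsLeftInversion w t := by
  obtain ⟨ω, hω, rfl⟩ := cs.exists_isReduced w
  rw [inversionParity_wordProd] at h
  refine cs.isLeftInversion_of_mem_leftInvSeq hω (count_pos_iff.mp (Nat.pos_of_ne_zero ?_))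
  rintro h₀
  simp [h₀] at h

theorem inversionParity_eq_one_iff {w t : W} (ht : cs.IsReflection t) :
    cs.inversionParity w t = 1 ↔ cs.IsLeftInversion w t := by
  refine ⟨cs.isLeftInversion_of_inversionParity_eq_one, fun hw => ?_⟩
  by_contra h
  have h₀ : cs.inversionParity w t = 0 := by
    generalize cs.inversionParity w t = x at h ⊢
    revert x; decide
  have htw : cs.IsLeftInversion (t * w) t := by
    apply isLeftInversion_of_inversionParity_eq_one
    rw [inversionParity_mul, inversionParity_self cs ht, ht.inv, ht.mul_self, one_mul, h₀,
      add_zero]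
  exact ht.isLeftInversion_mul_right_iff.mp htw hw

end Cocycle

theorem isLeftInversion_mul_iff {t : W} (ht : cs.IsReflection t) (a b : W) :
    cs.IsLeftInversion (a * b) t ↔
      Xor (cs.IsLeftInversion a t) (cs.IsLeftInversion b (a⁻¹ * t * a)) := by
  have ht' : cs.IsReflection (a⁻¹ * t * a) := by simpa using ht.conj a⁻¹
  rw [← inversionParity_eq_one_iff cs ht, ← inversionParity_eq_one_iff cs ht,
    ← inversionParity_eq_one_iff cs ht', inversionParity_mul]
  generalize cs.inversionParity a t = x
  generalize cs.inversionParity b (a⁻¹ * t * a) = y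
  revert x y; decide

theorem isLeftInversion_simple_iff {i : B} {t : W} : cs.IsLeftInversion (s i) t ↔ t = s i := by
  constructor
  · intro h
    have := (inversionParity_eq_one_iff cs h.1).mpr h
    rw [inversionParity_simple] at this
    by_contra hne
    simp [hne] at this
  · rintro rfl
    simp [IsLeftInversion, cs.isReflection_simple]

theorem induction_on_leftDescent {p : W → Prop} (one : p 1)
    (step : ∀ w i, cs.IsLeftDescent w i → p (s i * w) → p w) (w : W) : p w := by
  induction h : ℓ w using Nat.strong_induction_on generalizing w with
  | _ n ih =>
    by_cases hw : w = 1
    · exact hw ▸ one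
    obtain ⟨i, hi⟩ := cs.exists_leftDescent_of_ne_one hw
    exact step w i hi (ih _ (h ▸ hi) _ rfl)

theorem weakLE_iff_length_add {u w : W} : weakLE cs u w ↔ ℓ u + ℓ (u⁻¹ * w) = ℓ w := by
  constructor
  · intro h
    induction h with
    | refl => simp
    | @tail v _ _ hstep ih =>
      obtain ⟨i, rfl, hlen⟩ := hstep
      have h₁ : ℓ (v * s i) ≤ ℓ u + ℓ (u⁻¹ * v * s i) := by
        simpa [mul_assoc] using cs.length_mul_le u (u⁻¹ * v * s i)
      have h₂ := cs.length_mul_simple (u⁻¹ * v) i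
      rw [← mul_assoc]
      omega
  · intro h
    induction hn : ℓ (u⁻¹ * w) generalizing w with
    | zero =>
      rw [cs.length_eq_zero_iff, inv_mul_eq_one] at hn
      exact hn ▸ Relation.ReflTransGen.refl
    | succ n ih =>
      obtain ⟨i, hi⟩ := cs.exists_rightDescent_of_ne_one (w := u⁻¹ * w) (by
        rintro h₀
        simp [h₀] at hn)
      have hi' : ℓ (u⁻¹ * (w * s i)) + 1 = ℓ (u⁻¹ * w) := by
        rwa [← mul_assoc, ← isRightDescent_iff]
      have h₁ : ℓ (w * s i) ≤ ℓ u + ℓ (u⁻¹ * (w * s i)) := by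
        simpa using cs.length_mul_le u (u⁻¹ * (w * s i))
      have h₂ := cs.length_mul_simple w i
      exact (ih (w := w * s i) (by omega) (by omega)).tail ⟨i, by simp [mul_assoc], by omega⟩

theorem isLeftInversion_of_weakStep {u w t : W} (h : weakStep cs u w)
    (ht : cs.IsLeftInversion u t) : cs.IsLeftInversion w t := by
  obtain ⟨i, rfl, hlen⟩ := h
  rw [isLeftInversion_mul_iff cs ht.1, isLeftInversion_simple_iff]
  refine Or.inl ⟨ht, fun hconj => ?_⟩
  have hlt := ht.2
  rw [show t * u = u * s i by rw [← hconj]; group] at hlt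
  omega

theorem weakLE_iff_forall_isLeftInversion {u w : W} :
    weakLE cs u w ↔ ∀ t, cs.IsLeftInversion u t → cs.IsLeftInversion w t := by
  refine ⟨fun h t ht => ?_, fun h => ?_⟩
  · induction h with
    | refl => exact ht
    | tail _ hstep ih => exact cs.isLeftInversion_of_weakStep hstep ih
  · induction u using cs.induction_on_leftDescent generalizing w with
    | one => exact (cs.weakLE_iff_length_add).mpr (by simp)
    | step u i hi ih =>
      have hiu : cs.IsLeftInversion u (s i) :=
        (cs.isLeftInversion_simple_iff_isLeftDescent u i).mpr hi
      have hiw : cs.IsLeftDescent w i :=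
        (cs.isLeftInversion_simple_iff_isLeftDescent w i).mp (h _ hiu)
      have hsub : weakLE cs (s i * u) (s i * w) := ih fun t ht => by
        have hrefl := ht.1
        rw [isLeftInversion_mul_iff cs hrefl, isLeftInversion_simple_iff, inv_simple] at ht ⊢
        rcases ht with ⟨rfl, hnot⟩ | ⟨hu, hne⟩
        · simp [cs.simple_mul_simple_self, hiu] at hnot
        · exact Or.inr ⟨h _ hu, hne⟩
      rw [weakLE_iff_length_add, mul_inv_rev, inv_simple, mul_assoc,
        cs.simple_mul_simple_cancel_left] at hsub
      rw [isLeftDescent_iff] at hi hiw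
      rw [weakLE_iff_length_add]
      omega

theorem exists_forall_isLeftInversion [Finite W] :
    ∃ w₀ : W, ∀ t, cs.IsReflection t → cs.IsLeftInversion w₀ t := by
  obtain ⟨w₀, hw₀⟩ := Finite.exists_max cs.length
  exact ⟨w₀, fun t ht => ⟨ht, lt_of_le_of_ne (hw₀ _) (ht.length_mul_right_ne w₀)⟩⟩

theorem mem_of_forall_isLeftInversion_mem (H : Subgroup W) {w : W}
    (h : ∀ t, cs.IsLeftInversion w t → t ∈ H) : w ∈ H := by
  induction w using cs.induction_on_leftDescent with
  | one => exact H.one_mem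
  | step w i hi ih =>
    have hs : s i ∈ H := h _ ((cs.isLeftInversion_simple_iff_isLeftDescent w i).mpr hi)
    have hsw : s i * w ∈ H := ih fun t ht => by
      rcases ((cs.isLeftInversion_mul_iff ht.1 _ _).mp ht).or with ht' | ht'
      · rwa [(cs.isLeftInversion_simple_iff).mp ht']
      · exact (H.inv_mul_mul_mem_iff hs).mp (h _ ht')
    simpa [← mul_assoc] using H.mul_mem hs hsw

abbrev parabolicSubgroup (K : Set B) : Subgroup W := Subgroup.closure (cs.simple '' K)

section Parabolic

variable {K : Set B}

theorem mem_parabolicSubgroup_of_isLeftInversion {v t : W} (hv : v ∈ cs.parabolicSubgroup K)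
    (ht : cs.IsLeftInversion v t) : t ∈ cs.parabolicSubgroup K := by
  induction hv using Subgroup.closure_induction generalizing t with
  | mem x hx =>
    obtain ⟨i, hi, rfl⟩ := hx
    rw [(cs.isLeftInversion_simple_iff).mp ht]
    exact Subgroup.subset_closure ⟨i, hi, rfl⟩
  | one => simpa using ht.2
  | mul a b ha hb iha ihb =>
    rcases ((cs.isLeftInversion_mul_iff ht.1 a b).mp ht).or with ht' | ht'
    · exact iha ht'
    · exact (Subgroup.inv_mul_mul_mem_iff _ ha).mp (ihb ht')
  | inv a ha iha =>
    have hconj : cs.IsLeftInversion a (a * t * a⁻¹) :=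
      ⟨ht.1.conj a, by simpa [mul_assoc] using (cs.isLeftInversion_inv_iff.mp ht).2⟩
    exact (Subgroup.inv_mul_mul_mem_iff _ (inv_mem ha)).mp (by simpa using iha hconj)

theorem mem_parabolicSubgroup_of_weakLE {z v : W} (h : weakLE cs z v)
    (hv : v ∈ cs.parabolicSubgroup K) : z ∈ cs.parabolicSubgroup K :=
  cs.mem_of_forall_isLeftInversion_mem _ fun t ht =>
    cs.mem_parabolicSubgroup_of_isLeftInversion hv (cs.weakLE_iff_forall_isLeftInversion.mp h t ht)

theorem exists_forall_length_le_length_mul (w : W) : ∃ q ∈ cs.parabolicSubgroup K,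
    ∀ q' ∈ cs.parabolicSubgroup K, ℓ (q * w) ≤ ℓ (q' * (q * w)) := by
  let f : W → ℕ := fun q => ℓ (q * w)
  have hne : (cs.parabolicSubgroup K : Set W).Nonempty := ⟨1, one_mem _⟩
  refine ⟨Function.argminOn f _ hne, Function.argminOn_mem f _ hne, fun q' hq' => ?_⟩
  rw [← mul_assoc]
  exact Function.argminOn_le f _ (mul_mem hq' (Function.argminOn_mem f _ hne))

theorem length_mul_eq_add_of_forall_not_isLeftInversion {c : W}
    (hc : ∀ t ∈ cs.parabolicSubgroup K, ¬ cs.IsLeftInversion c t) {p : W}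
    (hp : p ∈ cs.parabolicSubgroup K) : ℓ (p * c) = ℓ p + ℓ c := by
  induction p using cs.induction_on_leftDescent with
  | one => simp
  | step p i hi ih =>
    have hs : s i ∈ cs.parabolicSubgroup K := cs.mem_parabolicSubgroup_of_isLeftInversion hp
      ((cs.isLeftInversion_simple_iff_isLeftDescent p i).mpr hi)
    have hsp : s i * p ∈ cs.parabolicSubgroup K := mul_mem hs hp
    have hnot : ¬ cs.IsLeftDescent (s i * p * c) i := by
      rw [← isLeftInversion_simple_iff_isLeftDescent,
        cs.isLeftInversion_mul_iff (cs.isReflection_simple i)]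
      rintro (⟨h₁, -⟩ | ⟨h₂, -⟩)
      · rw [isLeftInversion_simple_iff_isLeftDescent, isLeftDescent_iff, ← mul_assoc,
          cs.simple_mul_simple_self, one_mul] at h₁
        rw [isLeftDescent_iff] at hi
        omega
      · exact hc _ ((Subgroup.inv_mul_mul_mem_iff _ hsp).mpr hs) h₂
    rw [not_isLeftDescent_iff, ← mul_assoc, ← mul_assoc, cs.simple_mul_simple_self, one_mul,
      ih hsp] at hnot
    rw [isLeftDescent_iff] at hi
    omega

theorem isLeftInversion_mul_iff_of_mem {u c t : W} (hu : u ∈ cs.parabolicSubgroup K)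
    (hc : ∀ t ∈ cs.parabolicSubgroup K, ¬ cs.IsLeftInversion c t)
    (ht : t ∈ cs.parabolicSubgroup K) :
    cs.IsLeftInversion (u * c) t ↔ cs.IsLeftInversion u t := by
  by_cases hrefl : cs.IsReflection t
  · have := hc _ ((Subgroup.inv_mul_mul_mem_iff _ hu).mpr ht)
    simp [cs.isLeftInversion_mul_iff hrefl, Xor, this]
  · simp [IsLeftInversion, hrefl]

theorem isLeftInversion_mul_iff_of_not_mem {u c t : W} (hu : u ∈ cs.parabolicSubgroup K)
    (ht : t ∉ cs.parabolicSubgroup K) :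
    cs.IsLeftInversion (u * c) t ↔ cs.IsLeftInversion c (u⁻¹ * t * u) := by
  by_cases hrefl : cs.IsReflection t
  · have := mt (cs.mem_parabolicSubgroup_of_isLeftInversion hu) ht
    simp [cs.isLeftInversion_mul_iff hrefl, Xor, this]
  · have : ¬ cs.IsReflection (u⁻¹ * t * u) := fun h =>
      hrefl (by simpa [mul_assoc] using h.conj u)
    simp [IsLeftInversion, hrefl, this]

theorem exists_isLeftInversion_iff_not_mem [Finite W] (K : Set B) : ∃ c : W,
    ∀ t, cs.IsReflection t → (cs.IsLeftInversion c t ↔ t ∉ cs.parabolicSubgroup K) := by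
  obtain ⟨w₀, hw₀⟩ := cs.exists_forall_isLeftInversion
  obtain ⟨q, hq, hmin⟩ := cs.exists_forall_length_le_length_mul (K := K) w₀
  refine ⟨q * w₀, fun t ht =>
    ⟨fun hinv hmem => (hmin t hmem).not_gt hinv.2, fun hnot => ?_⟩⟩
  have hconj : q⁻¹ * t * q ∉ cs.parabolicSubgroup K :=
    mt (Subgroup.inv_mul_mul_mem_iff _ hq).mp hnot
  have := hw₀ _ (by simpa using ht.conj q⁻¹)
  rw [← inv_mul_cancel_left q w₀, cs.isLeftInversion_mul_iff_of_not_mem (inv_mem hq) hconj] at this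
  simpa [mul_assoc] using this

/-- `u` is the factor `w_K` of `w = w_K * ᴷw`. -/
def IsParabolicComponent (K : Set B) (w u : W) : Prop :=
  u ∈ cs.parabolicSubgroup K ∧ ℓ w = ℓ u + ℓ (u⁻¹ * w) ∧
    ∀ v ∈ cs.parabolicSubgroup K, ℓ w = ℓ v + ℓ (v⁻¹ * w) → ℓ v ≤ ℓ u

namespace IsParabolicComponent

variable {cs} {w u : W} (h : cs.IsParabolicComponent K w u)
include h

theorem eq_of_mem (hw : w ∈ cs.parabolicSubgroup K) : u = w := by
  have hle := h.2.2 w hw (by simp)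
  have hlen := h.2.1
  rw [← inv_mul_eq_one, ← cs.length_eq_zero_iff]
  omega

theorem weakLE : _root_.weakLE cs u w := (cs.weakLE_iff_length_add).mpr h.2.1.symm

theorem not_isLeftInversion_inv_mul {t : W} (ht : t ∈ cs.parabolicSubgroup K) :
    ¬ cs.IsLeftInversion (u⁻¹ * w) t := by
  obtain ⟨q, hq, hmin⟩ := cs.exists_forall_length_le_length_mul (K := K) (u⁻¹ * w)
  have hv : u * q⁻¹ ∈ cs.parabolicSubgroup K := mul_mem h.1 (inv_mem hq)
  have hadd : ℓ w = ℓ (u * q⁻¹) + ℓ (q * (u⁻¹ * w)) := by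
    rw [← cs.length_mul_eq_add_of_forall_not_isLeftInversion
      (fun t ht hinv => (hmin t ht).not_gt hinv.2) hv]
    congr 1
    group
  have hmax := h.2.2 _ hv (by rwa [show (u * q⁻¹)⁻¹ * w = q * (u⁻¹ * w) by group])
  have hmin_t := hmin (t * q⁻¹) (mul_mem ht (inv_mem hq))
  rw [show t * q⁻¹ * (q * (u⁻¹ * w)) = t * (u⁻¹ * w) by group] at hmin_t
  have hlen := h.2.1
  exact fun hinv => by have := hinv.2; omega

theorem isLeftInversion_iff {t : W} (ht : t ∈ cs.parabolicSubgroup K) :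
    cs.IsLeftInversion w t ↔ cs.IsLeftInversion u t := by
  conv_lhs => rw [← mul_inv_cancel_left u w]
  exact cs.isLeftInversion_mul_iff_of_mem h.1 (fun _ => h.not_isLeftInversion_inv_mul) ht

theorem weakLE_of_weakLE {v : W} (hv : v ∈ cs.parabolicSubgroup K) (hvw : _root_.weakLE cs v w) :
    _root_.weakLE cs v u := by
  rw [weakLE_iff_forall_isLeftInversion] at hvw ⊢
  exact fun t ht =>
    (h.isLeftInversion_iff (cs.mem_parabolicSubgroup_of_isLeftInversion hv ht)).mp (hvw t ht)

end IsParabolicComponent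

variable {η : W → W} (hη : ∀ w, cs.IsParabolicComponent K w (η w))
include hη

theorem weakLE_map {x y : W} (h : weakLE cs x y) : weakLE cs (η x) (η y) :=
  (hη y).weakLE_of_weakLE (hη x).1 (Relation.ReflTransGen.trans (hη x).weakLE h)

theorem isWeakMeet_map {x y m : W} (h : isWeakMeet cs x y m) :
    isWeakMeet cs (η x) (η y) (η m) := by
  obtain ⟨hmx, hmy, hmax⟩ := h
  refine ⟨cs.weakLE_map hη hmx, cs.weakLE_map hη hmy, fun z hzx hzy => ?_⟩
  have hz : z ∈ cs.parabolicSubgroup K := cs.mem_parabolicSubgroup_of_weakLE hzx (hη x).1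
  exact (hη m).weakLE_of_weakLE hz (hmax z (Relation.ReflTransGen.trans hzx (hη x).weakLE)
    (Relation.ReflTransGen.trans hzy (hη y).weakLE))

theorem isWeakJoin_map [Finite W] {x y j : W} (h : isWeakJoin cs x y j) :
    isWeakJoin cs (η x) (η y) (η j) := by
  obtain ⟨hxj, hyj, hmin⟩ := h
  refine ⟨cs.weakLE_map hη hxj, cs.weakLE_map hη hyj, fun z hxz hyz => ?_⟩
  obtain ⟨c, hc⟩ := cs.exists_isLeftInversion_iff_not_mem K
  have hZ : ∀ t ∈ cs.parabolicSubgroup K,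
      cs.IsLeftInversion (η z * c) t ↔ cs.IsLeftInversion (η z) t := fun t ht =>
    cs.isLeftInversion_mul_iff_of_mem (hη z).1 (fun t ht hinv => (hc t hinv.1).mp hinv ht) ht
  have hbelow : ∀ v, weakLE cs (η v) z → weakLE cs v (η z * c) := by
    intro v hvz
    rw [weakLE_iff_forall_isLeftInversion]
    intro t ht
    by_cases htP : t ∈ cs.parabolicSubgroup K
    · rw [hZ t htP]
      exact (cs.weakLE_iff_forall_isLeftInversion.mp ((hη z).weakLE_of_weakLE (hη v).1 hvz)) t
        (((hη v).isLeftInversion_iff htP).mp ht)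
    · rw [cs.isLeftInversion_mul_iff_of_not_mem (hη z).1 htP,
        hc _ (by simpa using ht.1.conj (η z)⁻¹)]
      exact mt (Subgroup.inv_mul_mul_mem_iff _ (hη z).1).mp htP
  have hjZ := (cs.weakLE_iff_forall_isLeftInversion).mp (hmin _ (hbelow x hxz) (hbelow y hyz))
  rw [weakLE_iff_forall_isLeftInversion]
  intro t ht
  have htP := cs.mem_parabolicSubgroup_of_isLeftInversion (hη j).1 ht
  exact cs.weakLE_iff_forall_isLeftInversion.mp (hη z).weakLE t
    ((hZ t htP).mp (hjZ t (((hη j).isLeftInversion_iff htP).mpr ht)))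

end Parabolic

end CoxeterSystem

/-- For a finite Coxeter system `(W,S)` and `K ⊆ S`, the projection
`η : w ↦ w_K` onto the parabolic subgroup `W_K` (characterized by `η w ∈ W_K`,
`l(w) = l(η w) + l((η w)⁻¹ w)` with `l(η w)` maximal among such factorizations)
is a lattice homomorphism from the weak order on `W` onto the weak order on `W_K`:
it fixes `W_K` pointwise (hence is onto `W_K`) and preserves joins and meets. -/
theorem stmt_6 {B W : Type*} [Group W] [Finite W] {M : CoxeterMatrix B}
    (cs : CoxeterSystem M W) (K : Set B) (η : W → W)
    (hη : ∀ w : W, η w ∈ Subgroup.closure (cs.simple '' K) ∧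
      cs.length w = cs.length (η w) + cs.length ((η w)⁻¹ * w) ∧
      ∀ v ∈ Subgroup.closure (cs.simple '' K),
        cs.length w = cs.length v + cs.length (v⁻¹ * w) → cs.length v ≤ cs.length (η w)) :
    (∀ v ∈ Subgroup.closure (cs.simple '' K), η v = v) ∧
    (∀ x y j : W, isWeakJoin cs x y j → isWeakJoin cs (η x) (η y) (η j)) ∧
    (∀ x y m : W, isWeakMeet cs x y m → isWeakMeet cs (η x) (η y) (η m)) :=
  ⟨fun v hv => CoxeterSystem.IsParabolicComponent.eq_of_mem (hη v) hv,
    fun _ _ _ => cs.isWeakJoin_map hη, fun _ _ _ => cs.isWeakMeet_map hη⟩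
end

section
/- Let (W,S) be a finite Coxeter system, r,s ∈ S with m = m(r,s) ≥ 3, and let γ ∈ W_{r,s} have a reduced word of the form srs··· with 2 ≤ l(γ) ≤ m−1 (so γ is a join-irreducible of degree two). Then γ' := γ∗ · (w₀)_{{r,s}} is a join-irreducible with reduced word of the form rsr··· and length l(γ') = m − l(γ) + 1, where γ∗ is the unique element covered by γ in weak order and (w₀)_{{r,s}} is the longest element of W_{{r,s}}. -/
/-- Cover relation of the right weak order. -/
def weakCov {B W : Type*} [Group W] {M : CoxeterMatrix B} (cs : CoxeterSystem M W)
    (u w : W) : Prop :=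
  weakLE cs u w ∧ u ≠ w ∧ ∀ v : W, weakLE cs u v → weakLE cs v w → v = u ∨ v = w

/-- The alternating word `aba⋯` of length `l`, starting with `a`. -/
def altWord {B : Type*} (a b : B) (l : ℕ) : List B :=
  (List.range l).map (fun k => if k % 2 = 0 then a else b)

/-!
Inside the dihedral parabolic subgroup, write `P a b k` for the product of the alternating word
`aba⋯` of length `k` and `m = M a b`. Two facts about these elements carry the whole argument:
`P a b k` is reduced for `k ≤ m`, and for `0 < k < m` its only right descent is its last letter.
The first gives `γ∗ = P s r (l - 1)`; the second says that `P r s k` covers exactly one element,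
i.e. is join-irreducible. The identity `γ' = P r s (m - l + 1)` is the braid relation in disguise:
`γ∗⁻¹ · P r s (m - l + 1)` is an alternating word of length `m`, hence equals `w₀`.

Both facts rest on two classical inputs: `s_a s_b` has order exactly `m`, seen in the geometric
representation, where it acts on `span (e_a, e_b)` as a rotation through `2π / m`; and the
exchange condition for simple reflections, obtained from Tits' permutation of `W × ZMod 2`, which
shows that the parity of the number of occurrences of a reflection in the right inversion sequence
of a word depends only on the product of the word.
-/

noncomputable def sinRatio (θ : ℝ) (n : ℕ) : ℝ := Real.sin (n * θ) / Real.sin θ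

@[simp] theorem sinRatio_zero (θ : ℝ) : sinRatio θ 0 = 0 := by simp [sinRatio]

theorem sinRatio_one {θ : ℝ} (hθ : Real.sin θ ≠ 0) : sinRatio θ 1 = 1 := by
  simp [sinRatio, hθ]

theorem sinRatio_add_two (θ : ℝ) (n : ℕ) :
    sinRatio θ (n + 2) = 2 * Real.cos θ * sinRatio θ (n + 1) - sinRatio θ n := by
  have h : Real.sin ((n + 2 : ℕ) * θ) = 2 * Real.cos θ * Real.sin ((n + 1 : ℕ) * θ)
      - Real.sin (n * θ) := by
    have h₁ := Real.sin_add ((n + 1 : ℕ) * θ) θ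
    have h₂ := Real.sin_sub ((n + 1 : ℕ) * θ) θ
    push_cast at h₁ h₂ ⊢
    rw [show ((n : ℝ) + 2) * θ = (n + 1) * θ + θ by ring,
      show (n : ℝ) * θ = (n + 1) * θ - θ by ring, h₁, h₂]
    ring
  rw [sinRatio, h, sub_div, mul_div_assoc]
  rfl

theorem not_sinRatio_two_mul_eq_zero_and {θ : ℝ} {t : ℕ} (ht₀ : 0 < t * θ)
    (htπ : t * θ < Real.pi) (hθ : Real.sin θ ≠ 0) :
    ¬(sinRatio θ (2 * t) = 0 ∧ sinRatio θ (2 * t + 1) = 1) := by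
  rintro ⟨h₀, h₁⟩
  rw [sinRatio, div_eq_zero_iff, or_iff_left hθ] at h₀
  rw [sinRatio, div_eq_one_iff_eq hθ] at h₁
  push_cast at h₀ h₁
  rw [add_mul, one_mul, Real.sin_add, h₀, zero_mul, zero_add, mul_assoc,
    Real.cos_two_mul'] at h₁
  have hsin : Real.sin (t * θ) ^ 2 = 0 := by
    have := mul_right_cancel₀ hθ (h₁.trans (one_mul _).symm)
    linarith [Real.sin_sq_add_cos_sq (t * θ)]
  exact (Real.sin_pos_of_pos_of_lt_pi ht₀ htπ).ne' (pow_eq_zero_iff two_ne_zero |>.mp hsin)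

theorem sin_pi_div_pos {m : ℕ} (hm : 2 ≤ m) : 0 < Real.sin (Real.pi / m) := by
  have hm' : (1 : ℝ) < m := by exact_mod_cast hm
  exact Real.sin_pos_of_pos_of_lt_pi (by positivity) (div_lt_self Real.pi_pos hm')

theorem sinRatio_pi_div_two_mul {m : ℕ} (hm : m ≠ 0) : sinRatio (Real.pi / m) (2 * m) = 0 := by
  rw [sinRatio, Nat.cast_mul, mul_assoc, mul_div_cancel₀ _ (by exact_mod_cast hm),
    Nat.cast_ofNat, Real.sin_two_pi, zero_div]

theorem sinRatio_pi_div_two_mul_add_one {m : ℕ} (hm : 2 ≤ m) :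
    sinRatio (Real.pi / m) (2 * m + 1) = 1 := by
  have hm' : (m : ℝ) ≠ 0 := by positivity
  rw [sinRatio, div_eq_one_iff_eq (sin_pi_div_pos hm).ne', Nat.cast_add, Nat.cast_mul,
    Nat.cast_ofNat, Nat.cast_one, add_mul, one_mul, mul_assoc, mul_div_cancel₀ _ hm', add_comm,
    Real.sin_add_two_pi]

theorem pow_mul_pow_swap_eq_one {G : Type*} [Monoid G] {x y : G} (hx : x * x = 1)
    (hy : y * y = 1) (n : ℕ) : (x * y) ^ n * (y * x) ^ n = 1 := by
  induction n with
  | zero => simp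
  | succ n ih =>
    rw [pow_succ, pow_succ', mul_assoc, ← mul_assoc (x * y) (y * x), mul_assoc x y,
      ← mul_assoc y y x, hy, one_mul, hx, one_mul, ih]

namespace CoxeterMatrix

variable {B : Type*} (M : CoxeterMatrix B)

-- For `M i j = 0` the junk value `π / 0 = 0` is harmless: no relation is imposed on such a pair.
noncomputable def cosForm (i j : B) : ℝ := -Real.cos (Real.pi / M i j)

noncomputable def rootCoord (i : B) : (B →₀ ℝ) →ₗ[ℝ] ℝ :=
  Finsupp.linearCombination ℝ (M.cosForm i)

noncomputable def geomRefl (i : B) : Module.End ℝ (B →₀ ℝ) :=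
  LinearMap.id - (2 : ℝ) • (M.rootCoord i).smulRight (Finsupp.single i 1)

theorem geomRefl_apply (i : B) (v : B →₀ ℝ) :
    M.geomRefl i v = v - (2 * M.rootCoord i v) • Finsupp.single i 1 := by
  simp [geomRefl, mul_smul]

theorem rootCoord_single (i j : B) : M.rootCoord i (Finsupp.single j 1) = M.cosForm i j := by
  simp [rootCoord]

theorem cosForm_self (i : B) : M.cosForm i i = 1 := by
  simp [cosForm]

theorem geomRefl_mul_self (i : B) : M.geomRefl i * M.geomRefl i = 1 := by
  refine LinearMap.ext fun v => ?_
  rw [Module.End.mul_apply, geomRefl_apply, geomRefl_apply, map_sub, map_smul, rootCoord_single,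
    cosForm_self]
  simp only [smul_eq_mul, mul_one, Module.End.one_apply]
  module

variable {M} {i j : B}

local notation "c" => Real.cos (Real.pi / M i j)
local notation "e" => Finsupp.single

theorem geomRefl_apply_pair_left (p q : ℝ) :
    M.geomRefl i (p • e i 1 + q • e j 1) = (2 * c * q - p) • e i 1 + q • e j 1 := by
  rw [geomRefl_apply, map_add, map_smul, map_smul, rootCoord_single, rootCoord_single,
    cosForm_self, cosForm]
  module

theorem geomRefl_apply_pair_right (p q : ℝ) :
    M.geomRefl j (p • e i 1 + q • e j 1) = p • e i 1 + (2 * c * p - q) • e j 1 := by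
  rw [geomRefl_apply, map_add, map_smul, map_smul, rootCoord_single, rootCoord_single,
    cosForm_self, cosForm, M.symmetric j i]
  module

theorem geomRefl_mul_pow_apply_single (hM : 2 ≤ M i j) (n : ℕ) :
    ((M.geomRefl i * M.geomRefl j) ^ n) (e i 1) =
      sinRatio (Real.pi / M i j) (2 * n + 1) • e i 1 +
        sinRatio (Real.pi / M i j) (2 * n) • e j 1 := by
  induction n with
  | zero => simp [sinRatio_one (sin_pi_div_pos hM).ne']
  | succ n ih =>
    rw [pow_succ', Module.End.mul_apply, ih, Module.End.mul_apply, geomRefl_apply_pair_right,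
      geomRefl_apply_pair_left, show 2 * (n + 1) + 1 = (2 * n + 1) + 2 by ring,
      show 2 * (n + 1) = 2 * n + 2 by ring, sinRatio_add_two _ (2 * n + 1),
      sinRatio_add_two _ (2 * n)]

theorem geomRefl_mul_pow_coxeter_apply_single (hM : 2 ≤ M i j) :
    ((M.geomRefl i * M.geomRefl j) ^ M i j) (e i 1) = e i 1 := by
  rw [geomRefl_mul_pow_apply_single hM, sinRatio_pi_div_two_mul (by omega),
    sinRatio_pi_div_two_mul_add_one hM]
  simp

theorem geomRefl_apply_of_rootCoord_eq_zero {v : B →₀ ℝ} (hv : M.rootCoord i v = 0) :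
    M.geomRefl i v = v := by
  simp [geomRefl_apply, hv]

theorem exists_eq_smul_add_smul_add (hM : 2 ≤ M i j) (v : B →₀ ℝ) :
    ∃ (a b : ℝ) (w : B →₀ ℝ), M.rootCoord i w = 0 ∧ M.rootCoord j w = 0 ∧
      v = a • e i 1 + b • e j 1 + w := by
  have hc : 1 - c ^ 2 ≠ 0 := by
    nlinarith [Real.sin_sq_add_cos_sq (Real.pi / M i j), sin_pi_div_pos hM]
  set a := (M.rootCoord i v + c * M.rootCoord j v) / (1 - c ^ 2) with ha
  set b := (M.rootCoord j v + c * M.rootCoord i v) / (1 - c ^ 2) with hb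
  have hφ (k : B) : M.rootCoord k (v - a • e i 1 - b • e j 1) =
      M.rootCoord k v - a * M.cosForm k i - b * M.cosForm k j := by
    simp only [map_sub, map_smul, rootCoord_single, smul_eq_mul]
  refine ⟨a, b, v - a • e i 1 - b • e j 1, ?_, ?_, by abel⟩
  · rw [hφ, cosForm_self, cosForm, ha, hb]
    field_simp
    ring
  · rw [hφ, cosForm_self, cosForm, M.symmetric j i, ha, hb]
    field_simp
    ring

theorem geomRefl_mul_pow_coxeter (hM : 2 ≤ M i j) :
    (M.geomRefl i * M.geomRefl j) ^ M i j = 1 := by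
  set A := M.geomRefl i * M.geomRefl j
  have hAi : (A ^ M i j) (e i 1) = e i 1 := geomRefl_mul_pow_coxeter_apply_single hM
  -- `(geomRefl j * geomRefl i) ^ m` is inverse to `A ^ m` and fixes `e j` by symmetry
  have hAj : (A ^ M i j) (e j 1) = e j 1 := by
    have hji : ((M.geomRefl j * M.geomRefl i) ^ M i j) (e j 1) = e j 1 := by
      simpa [M.symmetric j i] using geomRefl_mul_pow_coxeter_apply_single (M := M) (i := j) (j := i)
        (by rwa [M.symmetric])
    rw [← hji, ← Module.End.mul_apply, pow_mul_pow_swap_eq_one (M.geomRefl_mul_self i)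
      (M.geomRefl_mul_self j), hji, Module.End.one_apply]
  refine LinearMap.ext fun v => ?_
  obtain ⟨a, b, w, hwi, hwj, rfl⟩ := exists_eq_smul_add_smul_add hM v
  have hAw (n : ℕ) : (A ^ n) w = w := by
    induction n with
    | zero => rfl
    | succ n ih =>
      rw [pow_succ', Module.End.mul_apply, ih, Module.End.mul_apply,
        geomRefl_apply_of_rootCoord_eq_zero hwj, geomRefl_apply_of_rootCoord_eq_zero hwi]
  rw [map_add, map_add, map_smul, map_smul, hAi, hAj, hAw, Module.End.one_apply]

theorem geomRefl_mul_pow_ne_one (hij : i ≠ j) {t : ℕ} (ht₀ : 0 < t) (ht : t < M i j) :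
    (M.geomRefl i * M.geomRefl j) ^ t ≠ 1 := by
  intro h
  have hM : 2 ≤ M i j := by have := M.off_diagonal i j hij; omega
  have hA := geomRefl_mul_pow_apply_single hM t
  rw [h, Module.End.one_apply] at hA
  have hm : (0 : ℝ) < M i j := by positivity
  refine not_sinRatio_two_mul_eq_zero_and (by positivity) ?_ (sin_pi_div_pos hM).ne'
    ⟨by simpa [hij, Ne.symm hij] using (congrArg (· j) hA).symm,
      by simpa [hij] using (congrArg (· i) hA).symm⟩
  have ht' : (t : ℝ) < M i j := by exact_mod_cast ht
  rw [mul_div_assoc', div_lt_iff₀ hm, mul_comm]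
  exact mul_lt_mul_of_pos_left ht' Real.pi_pos

variable (M) in
theorem isLiftable_geomRefl : M.IsLiftable M.geomRefl := by
  intro i j
  rcases eq_or_ne i j with rfl | hij
  · rw [M.diagonal, pow_one, geomRefl_mul_self]
  · rcases Nat.lt_or_ge (M i j) 2 with hM | hM
    · have := M.off_diagonal i j hij
      rw [show M i j = 0 by omega, pow_zero]
    · exact geomRefl_mul_pow_coxeter hM

end CoxeterMatrix

theorem CoxeterSystem.pow_simple_mul_simple_ne_one {B W : Type*} [Group W] {M : CoxeterMatrix B}
    (cs : CoxeterSystem M W) {i j : B} (hij : i ≠ j) {t : ℕ} (ht₀ : 0 < t) (ht : t < M i j) :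
    (cs.simple i * cs.simple j) ^ t ≠ 1 := fun h =>
  M.geomRefl_mul_pow_ne_one hij ht₀ ht <| by
    simpa [cs.lift_apply_simple] using congrArg (cs.lift ⟨_, M.isLiftable_geomRefl⟩) h

def altLetter {B : Type*} (a b : B) (k : ℕ) : B := if k % 2 = 0 then a else b

section AltWord

variable {B : Type*} (a b : B)

theorem altWord_eq_map (n : ℕ) : altWord a b n = (List.range n).map (altLetter a b) := rfl

@[simp] theorem altWord_zero : altWord a b 0 = [] := rfl

@[simp] theorem length_altWord (n : ℕ) : (altWord a b n).length = n := by simp [altWord]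

@[simp] theorem altLetter_zero : altLetter a b 0 = a := rfl

theorem altLetter_succ (k : ℕ) : altLetter a b (k + 1) = altLetter b a k := by
  unfold altLetter; split_ifs <;> first | rfl | omega

theorem altLetter_two_mul_add_one (k : ℕ) : altLetter a b (2 * k + 1) = b := by
  simp [altLetter]

theorem altLetter_ne {a b : B} (hab : a ≠ b) (k : ℕ) : altLetter a b k ≠ altLetter b a k := by
  simp only [altLetter]; split_ifs <;> tauto

theorem altWord_succ (n : ℕ) : altWord a b (n + 1) = altWord a b n ++ [altLetter a b n] := by
  simp [altWord_eq_map, List.range_succ]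

theorem altWord_succ' (n : ℕ) : altWord a b (n + 1) = a :: altWord b a n := by
  simp only [altWord_eq_map, List.range_succ_eq_map, List.map_cons, List.map_map]
  exact congrArg _ (List.map_congr_left fun k _ => altLetter_succ a b k)

theorem altWord_add (p q : ℕ) :
    altWord a b (p + q) = altWord a b p ++ altWord (altLetter a b p) (altLetter b a p) q := by
  induction p generalizing a b with
  | zero => simp
  | succ p ih => rw [Nat.add_right_comm, altWord_succ', ih, altWord_succ', altLetter_succ,
      altLetter_succ, List.cons_append]

theorem drop_altWord {p n : ℕ} (hp : p ≤ n) :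
    (altWord a b n).drop p = altWord (altLetter a b p) (altLetter b a p) (n - p) := by
  obtain ⟨q, rfl⟩ := Nat.exists_eq_add_of_le hp
  rw [altWord_add, List.drop_left' (length_altWord a b p), Nat.add_sub_cancel_left]

theorem getElem?_altWord {n k : ℕ} (hk : k < n) :
    (altWord a b n)[k]? = some (altLetter a b k) := by
  simp [altWord_eq_map, hk]

theorem CoxeterMatrix.apply_altLetter (M : CoxeterMatrix B) (k : ℕ) :
    M (altLetter a b k) (altLetter b a k) = M a b := by
  simp only [altLetter]; split_ifs
  · rfl
  · exact M.symmetric b a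

theorem altWord_eq_reverse_alternatingWord (n : ℕ) :
    altWord a b n = (CoxeterSystem.alternatingWord b a n).reverse := by
  induction n generalizing a b with
  | zero => rfl
  | succ n ih => rw [altWord_succ', ih, CoxeterSystem.alternatingWord_succ, List.concat_eq_append,
      List.reverse_concat']

theorem prod_map_altWord_two_mul {G : Type*} [Monoid G] (f : B → G) (n : ℕ) :
    ((altWord a b (2 * n)).map f).prod = (f a * f b) ^ n := by
  induction n with
  | zero => simp
  | succ n ih =>
    rw [mul_add, altWord_add, List.map_append, List.prod_append, ih, pow_succ]
    simp [altLetter, altWord_succ']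

end AltWord

namespace CoxeterSystem

variable {B W : Type*} [Group W] {M : CoxeterMatrix B} (cs : CoxeterSystem M W)

local prefix:100 "s " => cs.simple
local prefix:100 "π " => cs.wordProd
local prefix:100 "ℓ " => cs.length
local prefix:100 "ris " => cs.rightInvSeq
local prefix:100 "lis " => cs.leftInvSeq

theorem rightInvSeq_eq_map_leftInvSeq (ω : List B) :
    ris ω = (lis ω).map fun t => (π ω)⁻¹ * t * π ω := by
  induction ω with
  | nil => rfl
  | cons i ω ih =>
    simp only [rightInvSeq, leftInvSeq, ih, wordProd_cons, List.map_cons, List.map_map]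
    congr 1
    · simp [mul_assoc]
    · exact List.map_congr_left fun t _ => by simp [mul_assoc]

section Dihedral

variable (a b : B)

theorem leftInvSeq_altWord (n : ℕ) :
    lis (altWord a b n) = (List.range n).map fun j => (s a * s b) ^ j * s a := by
  induction n generalizing a b with
  | zero => rfl
  | succ n ih =>
    rw [altWord_succ', leftInvSeq, ih, List.range_succ_eq_map]
    simp only [List.map_cons, List.map_map, pow_zero, one_mul]
    refine congrArg _ (List.map_congr_left fun j _ => ?_)
    simp only [Function.comp_apply, MulAut.conj_apply, inv_simple]
    rw [pow_succ', mul_assoc (s a) (s b), ← mul_pow_mul]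

theorem wordProd_altWord_mul_simple_mul_inv (n : ℕ) :
    π (altWord a b n) * s (altLetter a b n) * (π (altWord a b n))⁻¹ =
      (s a * s b) ^ n * s a := by
  have h := cs.leftInvSeq_concat (altWord a b n) (altLetter a b n)
  rw [List.concat_eq_append, ← altWord_succ, leftInvSeq_altWord, leftInvSeq_altWord,
    List.range_succ, List.map_append, List.concat_eq_append] at h
  simpa using (List.append_cancel_left h).symm

theorem inv_wordProd_altWord_mul_simple_mul (n : ℕ) :
    (π (altWord b a n))⁻¹ * s a * π (altWord b a n) =
      π (altWord (altLetter a b n) (altLetter b a n) (2 * n + 1)) := by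
  induction n with
  | zero => simp [altWord_succ']
  | succ n ih =>
    rw [altLetter_succ, altLetter_succ, show 2 * (n + 1) + 1 = (2 * n + 1) + 1 + 1 by ring,
      altWord_succ b a n, altWord_succ' _ _ (2 * n + 1 + 1), altWord_succ _ _ (2 * n + 1),
      altLetter_two_mul_add_one, cs.wordProd_cons, cs.wordProd_append, cs.wordProd_append, ← ih]
    simp [mul_assoc]

theorem wordProd_altWord_eq_wordProd_altWord_sub {n : ℕ} (hn : n ≤ 2 * M a b) :
    π (altWord a b n) = π (altWord b a (2 * M a b - n)) := by
  rw [altWord_eq_reverse_alternatingWord, altWord_eq_reverse_alternatingWord, wordProd_reverse,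
    wordProd_reverse, cs.prod_alternatingWord_eq_prod_alternatingWord_sub b a n
    (by rwa [M.symmetric, mul_comm]), M.symmetric, mul_comm]

theorem wordProd_altWord_add_coxeter (p : ℕ) :
    π (altWord a b (p + M a b)) = π (altWord a b p) * π (altWord a b (M a b)) := by
  rw [altWord_add, wordProd_append]
  unfold altLetter
  split_ifs
  · rfl
  · rw [cs.wordProd_altWord_eq_wordProd_altWord_sub b a (n := M a b)
      (by rw [M.symmetric b a]; omega), M.symmetric b a, two_mul, Nat.add_sub_cancel]

theorem wordProd_altWord_coxeter_mul_self :
    π (altWord a b (M a b)) * π (altWord a b (M a b)) = 1 := by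
  rw [← wordProd_altWord_add_coxeter, wordProd_altWord_eq_wordProd_altWord_sub _ _ _ (by omega),
    ← two_mul, Nat.sub_self, altWord_zero, wordProd_nil]

theorem wordProd_altWord_mul_wordProd_altWord_coxeter {n : ℕ} (hn : n ≤ M a b) :
    π (altWord b a n) * π (altWord a b (M a b)) = π (altWord a b (M a b - n)) := by
  rw [wordProd_altWord_eq_wordProd_altWord_sub _ _ _ (by rw [M.symmetric]; omega), M.symmetric,
    show 2 * M a b - n = (M a b - n) + M a b by omega, wordProd_altWord_add_coxeter, mul_assoc,
    wordProd_altWord_coxeter_mul_self, mul_one]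

end Dihedral

section Tits

variable [DecidableEq W]

def titsPerm (i : B) : Equiv.Perm (W × ZMod 2) :=
  Function.Involutive.toPerm (fun p => (s i * p.1 * s i, p.2 + if p.1 = s i then 1 else 0))
    (by
      rintro ⟨w, ε⟩
      have hconj : s i * w * s i = s i ↔ w = s i := by
        constructor <;> intro h
        · simpa [mul_assoc] using congrArg (fun x => s i * x * s i) h
        · simp [h]
      change (s i * (s i * w * s i) * s i, ε + (if w = s i then 1 else 0) +
        if s i * w * s i = s i then 1 else 0) = (w, ε)
      simp only [hconj, add_assoc, CharTwo.add_self_eq_zero, add_zero]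
      simp [mul_assoc])

theorem titsPerm_apply (i : B) (w : W) (ε : ZMod 2) :
    cs.titsPerm i (w, ε) = (s i * w * s i, ε + if w = s i then 1 else 0) := rfl

theorem prod_map_titsPerm_apply (ω : List B) (t : W) (ε : ZMod 2) :
    (ω.map cs.titsPerm).prod (t, ε) = (π ω * t * (π ω)⁻¹, ε + (ris ω).count t) := by
  induction ω with
  | nil => simp
  | cons i ω ih =>
    have hconj : π ω * t * (π ω)⁻¹ = s i ↔ (π ω)⁻¹ * s i * π ω = t := by
      constructor <;> intro h <;> rw [← h] <;> group
    rw [List.map_cons, List.prod_cons, Equiv.Perm.mul_apply, ih, titsPerm_apply, rightInvSeq,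
      List.count_cons, wordProd_cons]
    simp only [hconj, beq_iff_eq, Prod.mk.injEq, mul_inv_rev, inv_simple, Nat.cast_add,
      Nat.cast_ite, Nat.cast_one, Nat.cast_zero, add_assoc]
    exact ⟨by group, trivial⟩

theorem isLiftable_titsPerm : M.IsLiftable cs.titsPerm := by
  intro i j
  -- the right inversion sequence of `(ij) ^ m` lists every `(s i * s j) ^ k * s i`, `k < m`, twice
  set ω := altWord i j (2 * M i j)
  have hω : π ω = 1 := by
    rw [wordProd, prod_map_altWord_two_mul, simple_mul_simple_pow]
  have hcount (t : W) : (((ris ω).count t : ℕ) : ZMod 2) = 0 := by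
    rw [rightInvSeq_eq_map_leftInvSeq, hω, leftInvSeq_altWord, two_mul, List.range_add]
    have hper (k : ℕ) : (s i * s j) ^ (M i j + k) * s i = (s i * s j) ^ k * s i := by
      rw [pow_add, simple_mul_simple_pow, one_mul]
    simp only [inv_one, one_mul, mul_one, List.map_append, List.map_map,
      Function.comp_def, hper, List.count_append, Nat.cast_add, CharTwo.add_self_eq_zero]
  ext ⟨t, ε⟩ : 1
  rw [← prod_map_altWord_two_mul, prod_map_titsPerm_apply, hω, hcount]
  simp

theorem natCast_count_rightInvSeq_eq {ω ω' : List B} (h : π ω = π ω') (t : W) :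
    (((ris ω).count t : ℕ) : ZMod 2) = (ris ω').count t := by
  have hlift (ω : List B) :
      cs.lift ⟨cs.titsPerm, cs.isLiftable_titsPerm⟩ (π ω) = (ω.map cs.titsPerm).prod := by
    rw [wordProd, map_list_prod, List.map_map]
    exact congrArg _ (List.map_congr_left fun i _ => cs.lift_apply_simple _ i)
  have := congrArg (fun w => (cs.lift ⟨cs.titsPerm, cs.isLiftable_titsPerm⟩ w (t, 0)).2) h
  simpa [hlift, prod_map_titsPerm_apply] using this

end Tits

theorem simple_mem_rightInvSeq_of_isRightDescent {ω : List B} {i : B}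
    (hi : cs.IsRightDescent (π ω) i) : s i ∈ ris ω := by
  classical
  -- `s i` occurs exactly once in the inversion sequence of the reduced word `σ ++ [i]` of `π ω`,
  -- and the parity of that count does not depend on the word
  obtain ⟨σ, hσ, hσω⟩ := cs.exists_isReduced (π ω * s i)
  have hprod : π (σ ++ [i]) = π ω := by
    rw [wordProd_append, ← hσω, wordProd_singleton, simple_mul_simple_cancel_right]
  have hred : cs.IsReduced (σ ++ [i]) := by
    have := cs.length_mul_simple (π ω) i
    unfold IsRightDescent at hi
    unfold IsReduced at hσ ⊢
    rw [hprod, List.length_append, List.length_singleton, ← hσ, ← hσω]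
    omega
  have hcount : (ris (σ ++ [i])).count (s i) = 1 := by
    refine List.count_eq_one_of_mem hred.nodup_rightInvSeq ?_
    rw [← List.concat_eq_append, rightInvSeq_concat]
    simp
  by_contra h
  have := cs.natCast_count_rightInvSeq_eq hprod (s i)
  rw [hcount, List.count_eq_zero.mpr h] at this
  exact absurd this (by decide)

theorem length_wordProd_altWord {a b : B} (hab : a ≠ b) {n : ℕ} (hn : n ≤ M a b) :
    ℓ (π (altWord a b n)) = n := by
  induction n with
  | zero => simp
  | succ n ih =>
    rw [altWord_succ, wordProd_append, wordProd_singleton]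
    rcases cs.length_mul_simple (π (altWord a b n)) (altLetter a b n) with h | hdesc
    · rw [h, ih (by omega)]
    exfalso
    have hmem := cs.simple_mem_rightInvSeq_of_isRightDescent (ω := altWord a b n)
      (i := altLetter a b n) (by rw [IsRightDescent]; omega)
    rw [rightInvSeq_eq_map_leftInvSeq, leftInvSeq_altWord, List.map_map, List.mem_map] at hmem
    -- conjugated back by `π (altWord a b n)`, the next letter would be both the `n`-th and the
    -- `k`-th left inversion `(s a * s b) ^ _ * s a`, for some `k < n`
    obtain ⟨k, hk, hks⟩ := hmem
    rw [List.mem_range] at hk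
    have hnk : (s a * s b) ^ (n - k) * (s a * s b) ^ k = (s a * s b) ^ k := by
      rw [← pow_add, Nat.sub_add_cancel hk.le]
      refine mul_right_cancel (b := s a) ?_
      rw [← wordProd_altWord_mul_simple_mul_inv, ← hks]
      simp [mul_assoc]
    exact cs.pow_simple_mul_simple_ne_one hab (Nat.sub_pos_of_lt hk) (by omega)
      (mul_eq_right.mp hnk)

theorem length_wordProd_altWord_eq_min {a b : B} (hab : a ≠ b) {n : ℕ} (hn : n ≤ 2 * M a b) :
    ℓ (π (altWord a b n)) = min n (2 * M a b - n) := by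
  rcases le_or_gt n (M a b) with h | h
  · rw [cs.length_wordProd_altWord hab h, min_eq_left (by omega)]
  · rw [wordProd_altWord_eq_wordProd_altWord_sub _ _ _ hn,
      cs.length_wordProd_altWord hab.symm (by rw [M.symmetric b a]; omega), min_eq_right (by omega)]

theorem wordProd_altWord_mul_simple_of_isRightDescent {a b : B} (hab : a ≠ b) {k : ℕ}
    (hk : k < M a b) {i : B} (hi : cs.IsRightDescent (π (altWord a b k)) i) :
    π (altWord a b k) * s i = π (altWord a b (k - 1)) := by
  obtain ⟨j, hj, hji⟩ :=
    List.mem_iff_getElem.mp (cs.simple_mem_rightInvSeq_of_isRightDescent hi)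
  rw [length_rightInvSeq, length_altWord] at hj
  -- the `j`-th right inversion is an alternating palindrome of length `2 (k - j) - 1`
  rw [getElem_rightInvSeq _ _ _ (by simpa using hj), getElem?_altWord _ _ hj, Option.map_some,
    Option.getD_some, drop_altWord _ _ (by omega : j + 1 ≤ k), altLetter_succ, altLetter_succ,
    inv_wordProd_altWord_mul_simple_mul] at hji
  rcases Nat.eq_zero_or_pos (k - (j + 1)) with hn | hn
  · obtain rfl : j = k - 1 := by omega
    rw [hn, altWord_succ', altWord_zero, wordProd_singleton, altLetter_zero] at hji
    obtain ⟨k, rfl⟩ : ∃ k', k = k' + 1 := ⟨k - 1, by omega⟩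
    rw [← hji, altWord_succ, wordProd_append, wordProd_singleton, Nat.add_sub_cancel,
      simple_mul_simple_cancel_right]
  · -- a longer palindrome has length `min (2n+1) (2m-2n-1) ≥ 3`, so it is not simple
    have hlen := congrArg cs.length hji
    rw [length_simple, cs.length_wordProd_altWord_eq_min (altLetter_ne (altLetter_ne hab j) _),
      M.apply_altLetter, M.apply_altLetter] at hlen
    · omega
    · rw [M.apply_altLetter, M.apply_altLetter]; omega

theorem length_le_of_weakLE {u w : W} (h : weakLE cs u w) : ℓ u ≤ ℓ w := by
  induction h with
  | refl => rfl
  | tail _ hstep ih =>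
    obtain ⟨i, -, hl⟩ := hstep
    omega

theorem eq_of_weakLE_of_length_le {u w : W} (h : weakLE cs u w) (hl : ℓ w ≤ ℓ u) : u = w := by
  induction h with
  | refl => rfl
  | tail h' hstep =>
    obtain ⟨i, -, hl'⟩ := hstep
    have := cs.length_le_of_weakLE h'
    omega

theorem weakCov_iff_weakStep {u w : W} : weakCov cs u w ↔ weakStep cs u w := by
  constructor
  · rintro ⟨hle, hne, hbetween⟩
    obtain rfl | ⟨v, hstep, hvw⟩ := Relation.ReflTransGen.cases_head hle
    · exact absurd rfl hne
    · obtain rfl | rfl := hbetween v (Relation.ReflTransGen.single hstep) hvw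
      · obtain ⟨i, -, hl⟩ := hstep
        omega
      · exact hstep
  · intro hstep
    obtain ⟨i, hw, hl⟩ := id hstep
    refine ⟨.single hstep, fun h => by rw [h] at hl; omega, fun v huv hvw => ?_⟩
    have h₁ := cs.length_le_of_weakLE huv
    have h₂ := cs.length_le_of_weakLE hvw
    rcases Nat.lt_or_ge (ℓ v) (ℓ w) with h | h
    · exact .inl (cs.eq_of_weakLE_of_length_le huv (by omega)).symm
    · exact .inr (cs.eq_of_weakLE_of_length_le hvw h)

theorem weakCov_wordProd_altWord_succ {a b : B} (hab : a ≠ b) {n : ℕ} (hn : n < M a b) :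
    weakCov cs (π (altWord a b n)) (π (altWord a b (n + 1))) := by
  refine (cs.weakCov_iff_weakStep).mpr ⟨altLetter a b n, ?_, ?_⟩
  · rw [altWord_succ, wordProd_append, wordProd_singleton]
  · rw [cs.length_wordProd_altWord hab hn, cs.length_wordProd_altWord hab hn.le]

theorem existsUnique_weakCov_wordProd_altWord {a b : B} (hab : a ≠ b) {k : ℕ} (hk₀ : 0 < k)
    (hk : k < M a b) : ∃! u, weakCov cs u (π (altWord a b k)) := by
  obtain ⟨n, rfl⟩ : ∃ n, k = n + 1 := ⟨k - 1, by omega⟩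
  refine ⟨π (altWord a b n), cs.weakCov_wordProd_altWord_succ hab (by omega), fun u hu => ?_⟩
  obtain ⟨i, hw, hl⟩ := (cs.weakCov_iff_weakStep).mp hu
  have hu : u = π (altWord a b (n + 1)) * s i := by rw [hw, simple_mul_simple_cancel_right]
  rw [hu, cs.wordProd_altWord_mul_simple_of_isRightDescent hab hk
    (by rw [IsRightDescent, ← hu]; omega), Nat.add_sub_cancel]

end CoxeterSystem

theorem stmt_10_general {B W : Type*} [Group W] {M : CoxeterMatrix B}
    (cs : CoxeterSystem M W) (r s : B) (hrs : r ≠ s)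
    (l : ℕ) (hl2 : 2 ≤ l) (hlm : l ≤ M.M r s - 1)
    (γ γstar : W) (hγ : γ = cs.wordProd (altWord s r l))
    (hstaru : ∀ u : W, weakCov cs u γ → u = γstar) :
    (∃! u : W, weakCov cs u (γstar * cs.wordProd (altWord r s (M.M r s)))) ∧
    γstar * cs.wordProd (altWord r s (M.M r s)) =
      cs.wordProd (altWord r s (M.M r s - l + 1)) ∧
    cs.length (γstar * cs.wordProd (altWord r s (M.M r s))) = M.M r s - l + 1 := by
  obtain ⟨n, rfl⟩ : ∃ n, l = n + 1 := ⟨l - 1, by omega⟩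
  have hγstar : γstar = cs.wordProd (altWord s r n) := by
    refine (hstaru _ ?_).symm
    rw [hγ]
    exact cs.weakCov_wordProd_altWord_succ hrs.symm (by rw [M.symmetric s r]; omega)
  have hγ' : γstar * cs.wordProd (altWord r s (M.M r s)) =
      cs.wordProd (altWord r s (M.M r s - (n + 1) + 1)) := by
    rw [hγstar, cs.wordProd_altWord_mul_wordProd_altWord_coxeter r s (by omega),
      show M.M r s - (n + 1) + 1 = M.M r s - n by omega]
  refine ⟨?_, hγ', ?_⟩
  · rw [hγ']
    exact cs.existsUnique_weakCov_wordProd_altWord hrs (by omega) (by omega)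
  · rw [hγ', cs.length_wordProd_altWord hrs (by omega)]

/-- Let `(W,S)` be a finite Coxeter system, `r,s ∈ S` with
`m = m(r,s) ≥ 3`, and let `γ ∈ W_{r,s}` have reduced word `srs⋯` of length `l`
with `2 ≤ l ≤ m−1`, with `γ∗` the unique element covered by `γ` in weak order.
Then `γ' := γ∗ · (w₀)_{r,s}` is a join-irreducible with reduced word `rsr⋯`
of length `l(γ') = m − l + 1`. -/
theorem stmt_10 {B W : Type*} [Group W] [Finite W] {M : CoxeterMatrix B}
    (cs : CoxeterSystem M W) (r s : B) (hrs : r ≠ s) (hm : 3 ≤ M.M r s)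
    (l : ℕ) (hl2 : 2 ≤ l) (hlm : l ≤ M.M r s - 1)
    (γ γstar : W) (hγ : γ = cs.wordProd (altWord s r l)) (hred : cs.length γ = l)
    (hstar : weakCov cs γstar γ) (hstaru : ∀ u : W, weakCov cs u γ → u = γstar) :
    (∃! u : W, weakCov cs u (γstar * cs.wordProd (altWord r s (M.M r s)))) ∧
    γstar * cs.wordProd (altWord r s (M.M r s)) =
      cs.wordProd (altWord r s (M.M r s - l + 1)) ∧
    cs.length (γstar * cs.wordProd (altWord r s (M.M r s))) = M.M r s - l + 1 :=
  stmt_10_general cs r s hrs l hl2 hlm γ γstar hγ hstaru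
end

section
/- Let A, A' be nonempty proper subsets of [n] with max(Aᶜ) > min(A) and max(A'ᶜ) > min(A'), with m := min(A), M := max(Aᶜ). In the transitive closure of the shard digraph of S_n (arrows A₁ → A₂ iff A₁∩[1,M₁) = A₂∩[1,M₁) and M₂ > M₁, or A₁∩(m₁,n] = A₂∩(m₁,n] and m₂ < m₁, interpreted as A₁ > A₂), the element A covers A' if and only if A' equals one of: A−{M+1} (when M < n), (A−{M+1})∪{M} (when M < n), A∪{m−1} (when m > 1), or (A∪{m−1})−{m} (when m > 1). -/
/-- `m_A = min A`. -/
noncomputable def mA (A : Finset ℕ) : ℕ := sInf (A : Set ℕ)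

/-- `M_A = max ([n] − A)`, where `[n] = {1,…,n}`. -/
noncomputable def MA (n : ℕ) (A : Finset ℕ) : ℕ := sSup ((Finset.Icc 1 n \ A : Finset ℕ) : Set ℕ)

/-- `A` corresponds to a join-irreducible of `S_n`: a nonempty proper subset of
`[n]` with `max(Aᶜ) > min(A)`. -/
def validA (n : ℕ) (A : Finset ℕ) : Prop :=
  A ⊆ Finset.Icc 1 n ∧ A.Nonempty ∧ A ≠ Finset.Icc 1 n ∧ mA A < MA n A

/-- The shard digraph `Sh(S_n)`: `A₁ → A₂` iff both are valid and either
`A₁ ∩ [1,M₁) = A₂ ∩ [1,M₁)` and `M₂ > M₁`, or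
`A₁ ∩ (m₁,n] = A₂ ∩ (m₁,n]` and `m₂ < m₁`. -/
def arrowA (n : ℕ) (A₁ A₂ : Finset ℕ) : Prop :=
  validA n A₁ ∧ validA n A₂ ∧
    ((A₁ ∩ Finset.Ico 1 (MA n A₁) = A₂ ∩ Finset.Ico 1 (MA n A₁) ∧ MA n A₁ < MA n A₂) ∨
     (A₁ ∩ Finset.Ioc (mA A₁) n = A₂ ∩ Finset.Ioc (mA A₁) n ∧ mA A₂ < mA A₁))


/-- `A` covers `A'` in the transitive closure of the shard digraph (where
`A₁ > A₂` when `A₁ → A₂`). -/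
def covA (n : ℕ) (A A' : Finset ℕ) : Prop :=
  Relation.TransGen (arrowA n) A A' ∧
    ¬ ∃ C : Finset ℕ, Relation.TransGen (arrowA n) A C ∧ Relation.TransGen (arrowA n) C A'

namespace Stmt15

lemma mA_eq {A : Finset ℕ} {x : ℕ} (hx : x ∈ A) (h : ∀ y ∈ A, x ≤ y) : mA A = x := by
  unfold mA
  exact le_antisymm (Nat.sInf_le (by exact_mod_cast hx))
    (h _ (by exact_mod_cast Nat.sInf_mem (⟨x, by exact_mod_cast hx⟩ : (A : Set ℕ).Nonempty)))

lemma MA_eq {n : ℕ} {A : Finset ℕ} {x : ℕ} (hx : x ∈ Finset.Icc 1 n \ A)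
    (h : ∀ y ∈ Finset.Icc 1 n \ A, y ≤ x) : MA n A = x := by
  unfold MA
  refine le_antisymm (csSup_le ⟨x, by exact_mod_cast hx⟩ (fun y hy => h _ (by exact_mod_cast hy)))
    (le_csSup ((Finset.Icc 1 n \ A).finite_toSet.bddAbove) (by exact_mod_cast hx))

/-- Bundle of basic facts about a valid `A`. -/
structure Facts (n : ℕ) (A : Finset ℕ) : Prop where
  hm1 : 1 ≤ mA A
  hmem : mA A ∈ A
  hmle : ∀ y ∈ A, mA A ≤ y
  hmM : mA A < MA n A
  hM1 : 1 ≤ MA n A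
  hMn : MA n A ≤ n
  hMnotmem : MA n A ∉ A
  hgtM : ∀ y, MA n A < y → y ≤ n → y ∈ A
  hsub : ∀ y ∈ A, 1 ≤ y ∧ y ≤ n

lemma facts {n : ℕ} {A : Finset ℕ} (hA : validA n A) : Facts n A := by
  obtain ⟨hsub, hne, hneq, hmM⟩ := hA
  have hsub' : ∀ y ∈ A, 1 ≤ y ∧ y ≤ n := fun y hy => by
    have := hsub hy; simp [Finset.mem_Icc] at this; exact this
  have hmem : mA A ∈ A := by
    have := Nat.sInf_mem (⟨hne.choose, by exact_mod_cast hne.choose_spec⟩ : (A : Set ℕ).Nonempty)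
    exact_mod_cast this
  have hmle : ∀ y ∈ A, mA A ≤ y := fun y hy => Nat.sInf_le (by exact_mod_cast hy)
  have hMmem : MA n A ∈ Finset.Icc 1 n \ A := by
    have hne2 : (Finset.Icc 1 n \ A).Nonempty := by
      obtain ⟨x, hx1, hx2⟩ := Finset.exists_of_ssubset (lt_of_le_of_ne hsub hneq)
      exact ⟨x, Finset.mem_sdiff.2 ⟨hx1, hx2⟩⟩
    have := Nat.sSup_mem (⟨hne2.choose, by exact_mod_cast hne2.choose_spec⟩ :
        ((Finset.Icc 1 n \ A : Finset ℕ) : Set ℕ).Nonempty)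
      ((Finset.Icc 1 n \ A).finite_toSet.bddAbove)
    exact_mod_cast this
  have hle : ∀ y ∈ Finset.Icc 1 n \ A, y ≤ MA n A := fun y hy =>
    le_csSup ((Finset.Icc 1 n \ A).finite_toSet.bddAbove) (by exact_mod_cast hy)
  rw [Finset.mem_sdiff, Finset.mem_Icc] at hMmem
  refine ⟨(hsub' _ hmem).1, hmem, hmle, hmM, hMmem.1.1, hMmem.1.2, hMmem.2, ?_, hsub'⟩
  intro y hy1 hy2
  by_contra hy3
  have := hle y (by simp [Finset.mem_Icc, hy3]; omega)
  omega

/-- The four elementary moves, matching the RHS of the theorem. -/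
def Elem (n : ℕ) (A A' : Finset ℕ) : Prop :=
  (MA n A < n ∧ A' = A.erase (MA n A + 1)) ∨
  (MA n A < n ∧ A' = insert (MA n A) (A.erase (MA n A + 1))) ∨
  (1 < mA A ∧ A' = insert (mA A - 1) A) ∨
  (1 < mA A ∧ A' = (insert (mA A - 1) A).erase (mA A))

section ElemFacts
variable {n : ℕ} {A : Finset ℕ} (F : Facts n A)

lemma mem_B1 {x : ℕ} : x ∈ A.erase (MA n A + 1) ↔ x ≠ MA n A + 1 ∧ x ∈ A := Finset.mem_erase
lemma mem_B2 {x : ℕ} : x ∈ insert (MA n A) (A.erase (MA n A + 1)) ↔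
    x = MA n A ∨ (x ≠ MA n A + 1 ∧ x ∈ A) := by simp [Finset.mem_insert, Finset.mem_erase]
lemma mem_B3 {x : ℕ} : x ∈ insert (mA A - 1) A ↔ x = mA A - 1 ∨ x ∈ A := Finset.mem_insert
lemma mem_B4 {x : ℕ} : x ∈ (insert (mA A - 1) A).erase (mA A) ↔
    x ≠ mA A ∧ (x = mA A - 1 ∨ x ∈ A) := by simp [Finset.mem_insert, Finset.mem_erase]

include F

lemma Msucc_mem (hMn : MA n A < n) : MA n A + 1 ∈ A := F.hgtM _ (by omega) (by omega)

lemma mA_B1 (hMn : MA n A < n) : mA (A.erase (MA n A + 1)) = mA A := by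
  refine mA_eq (mem_B1.2 ⟨by have := F.hmM; omega, F.hmem⟩) (fun y hy => F.hmle _ (mem_B1.1 hy).2)

lemma MA_B1 (hMn : MA n A < n) : MA n (A.erase (MA n A + 1)) = MA n A + 1 := by
  refine MA_eq ?_ ?_
  · rw [Finset.mem_sdiff, Finset.mem_Icc, mem_B1]
    refine ⟨⟨by omega, by omega⟩, by simp⟩
  · intro y hy
    rw [Finset.mem_sdiff, Finset.mem_Icc, mem_B1] at hy
    rcases hy with ⟨⟨h1, h2⟩, h3⟩
    by_contra hc
    exact h3 ⟨by omega, F.hgtM _ (by omega) h2⟩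

lemma valid_B1 (hMn : MA n A < n) : validA n (A.erase (MA n A + 1)) := by
  refine ⟨fun x hx => ?_, ⟨mA A, mem_B1.2 ⟨by have := F.hmM; omega, F.hmem⟩⟩, ?_, ?_⟩
  · rw [mem_B1] at hx; have := F.hsub _ hx.2; simp [Finset.mem_Icc]; omega
  · intro h
    have : MA n A ∈ A.erase (MA n A + 1) := by
      rw [h]; simp [Finset.mem_Icc]; exact ⟨F.hM1, F.hMn⟩
    exact F.hMnotmem (mem_B1.1 this).2
  · rw [mA_B1 F hMn, MA_B1 F hMn]; have := F.hmM; omega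

lemma mA_B2 (hMn : MA n A < n) : mA (insert (MA n A) (A.erase (MA n A + 1))) = mA A := by
  refine mA_eq (mem_B2.2 (Or.inr ⟨by have := F.hmM; omega, F.hmem⟩)) (fun y hy => ?_)
  rcases mem_B2.1 hy with h | h
  · subst h; exact le_of_lt F.hmM
  · exact F.hmle _ h.2

lemma MA_B2 (hMn : MA n A < n) : MA n (insert (MA n A) (A.erase (MA n A + 1))) = MA n A + 1 := by
  refine MA_eq ?_ ?_
  · rw [Finset.mem_sdiff, Finset.mem_Icc, mem_B2]
    refine ⟨⟨by omega, by omega⟩, by push_neg; exact ⟨by omega, fun h => (h rfl).elim⟩⟩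
  · intro y hy
    rw [Finset.mem_sdiff, Finset.mem_Icc, mem_B2] at hy
    rcases hy with ⟨⟨h1, h2⟩, h3⟩
    push_neg at h3
    by_contra hc
    exact h3.2 (by omega) (F.hgtM _ (by omega) h2)

lemma valid_B2 (hMn : MA n A < n) : validA n (insert (MA n A) (A.erase (MA n A + 1))) := by
  refine ⟨fun x hx => ?_, ⟨MA n A, mem_B2.2 (Or.inl rfl)⟩, ?_, ?_⟩
  · rw [mem_B2] at hx
    rcases hx with h | h
    · subst h; simp [Finset.mem_Icc]; exact ⟨F.hM1, F.hMn⟩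
    · have := F.hsub _ h.2; simp [Finset.mem_Icc]; omega
  · intro h
    have : MA n A + 1 ∈ insert (MA n A) (A.erase (MA n A + 1)) := by
      rw [h]; simp [Finset.mem_Icc]; omega
    rw [mem_B2] at this
    rcases this with h | ⟨h1, _⟩
    · omega
    · exact h1 rfl
  · rw [mA_B2 F hMn, MA_B2 F hMn]; have := F.hmM; omega


lemma mA_B3 (hm : 1 < mA A) : mA (insert (mA A - 1) A) = mA A - 1 := by
  refine mA_eq (mem_B3.2 (Or.inl rfl)) (fun y hy => ?_)
  rcases mem_B3.1 hy with h | h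
  · omega
  · have := F.hmle _ h; omega

lemma MA_B3 (hm : 1 < mA A) : MA n (insert (mA A - 1) A) = MA n A := by
  refine MA_eq ?_ ?_
  · rw [Finset.mem_sdiff, Finset.mem_Icc, mem_B3]
    have := F.hmM
    refine ⟨⟨F.hM1, F.hMn⟩, by push_neg; exact ⟨by omega, F.hMnotmem⟩⟩
  · intro y hy
    rw [Finset.mem_sdiff, Finset.mem_Icc, mem_B3] at hy
    push_neg at hy
    rcases hy with ⟨⟨h1, h2⟩, h3, h4⟩
    by_contra hc
    exact h4 (F.hgtM _ (by omega) h2)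

lemma valid_B3 (hm : 1 < mA A) : validA n (insert (mA A - 1) A) := by
  have hmn := F.hsub _ F.hmem
  refine ⟨fun x hx => ?_, ⟨mA A - 1, mem_B3.2 (Or.inl rfl)⟩, ?_, ?_⟩
  · rcases mem_B3.1 hx with h | h
    · subst h; simp [Finset.mem_Icc]; omega
    · have := F.hsub _ h; simp [Finset.mem_Icc]; omega
  · intro h
    have : MA n A ∈ insert (mA A - 1) A := by
      rw [h]; simp [Finset.mem_Icc]; exact ⟨F.hM1, F.hMn⟩
    rcases mem_B3.1 this with h' | h'
    · have := F.hmM; omega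
    · exact F.hMnotmem h'
  · rw [mA_B3 F hm, MA_B3 F hm]; have := F.hmM; omega

lemma mA_B4 (hm : 1 < mA A) : mA ((insert (mA A - 1) A).erase (mA A)) = mA A - 1 := by
  refine mA_eq (mem_B4.2 ⟨by omega, Or.inl rfl⟩) (fun y hy => ?_)
  rcases (mem_B4.1 hy).2 with h | h
  · omega
  · have := F.hmle _ h; omega

lemma MA_B4 (hm : 1 < mA A) : MA n ((insert (mA A - 1) A).erase (mA A)) = MA n A := by
  refine MA_eq ?_ ?_
  · rw [Finset.mem_sdiff, Finset.mem_Icc, mem_B4]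
    have := F.hmM
    refine ⟨⟨F.hM1, F.hMn⟩, by push_neg; intro _; exact ⟨by omega, F.hMnotmem⟩⟩
  · intro y hy
    rw [Finset.mem_sdiff, Finset.mem_Icc, mem_B4] at hy
    push_neg at hy
    rcases hy with ⟨⟨h1, h2⟩, h3⟩
    by_cases hym : y = mA A
    · have := F.hmM; omega
    · rcases h3 hym with ⟨h4, h5⟩
      by_contra hc
      exact h5 (F.hgtM _ (by omega) h2)

lemma valid_B4 (hm : 1 < mA A) : validA n ((insert (mA A - 1) A).erase (mA A)) := by
  have hmn := F.hsub _ F.hmem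
  refine ⟨fun x hx => ?_, ⟨mA A - 1, mem_B4.2 ⟨by omega, Or.inl rfl⟩⟩, ?_, ?_⟩
  · rcases (mem_B4.1 hx).2 with h | h
    · subst h; simp [Finset.mem_Icc]; omega
    · have := F.hsub _ h; simp [Finset.mem_Icc]; omega
  · intro h
    have : MA n A ∈ (insert (mA A - 1) A).erase (mA A) := by
      rw [h]; simp [Finset.mem_Icc]; exact ⟨F.hM1, F.hMn⟩
    rcases (mem_B4.1 this).2 with h' | h'
    · have := F.hmM; omega
    · exact F.hMnotmem h'
  · rw [mA_B4 F hm, MA_B4 F hm]; have := F.hmM; omega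


lemma agree_B1 (hMn : MA n A < n) :
    A ∩ Finset.Ico 1 (MA n A) = A.erase (MA n A + 1) ∩ Finset.Ico 1 (MA n A) := by
  ext x
  simp only [Finset.mem_inter, mem_B1, Finset.mem_Ico]
  constructor
  · rintro ⟨h1, h2, h3⟩; exact ⟨⟨by omega, h1⟩, h2, h3⟩
  · rintro ⟨⟨_, h1⟩, h2, h3⟩; exact ⟨h1, h2, h3⟩

lemma agree_B2 (hMn : MA n A < n) :
    A ∩ Finset.Ico 1 (MA n A) =
      insert (MA n A) (A.erase (MA n A + 1)) ∩ Finset.Ico 1 (MA n A) := by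
  ext x
  simp only [Finset.mem_inter, mem_B2, Finset.mem_Ico]
  constructor
  · rintro ⟨h1, h2, h3⟩; exact ⟨Or.inr ⟨by omega, h1⟩, h2, h3⟩
  · rintro ⟨h | ⟨_, h⟩, h2, h3⟩
    · omega
    · exact ⟨h, h2, h3⟩

lemma agree_B3 (hm : 1 < mA A) :
    A ∩ Finset.Ioc (mA A) n = insert (mA A - 1) A ∩ Finset.Ioc (mA A) n := by
  ext x
  simp only [Finset.mem_inter, mem_B3, Finset.mem_Ioc]
  constructor
  · rintro ⟨h1, h2, h3⟩; exact ⟨Or.inr h1, h2, h3⟩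
  · rintro ⟨h | h, h2, h3⟩
    · omega
    · exact ⟨h, h2, h3⟩

lemma agree_B4 (hm : 1 < mA A) :
    A ∩ Finset.Ioc (mA A) n = (insert (mA A - 1) A).erase (mA A) ∩ Finset.Ioc (mA A) n := by
  ext x
  simp only [Finset.mem_inter, mem_B4, Finset.mem_Ioc]
  constructor
  · rintro ⟨h1, h2, h3⟩; exact ⟨⟨by omega, Or.inr h1⟩, h2, h3⟩
  · rintro ⟨⟨h0, h | h⟩, h2, h3⟩
    · omega
    · exact ⟨h, h2, h3⟩

end ElemFacts

lemma elem_arrow {n : ℕ} {A A' : Finset ℕ} (hA : validA n A) (h : Elem n A A') :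
    arrowA n A A' := by
  have F := facts hA
  rcases h with ⟨hMn, rfl⟩ | ⟨hMn, rfl⟩ | ⟨hm, rfl⟩ | ⟨hm, rfl⟩
  · exact ⟨hA, valid_B1 F hMn, Or.inl ⟨agree_B1 F hMn, by rw [MA_B1 F hMn]; omega⟩⟩
  · exact ⟨hA, valid_B2 F hMn, Or.inl ⟨agree_B2 F hMn, by rw [MA_B2 F hMn]; omega⟩⟩
  · exact ⟨hA, valid_B3 F hm, Or.inr ⟨agree_B3 F hm, by rw [mA_B3 F hm]; omega⟩⟩
  · exact ⟨hA, valid_B4 F hm, Or.inr ⟨agree_B4 F hm, by rw [mA_B4 F hm]; omega⟩⟩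

/-- Rank function strictly decreasing along arrows, dropping by exactly 1 on
elementary moves. -/
noncomputable def rank (n : ℕ) (A : Finset ℕ) : ℕ := (n - MA n A) + (mA A - 1)

lemma elem_rank {n : ℕ} {A A' : Finset ℕ} (hA : validA n A) (h : Elem n A A') :
    rank n A = rank n A' + 1 := by
  have F := facts hA
  have h1 := F.hm1
  have h2 := F.hmM
  have h3 := F.hMn
  rcases h with ⟨hMn, rfl⟩ | ⟨hMn, rfl⟩ | ⟨hm, rfl⟩ | ⟨hm, rfl⟩
  · rw [rank, rank, MA_B1 F hMn, mA_B1 F hMn]; omega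
  · rw [rank, rank, MA_B2 F hMn, mA_B2 F hMn]; omega
  · rw [rank, rank, MA_B3 F hm, mA_B3 F hm]; omega
  · rw [rank, rank, MA_B4 F hm, mA_B4 F hm]; omega

/-- Arrows either keep `m` and increase `M`, or keep `M` and decrease `m`. -/
lemma arrow_mM {n : ℕ} {A₁ A₂ : Finset ℕ} (h : arrowA n A₁ A₂) :
    (mA A₂ = mA A₁ ∧ MA n A₁ < MA n A₂) ∨ (MA n A₂ = MA n A₁ ∧ mA A₂ < mA A₁) := by
  obtain ⟨hv1, h2, hcase⟩ := h
  have F1 := facts hv1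
  have F2 := facts h2
  rcases hcase with ⟨hag, hM⟩ | ⟨hag, hm⟩
  · left
    refine ⟨le_antisymm ?_ ?_, hM⟩
    · have : mA A₁ ∈ A₂ ∩ Finset.Ico 1 (MA n A₁) := by
        rw [← hag]
        simp only [Finset.mem_inter, Finset.mem_Ico]
        exact ⟨F1.hmem, F1.hm1, F1.hmM⟩
      exact F2.hmle _ (Finset.mem_inter.1 this).1
    · by_contra hc
      push_neg at hc
      have hmem2 : mA A₂ ∈ A₂ ∩ Finset.Ico 1 (MA n A₁) := by
        simp only [Finset.mem_inter, Finset.mem_Ico]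
        exact ⟨F2.hmem, F2.hm1, by have := F1.hmM; omega⟩
      rw [← hag] at hmem2
      have := F1.hmle _ (Finset.mem_inter.1 hmem2).1
      omega
  · right
    refine ⟨le_antisymm ?_ ?_, hm⟩
    · by_contra hc
      push_neg at hc
      have hmem2 : MA n A₂ ∈ A₁ ∩ Finset.Ioc (mA A₁) n := by
        simp only [Finset.mem_inter, Finset.mem_Ioc]
        have := F1.hmM
        exact ⟨F1.hgtM _ (by omega) F2.hMn, by omega, F2.hMn⟩
      rw [hag] at hmem2
      exact F2.hMnotmem (Finset.mem_inter.1 hmem2).1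
    · have hne : MA n A₁ ∉ A₂ := by
        intro hmem
        have : MA n A₁ ∈ A₂ ∩ Finset.Ioc (mA A₁) n := by
          simp only [Finset.mem_inter, Finset.mem_Ioc]
          exact ⟨hmem, F1.hmM, F1.hMn⟩
        rw [← hag] at this
        exact F1.hMnotmem (Finset.mem_inter.1 this).1
      by_contra hc
      push_neg at hc
      exact hne (F2.hgtM _ hc F1.hMn)

lemma arrow_rank {n : ℕ} {A₁ A₂ : Finset ℕ} (h : arrowA n A₁ A₂) :
    rank n A₂ < rank n A₁ := by
  have F1 := facts h.1
  have F2 := facts h.2.1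
  have h1 := F1.hm1; have h2 := F1.hmM; have h3 := F1.hMn
  have h4 := F2.hm1; have h5 := F2.hmM; have h6 := F2.hMn
  rcases arrow_mM h with ⟨hm, hM⟩ | ⟨hM, hm⟩ <;> rw [rank, rank] <;> omega

lemma transGen_rank {n : ℕ} {A₁ A₂ : Finset ℕ} (h : Relation.TransGen (arrowA n) A₁ A₂) :
    rank n A₂ < rank n A₁ := by
  induction h with
  | single h => exact arrow_rank h
  | tail _ h ih => exact lt_trans (arrow_rank h) ih

lemma arrow_factor {n : ℕ} {A A₂ : Finset ℕ} (h : arrowA n A A₂) :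
    ∃ B, Elem n A B ∧ (A₂ = B ∨ arrowA n B A₂) := by
  obtain ⟨hA, hA₂, hcase⟩ := h
  have F := facts hA
  have F2 := facts hA₂
  rcases hcase with ⟨hag, hM⟩ | ⟨hag, hm⟩
  · -- first kind: M increases
    have hMn : MA n A < n := lt_of_lt_of_le hM F2.hMn
    have key : ∀ x, x < MA n A → (x ∈ A ↔ x ∈ A₂) := by
      intro x hx
      constructor
      · intro hxA
        have hx2 : x ∈ A ∩ Finset.Ico 1 (MA n A) := by
          simp only [Finset.mem_inter, Finset.mem_Ico]
          exact ⟨hxA, (F.hsub _ hxA).1, hx⟩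
        rw [hag] at hx2
        exact (Finset.mem_inter.1 hx2).1
      · intro hxA
        have hx2 : x ∈ A₂ ∩ Finset.Ico 1 (MA n A) := by
          simp only [Finset.mem_inter, Finset.mem_Ico]
          exact ⟨hxA, (F2.hsub _ hxA).1, hx⟩
        rw [← hag] at hx2
        exact (Finset.mem_inter.1 hx2).1
    by_cases hMA₂ : MA n A ∈ A₂
    · refine ⟨_, Or.inr (Or.inl ⟨hMn, rfl⟩), ?_⟩
      by_cases hM2 : MA n A₂ = MA n A + 1
      · left
        ext x
        rw [mem_B2]
        rcases lt_trichotomy x (MA n A) with hx | hx | hx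
        · constructor
          · intro hh; exact Or.inr ⟨by omega, (key x hx).2 hh⟩
          · rintro (hh | ⟨_, hh⟩)
            · omega
            · exact (key x hx).1 hh
        · constructor
          · intro _; exact Or.inl hx
          · intro _; rw [hx]; exact hMA₂
        · by_cases hx1 : x = MA n A + 1
          · constructor
            · intro hh; exfalso; rw [hx1, ← hM2] at hh; exact F2.hMnotmem hh
            · rintro (hh | ⟨h1, _⟩)
              · omega
              · exact absurd hx1 h1
          · constructor
            · intro hh
              exact Or.inr ⟨hx1, F.hgtM _ (by omega) (F2.hsub _ hh).2⟩
            · rintro (hh | ⟨_, hh⟩)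
              · omega
              · exact F2.hgtM _ (by rw [hM2]; omega) (F.hsub _ hh).2
      · right
        refine ⟨valid_B2 F hMn, hA₂, Or.inl ⟨?_, by rw [MA_B2 F hMn]; omega⟩⟩
        rw [MA_B2 F hMn]
        ext x
        simp only [Finset.mem_inter, mem_B2, Finset.mem_Ico]
        constructor
        · rintro ⟨h1 | ⟨h1, h2⟩, h3, h4⟩
          · exact ⟨by rw [h1]; exact hMA₂, h3, h4⟩
          · have hne : x ≠ MA n A := fun e => F.hMnotmem (e ▸ h2)
            exact ⟨(key x (by omega)).1 h2, h3, h4⟩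
        · rintro ⟨h1, h3, h4⟩
          by_cases hxM : x = MA n A
          · exact ⟨Or.inl hxM, h3, h4⟩
          · have hlt : x < MA n A := by omega
            exact ⟨Or.inr ⟨by omega, (key x hlt).2 h1⟩, h3, h4⟩
    · refine ⟨_, Or.inl ⟨hMn, rfl⟩, ?_⟩
      by_cases hM2 : MA n A₂ = MA n A + 1
      · left
        ext x
        rw [mem_B1]
        rcases lt_trichotomy x (MA n A) with hx | hx | hx
        · constructor
          · intro hh; exact ⟨by omega, (key x hx).2 hh⟩
          · rintro ⟨_, hh⟩; exact (key x hx).1 hh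
        · constructor
          · intro hh; exact absurd (hx ▸ hh) hMA₂
          · rintro ⟨_, hh⟩; exact absurd (hx ▸ hh) F.hMnotmem
        · by_cases hx1 : x = MA n A + 1
          · constructor
            · intro hh; exfalso; rw [hx1, ← hM2] at hh; exact F2.hMnotmem hh
            · rintro ⟨h1, _⟩; exact absurd hx1 h1
          · constructor
            · intro hh
              exact ⟨hx1, F.hgtM _ (by omega) (F2.hsub _ hh).2⟩
            · rintro ⟨_, hh⟩
              exact F2.hgtM _ (by rw [hM2]; omega) (F.hsub _ hh).2
      · right
        refine ⟨valid_B1 F hMn, hA₂, Or.inl ⟨?_, by rw [MA_B1 F hMn]; omega⟩⟩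
        rw [MA_B1 F hMn]
        ext x
        simp only [Finset.mem_inter, mem_B1, Finset.mem_Ico]
        constructor
        · rintro ⟨⟨h1, h2⟩, h3, h4⟩
          have hne : x ≠ MA n A := fun e => F.hMnotmem (e ▸ h2)
          exact ⟨(key x (by omega)).1 h2, h3, h4⟩
        · rintro ⟨h1, h3, h4⟩
          have hne : x ≠ MA n A := fun e => hMA₂ (e ▸ h1)
          have hlt : x < MA n A := by omega
          exact ⟨⟨by omega, (key x hlt).2 h1⟩, h3, h4⟩
  · -- second kind: m decreases
    have hm1 : 1 < mA A := by have := F2.hm1; omega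
    have key : ∀ x, mA A < x → (x ∈ A ↔ x ∈ A₂) := by
      intro x hx
      constructor
      · intro hxA
        have hx2 : x ∈ A ∩ Finset.Ioc (mA A) n := by
          simp only [Finset.mem_inter, Finset.mem_Ioc]
          exact ⟨hxA, hx, (F.hsub _ hxA).2⟩
        rw [hag] at hx2
        exact (Finset.mem_inter.1 hx2).1
      · intro hxA
        have hx2 : x ∈ A₂ ∩ Finset.Ioc (mA A) n := by
          simp only [Finset.mem_inter, Finset.mem_Ioc]
          exact ⟨hxA, hx, (F2.hsub _ hxA).2⟩
        rw [← hag] at hx2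
        exact (Finset.mem_inter.1 hx2).1
    have hnotmem2 : ∀ x, x < mA A₂ → x ∉ A₂ := by
      intro x hx hmem
      have := F2.hmle _ hmem
      omega
    have hnotmem1 : ∀ x, x < mA A → x ∉ A := by
      intro x hx hmem
      have := F.hmle _ hmem
      omega
    by_cases hmA₂ : mA A ∈ A₂
    · refine ⟨_, Or.inr (Or.inr (Or.inl ⟨hm1, rfl⟩)), ?_⟩
      by_cases hm2 : mA A₂ = mA A - 1
      · left
        ext x
        rw [mem_B3]
        rcases lt_trichotomy x (mA A) with hx | hx | hx
        · by_cases hx1 : x = mA A - 1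
          · constructor
            · intro _; exact Or.inl hx1
            · intro _; rw [hx1, ← hm2]; exact F2.hmem
          · constructor
            · intro hh; exact absurd hh (hnotmem2 _ (by omega))
            · rintro (hh | hh)
              · exact absurd hh hx1
              · exact absurd hh (hnotmem1 _ hx)
        · constructor
          · intro _; exact Or.inr (hx ▸ F.hmem)
          · intro _; exact hx ▸ hmA₂
        · constructor
          · intro hh; exact Or.inr ((key x hx).2 hh)
          · rintro (hh | hh)
            · omega
            · exact (key x hx).1 hh
      · right
        refine ⟨valid_B3 F hm1, hA₂, Or.inr ⟨?_, by rw [mA_B3 F hm1]; omega⟩⟩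
        rw [mA_B3 F hm1]
        ext x
        simp only [Finset.mem_inter, mem_B3, Finset.mem_Ioc]
        constructor
        · rintro ⟨h1 | h1, h3, h4⟩
          · omega
          · by_cases hxm : x = mA A
            · exact ⟨hxm ▸ hmA₂, h3, h4⟩
            · exact ⟨(key x (by have := F.hmle _ h1; omega)).1 h1, h3, h4⟩
        · rintro ⟨h1, h3, h4⟩
          by_cases hxm : x = mA A
          · exact ⟨Or.inr (hxm ▸ F.hmem), h3, h4⟩
          · exact ⟨Or.inr ((key x (by omega)).2 h1), h3, h4⟩
    · refine ⟨_, Or.inr (Or.inr (Or.inr ⟨hm1, rfl⟩)), ?_⟩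
      by_cases hm2 : mA A₂ = mA A - 1
      · left
        ext x
        rw [mem_B4]
        rcases lt_trichotomy x (mA A) with hx | hx | hx
        · by_cases hx1 : x = mA A - 1
          · constructor
            · intro _; exact ⟨by omega, Or.inl hx1⟩
            · intro _; rw [hx1, ← hm2]; exact F2.hmem
          · constructor
            · intro hh; exact absurd hh (hnotmem2 _ (by omega))
            · rintro ⟨_, hh | hh⟩
              · exact absurd hh hx1
              · exact absurd hh (hnotmem1 _ hx)
        · constructor
          · intro hh; exact absurd (hx ▸ hh) hmA₂
          · rintro ⟨hh, _⟩; exact absurd hx hh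
        · constructor
          · intro hh; exact ⟨by omega, Or.inr ((key x hx).2 hh)⟩
          · rintro ⟨_, hh | hh⟩
            · omega
            · exact (key x hx).1 hh
      · right
        refine ⟨valid_B4 F hm1, hA₂, Or.inr ⟨?_, by rw [mA_B4 F hm1]; omega⟩⟩
        rw [mA_B4 F hm1]
        ext x
        simp only [Finset.mem_inter, mem_B4, Finset.mem_Ioc]
        constructor
        · rintro ⟨⟨h0, h1 | h1⟩, h3, h4⟩
          · omega
          · have hne : x ≠ mA A := h0
            exact ⟨(key x (by have := F.hmle _ h1; omega)).1 h1, h3, h4⟩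
        · rintro ⟨h1, h3, h4⟩
          have hne : x ≠ mA A := fun e => hmA₂ (e ▸ h1)
          exact ⟨⟨hne, Or.inr ((key x (by omega)).2 h1)⟩, h3, h4⟩

lemma cov_iff_elem {n : ℕ} {A A' : Finset ℕ} (hA : validA n A) :
    (Relation.TransGen (arrowA n) A A' ∧
      ¬ ∃ C : Finset ℕ, Relation.TransGen (arrowA n) A C ∧ Relation.TransGen (arrowA n) C A')
      ↔ Elem n A A' := by
  constructor
  · rintro ⟨htrans, hnoC⟩
    have harrow : arrowA n A A' := by
      cases htrans with
      | single h => exact h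
      | tail h1 h2 =>
        exact absurd ⟨_, h1, Relation.TransGen.single h2⟩ hnoC
    obtain ⟨B, hB, hcase⟩ := arrow_factor harrow
    rcases hcase with rfl | hBA'
    · exact hB
    · exact absurd ⟨B, Relation.TransGen.single (elem_arrow hA hB),
        Relation.TransGen.single hBA'⟩ hnoC
  · intro h
    refine ⟨Relation.TransGen.single (elem_arrow hA h), ?_⟩
    rintro ⟨C, h1, h2⟩
    have r1 := transGen_rank h1
    have r2 := transGen_rank h2
    have r3 := elem_rank hA h
    omega

end Stmt15

/-- In the transitive closure of the shard digraph of `S_n`, the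
element `A` covers `A'` iff `A'` is one of `A − {M+1}` (when `M < n`),
`(A − {M+1}) ∪ {M}` (when `M < n`), `A ∪ {m−1}` (when `m > 1`), or
`(A ∪ {m−1}) − {m}` (when `m > 1`), with `m = min A`, `M = max Aᶜ`. -/

theorem stmt_15 (n : ℕ) (A A' : Finset ℕ) (hA : validA n A) (hA' : validA n A') :
    covA n A A' ↔
      ((MA n A < n ∧ A' = A.erase (MA n A + 1)) ∨
       (MA n A < n ∧ A' = insert (MA n A) (A.erase (MA n A + 1))) ∨
       (1 < mA A ∧ A' = insert (mA A - 1) A) ∨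
       (1 < mA A ∧ A' = (insert (mA A - 1) A).erase (mA A))) :=
  Stmt15.cov_iff_elem hA
end

section
/- In the transitive closure of the shard digraph of S_n (the poset Irr(Con(S_n)) on nonempty proper subsets A ⊆ [n] with max(Aᶜ) > min(A)), the function deg(A) := max(Aᶜ) − min(A) is a dual rank function: whenever A covers A' one has deg(A) = deg(A') − 1. -/
/- helper lemmas -/

lemma mA_mem {A : Finset ℕ} (h : A.Nonempty) : mA A ∈ A := by
  have hne : (A : Set ℕ).Nonempty := by exact_mod_cast h
  have := Nat.sInf_mem hne
  simpa [mA] using this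

lemma mA_le {A : Finset ℕ} {a : ℕ} (h : a ∈ A) : mA A ≤ a :=
  Nat.sInf_le (by exact_mod_cast h)

lemma compl_nonempty {n : ℕ} {A : Finset ℕ} (h : validA n A) :
    (Finset.Icc 1 n \ A).Nonempty := by
  rw [Finset.sdiff_nonempty]
  intro hsub
  exact h.2.2.1 (subset_antisymm h.1 hsub)

lemma MA_mem {n : ℕ} {A : Finset ℕ} (h : validA n A) : MA n A ∈ Finset.Icc 1 n \ A := by
  have hne : ((Finset.Icc 1 n \ A : Finset ℕ) : Set ℕ).Nonempty := by
    exact_mod_cast compl_nonempty h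
  have := Nat.sSup_mem hne (Finset.bddAbove _)
  simpa [MA] using this

lemma le_MA {n : ℕ} {A : Finset ℕ} {x : ℕ} (hx : x ∈ Finset.Icc 1 n \ A) : x ≤ MA n A :=
  le_csSup (Finset.bddAbove _) (by exact_mod_cast hx)

/-- In case 1, the minima agree. -/
lemma case1_m_eq {n : ℕ} {A₁ A₂ : Finset ℕ} (h₁ : validA n A₁) (h₂ : validA n A₂)
    (he : A₁ ∩ Finset.Ico 1 (MA n A₁) = A₂ ∩ Finset.Ico 1 (MA n A₁)) :
    mA A₂ = mA A₁ := by
  have hm1 : mA A₁ ∈ A₁ := mA_mem h₁.2.1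
  have h1le : 1 ≤ mA A₁ := (Finset.mem_Icc.mp (h₁.1 hm1)).1
  have hmM : mA A₁ < MA n A₁ := h₁.2.2.2
  have hmem : mA A₁ ∈ A₂ := by
    have hx : mA A₁ ∈ A₁ ∩ Finset.Ico 1 (MA n A₁) :=
      Finset.mem_inter.mpr ⟨hm1, Finset.mem_Ico.mpr ⟨h1le, hmM⟩⟩
    rw [he] at hx
    exact (Finset.mem_inter.mp hx).1
  have hle : mA A₂ ≤ mA A₁ := mA_le hmem
  have hm2 : mA A₂ ∈ A₂ := mA_mem h₂.2.1
  have h2ge : 1 ≤ mA A₂ := (Finset.mem_Icc.mp (h₂.1 hm2)).1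
  have hmem2 : mA A₂ ∈ A₁ := by
    have hx : mA A₂ ∈ A₂ ∩ Finset.Ico 1 (MA n A₁) :=
      Finset.mem_inter.mpr ⟨hm2, Finset.mem_Ico.mpr ⟨h2ge, lt_of_le_of_lt hle hmM⟩⟩
    rw [← he] at hx
    exact (Finset.mem_inter.mp hx).1
  exact le_antisymm hle (mA_le hmem2)

/-- In case 2, the maxima agree. -/
lemma case2_M_eq {n : ℕ} {A₁ A₂ : Finset ℕ} (h₁ : validA n A₁) (h₂ : validA n A₂)
    (he : A₁ ∩ Finset.Ioc (mA A₁) n = A₂ ∩ Finset.Ioc (mA A₁) n) :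
    MA n A₂ = MA n A₁ := by
  have hM1 := MA_mem h₁
  rw [Finset.mem_sdiff, Finset.mem_Icc] at hM1
  have hmM : mA A₁ < MA n A₁ := h₁.2.2.2
  have hM1nA2 : MA n A₁ ∉ A₂ := by
    intro hmem
    have hx : MA n A₁ ∈ A₂ ∩ Finset.Ioc (mA A₁) n :=
      Finset.mem_inter.mpr ⟨hmem, Finset.mem_Ioc.mpr ⟨hmM, hM1.1.2⟩⟩
    rw [← he] at hx
    exact hM1.2 (Finset.mem_inter.mp hx).1
  have hge : MA n A₁ ≤ MA n A₂ :=
    le_MA (Finset.mem_sdiff.mpr ⟨Finset.mem_Icc.mpr hM1.1, hM1nA2⟩)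
  have hM2 := MA_mem h₂
  rw [Finset.mem_sdiff, Finset.mem_Icc] at hM2
  have hle : MA n A₂ ≤ MA n A₁ := by
    by_contra hlt
    push_neg at hlt
    have hx : MA n A₂ ∉ A₁ := by
      intro hmem
      have hx : MA n A₂ ∈ A₁ ∩ Finset.Ioc (mA A₁) n :=
        Finset.mem_inter.mpr ⟨hmem, Finset.mem_Ioc.mpr ⟨lt_trans hmM hlt, hM2.1.2⟩⟩
      rw [he] at hx
      exact hM2.2 (Finset.mem_inter.mp hx).1
    have := le_MA (n := n) (A := A₁) (Finset.mem_sdiff.mpr ⟨Finset.mem_Icc.mpr hM2.1, hx⟩)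
    omega
  omega

lemma arrow_deg {n : ℕ} {A₁ A₂ : Finset ℕ} (h : arrowA n A₁ A₂) :
    MA n A₁ - mA A₁ < MA n A₂ - mA A₂ := by
  obtain ⟨h₁, h₂, hc⟩ := h
  have hm1 : mA A₁ < MA n A₁ := h₁.2.2.2
  have hm2 : mA A₂ < MA n A₂ := h₂.2.2.2
  rcases hc with ⟨he, hM⟩ | ⟨he, hm⟩
  · have := case1_m_eq h₁ h₂ he
    omega
  · have := case2_M_eq h₁ h₂ he
    omega

lemma trans_deg {n : ℕ} {A₁ A₂ : Finset ℕ} (h : Relation.TransGen (arrowA n) A₁ A₂) :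
    MA n A₁ - mA A₁ < MA n A₂ - mA A₂ := by
  induction h with
  | single h => exact arrow_deg h
  | tail _ h2 ih => exact lt_trans ih (arrow_deg h2)

/-- Refinement in case 1. -/
lemma refine1 {n : ℕ} {A A' : Finset ℕ} (hA : validA n A) (hA' : validA n A')
    (he : A ∩ Finset.Ico 1 (MA n A) = A' ∩ Finset.Ico 1 (MA n A))
    (hgap : MA n A + 2 ≤ MA n A') :
    ∃ C, arrowA n A C ∧ arrowA n C A' := by
  set M := MA n A with hMdef
  set M' := MA n A' with hM'def
  set MC := M' - 1 with hMCdef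
  set C : Finset ℕ := A' ∩ Finset.Ico 1 MC ∪ Finset.Ioc MC n with hCdef
  have hm : mA A ∈ A := mA_mem hA.2.1
  have hmIcc := Finset.mem_Icc.mp (hA.1 hm)
  have hmM : mA A < M := hA.2.2.2
  have hM'mem := MA_mem hA'
  rw [Finset.mem_sdiff, Finset.mem_Icc] at hM'mem
  have hMmem := MA_mem hA
  rw [Finset.mem_sdiff, Finset.mem_Icc] at hMmem
  -- pointwise version of he
  have hept : ∀ x, x ∈ A ∧ (1 ≤ x ∧ x < M) ↔ x ∈ A' ∧ (1 ≤ x ∧ x < M) := by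
    intro x
    have := Finset.ext_iff.mp he x
    simpa [Finset.mem_inter, Finset.mem_Ico] using this
  have hmA' : mA A ∈ A' := ((hept (mA A)).mp ⟨hm, hmIcc.1, hmM⟩).1
  have hmC : mA A ∈ C := by
    rw [hCdef]
    exact Finset.mem_union_left _
      (Finset.mem_inter.mpr ⟨hmA', Finset.mem_Ico.mpr ⟨hmIcc.1, by omega⟩⟩)
  have hCsub : C ⊆ Finset.Icc 1 n := by
    intro x hx
    rw [hCdef, Finset.mem_union] at hx
    rcases hx with hx | hx
    · exact hA'.1 (Finset.mem_inter.mp hx).1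
    · rw [Finset.mem_Ioc] at hx
      exact Finset.mem_Icc.mpr ⟨by omega, hx.2⟩
  have hMCnotC : MC ∉ C := by
    rw [hCdef]
    simp [Finset.mem_inter, Finset.mem_Ico, Finset.mem_Ioc]
  have hMCIcc : MC ∈ Finset.Icc 1 n := Finset.mem_Icc.mpr ⟨by omega, by omega⟩
  have hCne : C ≠ Finset.Icc 1 n := by
    intro hEq
    rw [hEq] at hMCnotC
    exact hMCnotC hMCIcc
  have hMAC : MA n C = MC := by
    apply le_antisymm
    · apply csSup_le
      · exact ⟨MC, by exact_mod_cast Finset.mem_sdiff.mpr ⟨hMCIcc, hMCnotC⟩⟩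
      · intro x hx
        rw [Finset.mem_coe, Finset.mem_sdiff, Finset.mem_Icc] at hx
        by_contra hlt
        push_neg at hlt
        exact hx.2 (by rw [hCdef]; exact Finset.mem_union_right _ (Finset.mem_Ioc.mpr ⟨hlt, hx.1.2⟩))
    · exact le_MA (Finset.mem_sdiff.mpr ⟨hMCIcc, hMCnotC⟩)
  have hvC : validA n C := by
    refine ⟨hCsub, ⟨mA A, hmC⟩, hCne, ?_⟩
    have : mA C ≤ mA A := mA_le hmC
    omega
  refine ⟨C, ⟨hA, hvC, Or.inl ⟨?_, by omega⟩⟩, ⟨hvC, hA', Or.inl ⟨?_, by rw [hMAC]; omega⟩⟩⟩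
  · -- A ∩ Ico 1 M = C ∩ Ico 1 M
    ext x
    simp only [hCdef, Finset.mem_inter, Finset.mem_union, Finset.mem_Ico, Finset.mem_Ioc]
    constructor
    · rintro ⟨hxA, hx1, hxM⟩
      have hxA' : x ∈ A' := ((hept x).mp ⟨hxA, hx1, hxM⟩).1
      exact ⟨Or.inl ⟨hxA', hx1, by omega⟩, hx1, hxM⟩
    · rintro ⟨hx, hx1, hxM⟩
      rcases hx with ⟨hxA', _, _⟩ | ⟨h1, h2⟩
      · exact ⟨((hept x).mpr ⟨hxA', hx1, hxM⟩).1, hx1, hxM⟩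
      · omega
  · -- C ∩ Ico 1 (MA n C) = A' ∩ Ico 1 (MA n C)
    rw [hMAC]
    ext x
    simp only [hCdef, Finset.mem_inter, Finset.mem_union, Finset.mem_Ico, Finset.mem_Ioc]
    constructor
    · rintro ⟨hx, hx1, hxMC⟩
      rcases hx with ⟨hxA', _, _⟩ | ⟨h1, h2⟩
      · exact ⟨hxA', hx1, hxMC⟩
      · omega
    · rintro ⟨hxA', hx1, hxMC⟩
      exact ⟨Or.inl ⟨hxA', hx1, hxMC⟩, hx1, hxMC⟩

/-- Refinement in case 2. -/
lemma refine2 {n : ℕ} {A A' : Finset ℕ} (hA : validA n A) (hA' : validA n A')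
    (he : A ∩ Finset.Ioc (mA A) n = A' ∩ Finset.Ioc (mA A) n)
    (hgap : mA A' + 2 ≤ mA A) :
    ∃ C, arrowA n A C ∧ arrowA n C A' := by
  set m := mA A with hmdef
  set m' := mA A' with hm'def
  set mC := m' + 1 with hmCdef
  set C : Finset ℕ := insert mC (A' ∩ Finset.Ioc mC n) with hCdef
  have hm'mem : m' ∈ A' := mA_mem hA'.2.1
  have hm'Icc := Finset.mem_Icc.mp (hA'.1 hm'mem)
  have hmmem : m ∈ A := mA_mem hA.2.1
  have hmIcc := Finset.mem_Icc.mp (hA.1 hmmem)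
  have hM := case2_M_eq hA hA' he  -- MA n A' = MA n A
  have hMmem := MA_mem hA
  rw [Finset.mem_sdiff, Finset.mem_Icc] at hMmem
  have hmM : m < MA n A := hA.2.2.2
  have hept : ∀ x, x ∈ A ∧ (m < x ∧ x ≤ n) ↔ x ∈ A' ∧ (m < x ∧ x ≤ n) := by
    intro x
    have := Finset.ext_iff.mp he x
    simpa [Finset.mem_inter, Finset.mem_Ioc] using this
  have hCsub : C ⊆ Finset.Icc 1 n := by
    intro x hx
    rw [hCdef, Finset.mem_insert] at hx
    rcases hx with rfl | hx
    · exact Finset.mem_Icc.mpr ⟨by omega, by omega⟩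
    · exact hA'.1 (Finset.mem_inter.mp hx).1
  have hMnotC : MA n A ∉ C := by
    rw [hCdef, Finset.mem_insert]
    push_neg
    constructor
    · omega
    · intro hmem
      have hM'mem := MA_mem hA'
      rw [Finset.mem_sdiff] at hM'mem
      apply hM'mem.2
      have hx := (Finset.mem_inter.mp hmem).1
      rwa [hM]
  have hCne : C ≠ Finset.Icc 1 n := by
    intro hEq
    rw [hEq] at hMnotC
    exact hMnotC (Finset.mem_Icc.mpr ⟨by omega, hMmem.1.2⟩)
  have hmAC : mA C = mC := by
    apply le_antisymm
    · exact mA_le (by rw [hCdef]; exact Finset.mem_insert_self _ _)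
    · apply le_csInf
      · exact ⟨mC, by rw [hCdef]; exact_mod_cast Finset.mem_insert_self _ _⟩
      · intro x hx
        rw [Finset.mem_coe, hCdef, Finset.mem_insert] at hx
        rcases hx with rfl | hx
        · exact le_refl _
        · have := (Finset.mem_Ioc.mp (Finset.mem_inter.mp hx).2).1
          omega
  have hvC : validA n C := by
    refine ⟨hCsub, ⟨mC, by rw [hCdef]; exact Finset.mem_insert_self _ _⟩, hCne, ?_⟩
    have : MA n A ≤ MA n C :=
      le_MA (Finset.mem_sdiff.mpr ⟨Finset.mem_Icc.mpr ⟨by omega, hMmem.1.2⟩, hMnotC⟩)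
    omega
  refine ⟨C, ⟨hA, hvC, Or.inr ⟨?_, by rw [hmAC]; omega⟩⟩, ⟨hvC, hA', Or.inr ⟨?_, by rw [hmAC]; omega⟩⟩⟩
  · -- A ∩ Ioc m n = C ∩ Ioc m n
    ext x
    simp only [hCdef, Finset.mem_inter, Finset.mem_insert, Finset.mem_Ioc]
    constructor
    · rintro ⟨hxA, hxm, hxn⟩
      have hxA' : x ∈ A' := ((hept x).mp ⟨hxA, hxm, hxn⟩).1
      exact ⟨Or.inr ⟨hxA', by omega, hxn⟩, hxm, hxn⟩
    · rintro ⟨hx, hxm, hxn⟩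
      rcases hx with rfl | hx
      · omega
      · exact ⟨((hept x).mpr ⟨hx.1, hxm, hxn⟩).1, hxm, hxn⟩
  · -- C ∩ Ioc (mA C) n = A' ∩ Ioc (mA C) n
    rw [hmAC]
    ext x
    simp only [hCdef, Finset.mem_inter, Finset.mem_insert, Finset.mem_Ioc]
    constructor
    · rintro ⟨hx, hxm, hxn⟩
      rcases hx with rfl | hx
      · omega
      · exact ⟨hx.1, hxm, hxn⟩
    · rintro ⟨hxA', hxm, hxn⟩
      exact ⟨Or.inr ⟨hxA', hxm, hxn⟩, hxm, hxn⟩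

/-- In the poset `Irr(Con(S_n))` (the transitive closure of the shard
digraph of `S_n`), the degree `deg(A) = max(Aᶜ) − min(A)` is a dual rank function:
whenever `A` covers `A'`, `deg(A) = deg(A') − 1`. -/
theorem stmt_16 (n : ℕ) (A A' : Finset ℕ) (hA : validA n A) (hA' : validA n A')
    (h : covA n A A') :
    MA n A - mA A = (MA n A' - mA A') - 1 := by
  obtain ⟨hT, hnc⟩ := h
  have harr : arrowA n A A' := by
    cases hT with
    | single h => exact h
    | tail h1 h2 => exact absurd ⟨_, h1, Relation.TransGen.single h2⟩ hnc
  have hmM : mA A < MA n A := hA.2.2.2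
  have hmM' : mA A' < MA n A' := hA'.2.2.2
  obtain ⟨_, _, hc⟩ := harr
  rcases hc with ⟨he, hM⟩ | ⟨he, hm⟩
  · have hmeq := case1_m_eq hA hA' he
    have : MA n A' = MA n A + 1 := by
      by_contra hne
      have hgap : MA n A + 2 ≤ MA n A' := by omega
      obtain ⟨C, h1, h2⟩ := refine1 hA hA' he hgap
      exact hnc ⟨C, Relation.TransGen.single h1, Relation.TransGen.single h2⟩
    omega
  · have hMeq := case2_M_eq hA hA' he
    have : mA A' + 1 = mA A := by
      by_contra hne
      have hgap : mA A' + 2 ≤ mA A := by omega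
      obtain ⟨C, h1, h2⟩ := refine2 hA hA' he hgap
      exact hnc ⟨C, Relation.TransGen.single h1, Relation.TransGen.single h2⟩
    omega
end

section
/- A signed permutation γ ∈ B_n (a bijection of ±[n] with γ(−i) = −γ(i)) is join-irreducible in the right weak order if and only if there is exactly one i ∈ {0,1,…,n−1} with γ_i > γ_{i+1} (where γ_0 := −γ_1 when i = 0 is interpreted via the generator s_0). The map sending γ with unique descent at position i to the signed subset A = {γ_{i+1}, …, γ_n} is a bijection between join-irreducibles of B_n and nonempty signed subsets A of [n] (subsets of ±[n] containing no pair {−i, i}) satisfying M > m, where m = min A and M = −m if |A| = n and M = max((±A)ᶜ) otherwise. -/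
/-- `±[n] = {±1, …, ±n} ⊆ ℤ`. -/
noncomputable def pmn (n : ℕ) : Finset ℤ := (Finset.Icc (-(n : ℤ)) (n : ℤ)).erase 0

/-- A signed permutation in `B_n`, realized as a permutation `w` of `ℤ` with
`w(−i) = −w(i)` which fixes everything outside `±[n]`. -/
def SignedPerm (n : ℕ) (w : Equiv.Perm ℤ) : Prop :=
  (∀ i : ℤ, w (-i) = -w i) ∧ ∀ i : ℤ, (n : ℤ) < |i| → w i = i

/-- The left inversion set of a signed permutation, written as the set of pairs
`(b, a)` with `b < a` in `±[n]` appearing in the order `a … b` in full notation. -/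
def invSetB (n : ℕ) (w : Equiv.Perm ℤ) : Set (ℤ × ℤ) :=
  {p | p.1 ∈ pmn n ∧ p.2 ∈ pmn n ∧ p.1 < p.2 ∧ w⁻¹ p.2 < w⁻¹ p.1}

/-- The right weak order on `B_n`: containment of left inversion sets. -/
def weakLEB (n : ℕ) (u w : Equiv.Perm ℤ) : Prop := invSetB n u ⊆ invSetB n w

/-- Cover relation of the right weak order on `B_n`. -/
def weakCovB (n : ℕ) (u w : Equiv.Perm ℤ) : Prop :=
  SignedPerm n u ∧ weakLEB n u w ∧ u ≠ w ∧
    ∀ v, SignedPerm n v → weakLEB n u v → weakLEB n v w → v = u ∨ v = w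

/-- Join-irreducible in the weak order on `B_n`: covers exactly one element. -/
def JoinIrrB (n : ℕ) (γ : Equiv.Perm ℤ) : Prop := ∃! u, weakCovB n u γ

/-- `γ` has a descent at position `i ∈ {0,…,n−1}`: `γ_i > γ_{i+1}`, where position `0`
is interpreted via the generator `s₀`, i.e. a descent at `0` means `γ₁ < 0`. -/
def DescentB (γ : Equiv.Perm ℤ) (i : ℕ) : Prop :=
  if i = 0 then γ 1 < 0 else γ ((i : ℤ) + 1) < γ (i : ℤ)

/-- A signed subset of `[n]`: a subset of `±[n]` containing no pair `{−i, i}`. -/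
def SignedSubset (n : ℕ) (A : Finset ℤ) : Prop :=
  A ⊆ pmn n ∧ ∀ a ∈ A, -a ∉ A

/-- `m = min A` (with junk value for `A = ∅`). -/
def mBs (A : Finset ℤ) : ℤ := A.min.untopD 0

/-- `M`: equal to `−m` if `|A| = n`, and `max((±A)ᶜ)` otherwise. -/
noncomputable def MBs (n : ℕ) (A : Finset ℤ) : ℤ :=
  if A.card = n then -(mBs A)
  else ((pmn n \ (A ∪ A.image (fun a => -a))).max.unbotD 0)

/-!
Right multiplication by the generator `s_i` at a descent `i` of `γ` deletes from the left
inversion set exactly the inversions between the positions that `s_i` exchanges (the root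
`γ α_i` and its negative); since the interval between `γ s_i` and `γ` contains nothing else, these
`γ s_i` are lower covers. Conversely, if `u < γ`, an inversion of `γ` missing from `u` can be
shrunk, by splitting at an intermediate position, to one between adjacent positions, that is, to a
descent `i` with `u ≤ γ s_i`. So the lower covers of `γ` are the `γ s_i` for its descents `i`.

A signed permutation with unique descent `i` increases on positions `1, …, i` and on
`i + 1, …, n`, and its values on `1, …, i` are positive. Its window `[γ 1, …, γ n]` is therefore the
sorted list of the positive elements of `(±A)ᶜ`, followed by the sorted list of
`A = {γ (i+1), …, γ n}`. So `A` determines `γ`. Conversely, this list is the window of a signed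
permutation, and the descent at the junction of the two lists is exactly the condition `m < M`.
-/

open Equiv

theorem Finset.eqOn_of_strictMonoOn_of_map_eq {α β : Type*} [LinearOrder α] [LinearOrder β]
    {s : Finset α} {f g : α ↪ β} (hf : StrictMonoOn f s) (hg : StrictMonoOn g s)
    (h : s.map f = s.map g) : Set.EqOn f g s := by
  have hsort := hf.map_finsetSort
  rw [h, ← hg.map_finsetSort] at hsort
  intro a ha
  exact List.map_inj_left.1 hsort a (Finset.mem_sort _ |>.2 ha)

lemma Equiv.eqOn_of_strictMonoOn_of_image_eq {α β : Type*} [LinearOrder α] [LinearOrder β]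
    {s : Finset α} {f g : α ≃ β} (hf : StrictMonoOn f s) (hg : StrictMonoOn g s)
    (h : s.image f = s.image g) : Set.EqOn f g s :=
  Finset.eqOn_of_strictMonoOn_of_map_eq (f := f.toEmbedding) (g := g.toEmbedding) hf hg
    (by simpa only [Finset.map_eq_image, coe_toEmbedding] using h)

theorem exists_adjacent_of_common_inversion {S : Finset ℤ} {g φ : ℤ → ℤ} (hg : Set.InjOn g S)
    (hasc : ∀ r ∈ S, ∀ s ∈ S, r < s → g r < g s → φ r < φ s) {p q : ℤ} (hp : p ∈ S)
    (hq : q ∈ S) (hpq : p < q) (hgpq : g q < g p) (hφpq : φ q < φ p) :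
    ∃ x ∈ S, ∃ y ∈ S, x < y ∧ (∀ z ∈ S, ¬(x < z ∧ z < y)) ∧ g y < g x ∧ φ y < φ x := by
  induction hk : (q - p).toNat using Nat.strong_induction_on generalizing p q with
  | _ k ih =>
  by_cases hadj : ∀ z ∈ S, ¬(p < z ∧ z < q)
  · exact ⟨p, hp, q, hq, hpq, hadj, hgpq, hφpq⟩
  push Not at hadj
  obtain ⟨z, hz, hpz, hzq⟩ := hadj
  have hzp : g z ≠ g p := fun h => hpz.ne' (hg hz hp h)
  have hzq' : g z ≠ g q := fun h => hzq.ne (hg hz hq h)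
  have h1 := hasc p hp z hz hpz
  have h2 := hasc z hz q hq hzq
  -- one of `(p, z)` and `(z, q)` is again inverted by both `g` and `φ`
  by_cases hleft : g z < g p ∧ φ z < φ p
  · exact ih _ (by omega) hp hz hpz hleft.1 hleft.2 rfl
  · have hright : g q < g z ∧ φ q < φ z := by
      rcases lt_or_gt_of_ne hzp with hlt | hlt
      · have hφ : φ p ≤ φ z := not_lt.1 fun h => hleft ⟨hlt, h⟩
        rcases lt_or_gt_of_ne hzq' with hlt' | hlt'
        · exact absurd (h2 hlt') (by omega)
        · exact ⟨hlt', by omega⟩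
      · exact ⟨by omega, by have := h1 hlt; omega⟩
    exact ih _ (by omega) hz hq hzq hright.1 hright.2 rfl

lemma List.injective_getD_self {L : List ℕ} (hnd : L.Nodup) (hlt : ∀ k ∈ L, k < L.length) :
    Function.Injective fun k => L.getD k k := by
  intro k l hkl
  simp only at hkl
  rcases lt_or_ge k L.length with hk | hk <;> rcases lt_or_ge l L.length with hl | hl
  · rw [List.getD_eq_getElem _ _ hk, List.getD_eq_getElem _ _ hl] at hkl
    exact hnd.getElem_inj_iff.1 hkl
  · rw [List.getD_eq_getElem _ _ hk, List.getD_eq_default _ _ hl] at hkl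
    exact absurd (hlt _ (List.getElem_mem hk)) (by omega)
  · rw [List.getD_eq_default _ _ hk, List.getD_eq_getElem _ _ hl] at hkl
    exact absurd (hlt _ (List.getElem_mem hl)) (by omega)
  · rwa [List.getD_eq_default _ _ hk, List.getD_eq_default _ _ hl] at hkl

lemma Function.Injective.surjective_of_eqOn_compl {α : Type*} {S : Set α} {f : α → α}
    (hS : S.Finite) (hf : Function.Injective f) (hfix : ∀ x ∉ S, f x = x) :
    Function.Surjective f := by
  intro y
  by_cases hy : y ∈ S
  · have hmaps : Set.MapsTo f S S := fun x hx => by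
      by_contra h
      rw [hf (hfix _ h)] at h
      exact h hx
    obtain ⟨x, -, hx⟩ := ((hS.injOn_iff_bijOn_of_mapsTo hmaps).1 hf.injOn).surjOn hy
    exact ⟨x, hx⟩
  · exact ⟨y, hfix y hy⟩

lemma mem_pmn {n : ℕ} {a : ℤ} : a ∈ pmn n ↔ a ≠ 0 ∧ -(n : ℤ) ≤ a ∧ a ≤ n := by
  simp [pmn]

lemma neg_mem_pmn {n : ℕ} {a : ℤ} (h : a ∈ pmn n) : -a ∈ pmn n := by
  rw [mem_pmn] at h ⊢
  omega

namespace SignedPerm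

variable {n : ℕ} {u w : Perm ℤ}

lemma map_neg (hw : SignedPerm n w) (a : ℤ) : w (-a) = -w a := hw.1 a

lemma map_zero (hw : SignedPerm n w) : w 0 = 0 := by
  have := hw.map_neg 0
  simp only [neg_zero] at this
  omega

lemma apply_of_notMem_pmn (hw : SignedPerm n w) {a : ℤ} (ha : a ∉ pmn n) : w a = a := by
  rw [mem_pmn] at ha
  by_cases h0 : a = 0
  · rw [h0, hw.map_zero]
  · exact hw.2 a (lt_abs.2 (by omega))

lemma apply_mem_pmn_iff (hw : SignedPerm n w) {a : ℤ} : w a ∈ pmn n ↔ a ∈ pmn n := by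
  refine ⟨fun h => ?_, fun h => ?_⟩
  · by_contra ha
    exact ha (hw.apply_of_notMem_pmn ha ▸ h)
  · by_contra hwa
    rw [w.injective (hw.apply_of_notMem_pmn hwa)] at hwa
    exact hwa h

lemma mul (hu : SignedPerm n u) (hw : SignedPerm n w) : SignedPerm n (u * w) :=
  ⟨fun a => by simp [hw.map_neg, hu.map_neg], fun a ha => by simp [hw.2 a ha, hu.2 a ha]⟩

lemma inv (hw : SignedPerm n w) : SignedPerm n w⁻¹ :=
  ⟨fun a => w.injective (by simp [hw.map_neg]),
    fun a ha => w.injective (by simp [hw.2 a ha])⟩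

lemma ext_of_pos (hu : SignedPerm n u) (hw : SignedPerm n w)
    (h : ∀ a : ℤ, 0 < a → a ≤ n → u a = w a) : u = w := by
  ext a
  by_cases ha : a ∈ pmn n
  · rw [mem_pmn] at ha
    rcases lt_or_gt_of_ne ha.1 with hneg | hpos
    · rw [← neg_neg a, hu.map_neg, hw.map_neg, h (-a) (by omega) (by omega)]
    · exact h a hpos ha.2.2
  · rw [hu.apply_of_notMem_pmn ha, hw.apply_of_notMem_pmn ha]

lemma neg_mem_invSetB (hw : SignedPerm n w) {b a : ℤ} (h : (b, a) ∈ invSetB n w) :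
    (-a, -b) ∈ invSetB n w := by
  obtain ⟨hb, ha, hba, hlt⟩ := h
  refine ⟨neg_mem_pmn ha, neg_mem_pmn hb, neg_lt_neg hba, ?_⟩
  rw [hw.inv.map_neg, hw.inv.map_neg]
  exact neg_lt_neg hlt

lemma eq_of_invSetB_eq (hu : SignedPerm n u) (hw : SignedPerm n w)
    (h : invSetB n u = invSetB n w) : u = w := by
  -- `w⁻¹ * u` preserves the order of `±[n]`, so it is the identity there
  have hmono : StrictMonoOn (w⁻¹ * u).toEmbedding (pmn n : Set ℤ) := by
    intro p hp q hq hpq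
    have hup : u p ∈ pmn n := hu.apply_mem_pmn_iff.2 hp
    have huq : u q ∈ pmn n := hu.apply_mem_pmn_iff.2 hq
    simp only [Equiv.coe_toEmbedding, Perm.mul_apply]
    rcases lt_or_gt_of_ne (u.injective.ne hpq.ne) with hlt | hlt
    · have hnot : (u p, u q) ∉ invSetB n w := by
        rw [← h]
        rintro ⟨-, -, -, hinv⟩
        simp only [Perm.coe_inv, symm_apply_apply] at hinv
        exact hinv.not_gt hpq
      have hne : w⁻¹ (u p) ≠ w⁻¹ (u q) := w⁻¹.injective.ne (u.injective.ne hpq.ne)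
      exact lt_of_le_of_ne (not_lt.1 fun hinv => hnot ⟨hup, huq, hlt, hinv⟩) hne
    · have hmem : (u q, u p) ∈ invSetB n u := ⟨huq, hup, hlt, by simpa using hpq⟩
      rw [h] at hmem
      exact hmem.2.2.2
  have hmap : (pmn n).map (w⁻¹ * u).toEmbedding = (pmn n).map (Function.Embedding.refl ℤ) := by
    rw [Finset.map_refl]
    refine Finset.eq_of_subset_of_card_le (fun x hx => ?_) (by rw [Finset.card_map])
    obtain ⟨p, hp, rfl⟩ := Finset.mem_map.1 hx
    exact (hw.inv.mul hu).apply_mem_pmn_iff.2 hp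
  have heq := Finset.eqOn_of_strictMonoOn_of_map_eq hmono strictMonoOn_id hmap
  refine hu.ext_of_pos hw fun a ha0 han => ?_
  have := heq (mem_pmn.2 ⟨ha0.ne', by omega, han⟩)
  simp only [Equiv.coe_toEmbedding, Perm.mul_apply, Function.Embedding.refl_apply] at this
  exact Perm.inv_eq_iff_eq.1 this

end SignedPerm

lemma weakLEB_antisymm {n : ℕ} {u w : Perm ℤ} (hu : SignedPerm n u) (hw : SignedPerm n w)
    (huw : weakLEB n u w) (hwu : weakLEB n w u) : u = w :=
  hu.eq_of_invSetB_eq hw (huw.antisymm hwu)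

def sB (i : ℕ) : Perm ℤ :=
  if i = 0 then swap (-1) 1 else swap (i : ℤ) (i + 1) * swap (-(i : ℤ)) (-(i + 1))

def IsSwapPair (i : ℕ) (x y : ℤ) : Prop :=
  if i = 0 then x = -1 ∧ y = 1 else (x = i ∧ y = i + 1) ∨ (x = -(i + 1) ∧ y = -i)

lemma sB_apply (i : ℕ) (x : ℤ) :
    sB i x = if i = 0 then (if x = -1 then 1 else if x = 1 then -1 else x)
      else if x = i then i + 1 else if x = i + 1 then i
      else if x = -i then -(i + 1) else if x = -(i + 1) then -i else x := by
  unfold sB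
  split_ifs <;> simp only [Perm.mul_apply, swap_apply_def] <;> split_ifs <;> omega

lemma signedPerm_sB {n i : ℕ} (hi : i < n) : SignedPerm n (sB i) := by
  refine ⟨fun x => ?_, fun x hx => ?_⟩
  · rw [sB_apply, sB_apply]
    split_ifs <;> omega
  · rw [lt_abs] at hx
    rw [sB_apply]
    split_ifs <;> omega

lemma sB_inv (i : ℕ) : (sB i)⁻¹ = sB i := by
  rw [inv_eq_iff_mul_eq_one]
  ext x
  rw [Perm.mul_apply, Perm.one_apply, sB_apply i x]
  split_ifs <;> rw [sB_apply] <;> split_ifs <;> first | omega | contradiction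

lemma sB_lt_sB_iff {n i : ℕ} {x y : ℤ} (hx : x ∈ pmn n) (hy : y ∈ pmn n) (hxy : x < y) :
    sB i y < sB i x ↔ IsSwapPair i x y := by
  rw [mem_pmn] at hx hy
  rw [sB_apply, sB_apply, IsSwapPair]
  split_ifs <;> omega

lemma exists_isSwapPair {n i : ℕ} (hi : i < n) :
    ∃ x ∈ pmn n, ∃ y ∈ pmn n, x < y ∧ IsSwapPair i x y := by
  by_cases h0 : i = 0
  · exact ⟨-1, mem_pmn.2 (by omega), 1, mem_pmn.2 (by omega), by omega, by simp [IsSwapPair, h0]⟩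
  · exact ⟨i, mem_pmn.2 (by omega), i + 1, mem_pmn.2 (by omega), by omega,
      by simp [IsSwapPair, h0]⟩

lemma IsSwapPair.eq_of_isSwapPair {i j : ℕ} {x y : ℤ} (h : IsSwapPair i x y)
    (h' : IsSwapPair j x y) : i = j := by
  unfold IsSwapPair at h h'
  split_ifs at h h' <;> omega

lemma IsSwapPair.eq_or_eq_neg {i : ℕ} {x y x' y' : ℤ} (h : IsSwapPair i x y)
    (h' : IsSwapPair i x' y') : (x' = x ∧ y' = y) ∨ (x' = -y ∧ y' = -x) := by
  unfold IsSwapPair at h h'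
  split_ifs at h h' <;> omega

lemma IsSwapPair.descentB_iff {n i : ℕ} {γ : Perm ℤ} {x y : ℤ} (hγ : SignedPerm n γ)
    (h : IsSwapPair i x y) : DescentB γ i ↔ γ y < γ x := by
  unfold IsSwapPair at h
  unfold DescentB
  split_ifs at h ⊢ with h0
  · obtain ⟨rfl, rfl⟩ := h
    rw [hγ.map_neg]
    omega
  · rcases h with ⟨rfl, rfl⟩ | ⟨rfl, rfl⟩
    · rfl
    · rw [hγ.map_neg, hγ.map_neg]
      omega

lemma exists_isSwapPair_of_adjacent {n : ℕ} {x y : ℤ} (hx : x ∈ pmn n) (hy : y ∈ pmn n)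
    (hxy : x < y) (hadj : ∀ z ∈ pmn n, ¬(x < z ∧ z < y)) : ∃ i < n, IsSwapPair i x y := by
  rw [mem_pmn] at hx hy
  by_cases hx1 : x = -1
  · have hy1 : y = 1 := by
      by_contra hy1
      exact hadj 1 (mem_pmn.2 (by omega)) (by omega)
    exact ⟨0, by omega, by simp [IsSwapPair, hx1, hy1]⟩
  · have hy1 : y = x + 1 := by
      by_contra hy1
      exact hadj (x + 1) (mem_pmn.2 (by omega)) (by omega)
    by_cases hpos : 0 < x
    · refine ⟨x.toNat, by omega, ?_⟩
      rw [IsSwapPair, if_neg (by omega)]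
      omega
    · refine ⟨(-y).toNat, by omega, ?_⟩
      rw [IsSwapPair, if_neg (by omega)]
      omega

/-- The root `γ α_i` and its negative, written as pairs of values as in `invSetB`. -/
def descentPairs (γ : Perm ℤ) (i : ℕ) : Set (ℤ × ℤ) :=
  {e | ∃ x y, IsSwapPair i x y ∧ e = (γ y, γ x)}

lemma apply_mem_descentPairs_iff {γ : Perm ℤ} {i : ℕ} {x y : ℤ} :
    (γ y, γ x) ∈ descentPairs γ i ↔ IsSwapPair i x y := by
  refine ⟨fun ⟨x', y', h, he⟩ => ?_, fun h => ⟨x, y, h, rfl⟩⟩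
  simp only [Prod.mk.injEq, γ.injective.eq_iff] at he
  rwa [he.1, he.2]

lemma descentPairs_subset_invSetB_of_mem {n i : ℕ} {γ w : Perm ℤ} (hγ : SignedPerm n γ)
    (hw : SignedPerm n w) {e : ℤ × ℤ} (he : e ∈ descentPairs γ i) (hew : e ∈ invSetB n w) :
    descentPairs γ i ⊆ invSetB n w := by
  obtain ⟨x, y, hxy, rfl⟩ := he
  rintro _ ⟨x', y', hxy', rfl⟩
  rcases hxy.eq_or_eq_neg hxy' with ⟨rfl, rfl⟩ | ⟨rfl, rfl⟩
  · exact hew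
  · rw [hγ.map_neg, hγ.map_neg]
    exact hw.neg_mem_invSetB hew

lemma invSetB_mul_sB {n i : ℕ} {γ : Perm ℤ} (hγ : SignedPerm n γ) (hd : DescentB γ i) :
    invSetB n (γ * sB i) = invSetB n γ \ descentPairs γ i := by
  ext ⟨b, a⟩
  obtain ⟨p, rfl⟩ := γ.surjective a
  obtain ⟨q, rfl⟩ := γ.surjective b
  simp only [invSetB, Set.mem_ofPred_eq, Set.mem_sdiff, mul_inv_rev, sB_inv, Perm.mul_apply,
    Perm.coe_inv, symm_apply_apply, apply_mem_descentPairs_iff, hγ.apply_mem_pmn_iff]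
  constructor
  · rintro ⟨hq, hp, hqp, hlt⟩
    rcases lt_or_gt_of_ne (fun h : p = q => hqp.ne (h ▸ rfl)) with hpq | hpq
    · exact ⟨⟨hq, hp, hqp, hpq⟩, (sB_lt_sB_iff hp hq hpq).not.1 hlt.not_gt⟩
    · exact absurd hqp ((((sB_lt_sB_iff hq hp hpq).1 hlt).descentB_iff hγ).1 hd).not_gt
  · rintro ⟨⟨hq, hp, hqp, hpq⟩, hsw⟩
    refine ⟨hq, hp, hqp, lt_of_le_of_ne ?_ ((sB i).injective.ne hpq.ne)⟩
    exact not_lt.1 ((sB_lt_sB_iff hp hq hpq).not.2 hsw)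

lemma sB_ne_one {n i : ℕ} (hi : i < n) : sB i ≠ 1 := by
  obtain ⟨x, hx, y, hy, hxy, hsw⟩ := exists_isSwapPair hi
  intro h
  have := (sB_lt_sB_iff hx hy hxy).2 hsw
  rw [h] at this
  exact this.not_gt hxy

lemma eq_of_sB_eq {n i j : ℕ} (hi : i < n) (hij : sB i = sB j) : i = j := by
  obtain ⟨x, hx, y, hy, hxy, hsw⟩ := exists_isSwapPair hi
  have := (sB_lt_sB_iff hx hy hxy).2 hsw
  rw [hij, sB_lt_sB_iff hx hy hxy] at this
  exact hsw.eq_of_isSwapPair this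

lemma weakLEB_mul_sB_of_notMem {n i : ℕ} {γ u : Perm ℤ} (hγ : SignedPerm n γ)
    (hu : SignedPerm n u) (hd : DescentB γ i) (hle : weakLEB n u γ) {e : ℤ × ℤ}
    (he : e ∈ descentPairs γ i) (heu : e ∉ invSetB n u) : weakLEB n u (γ * sB i) := by
  rw [weakLEB, invSetB_mul_sB hγ hd]
  exact fun f hf => ⟨hle hf, fun hfd => heu (descentPairs_subset_invSetB_of_mem hγ hu hfd hf he)⟩

lemma weakCovB_mul_sB {n i : ℕ} {γ : Perm ℤ} (hγ : SignedPerm n γ) (hi : i < n)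
    (hd : DescentB γ i) : weakCovB n (γ * sB i) γ := by
  have hle : weakLEB n (γ * sB i) γ := by
    rw [weakLEB, invSetB_mul_sB hγ hd]
    exact Set.sdiff_subset
  refine ⟨hγ.mul (signedPerm_sB hi), hle, fun h => sB_ne_one hi (mul_eq_left.1 h), ?_⟩
  intro v hv hlow hup
  -- `invSetB n v` contains either both or none of the pairs in `descentPairs γ i`
  by_cases hmem : ∃ e ∈ descentPairs γ i, e ∈ invSetB n v
  · obtain ⟨e, he, hev⟩ := hmem
    refine Or.inr (weakLEB_antisymm hv hγ hup fun f hf => ?_)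
    by_cases hfd : f ∈ descentPairs γ i
    · exact descentPairs_subset_invSetB_of_mem hγ hv he hev hfd
    · exact hlow (by rw [invSetB_mul_sB hγ hd]; exact ⟨hf, hfd⟩)
  · push Not at hmem
    obtain ⟨x, -, y, -, -, hsw⟩ := exists_isSwapPair hi
    exact Or.inl (weakLEB_antisymm hv (hγ.mul (signedPerm_sB hi))
      (weakLEB_mul_sB_of_notMem hγ hv hd hup ⟨x, y, hsw, rfl⟩ (hmem _ ⟨x, y, hsw, rfl⟩)) hlow)

lemma exists_descentB_of_weakLEB {n : ℕ} {γ u : Perm ℤ} (hγ : SignedPerm n γ)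
    (hu : SignedPerm n u) (hle : weakLEB n u γ) (hne : u ≠ γ) :
    ∃ i < n, DescentB γ i ∧ ∃ e ∈ descentPairs γ i, e ∉ invSetB n u := by
  obtain ⟨⟨b, a⟩, hγba, huba⟩ : ∃ e ∈ invSetB n γ, e ∉ invSetB n u := by
    by_contra! h
    exact hne (weakLEB_antisymm hu hγ hle h)
  obtain ⟨p, rfl⟩ := γ.surjective a
  obtain ⟨q, rfl⟩ := γ.surjective b
  obtain ⟨hq, hp, hqp, hpq⟩ := hγba
  simp only [Perm.coe_inv, symm_apply_apply, hγ.apply_mem_pmn_iff] at hpq hp hq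
  -- on positions, `u⁻¹ ∘ γ` keeps every ascent of `γ` since `u ≤ γ`
  have hasc : ∀ r ∈ pmn n, ∀ s ∈ pmn n, r < s → γ r < γ s → u⁻¹ (γ r) < u⁻¹ (γ s) := by
    intro r hr s hs hrs hγrs
    refine lt_of_le_of_ne (not_lt.1 fun hinv => ?_) (u⁻¹.injective.ne (γ.injective.ne hrs.ne))
    have := (hle (show (γ r, γ s) ∈ invSetB n u from
      ⟨hγ.apply_mem_pmn_iff.2 hr, hγ.apply_mem_pmn_iff.2 hs, hγrs, hinv⟩)).2.2.2
    simp only [Perm.coe_inv, symm_apply_apply] at this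
    exact this.not_gt hrs
  have hupq : u⁻¹ (γ q) < u⁻¹ (γ p) :=
    lt_of_le_of_ne
      (not_lt.1 fun h => huba ⟨hγ.apply_mem_pmn_iff.2 hq, hγ.apply_mem_pmn_iff.2 hp, hqp, h⟩)
      (u⁻¹.injective.ne (γ.injective.ne hpq.ne'))
  obtain ⟨x, hx, y, hy, hxy, hadj, hγyx, huyx⟩ :=
    exists_adjacent_of_common_inversion (γ.injective.injOn) hasc hp hq hpq hqp hupq
  obtain ⟨i, hi, hsw⟩ := exists_isSwapPair_of_adjacent hx hy hxy hadj
  exact ⟨i, hi, (hsw.descentB_iff hγ).2 hγyx, _, apply_mem_descentPairs_iff.2 hsw,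
    fun h => h.2.2.2.not_gt huyx⟩

lemma exists_eq_mul_sB_of_weakCovB {n : ℕ} {γ u : Perm ℤ} (hγ : SignedPerm n γ)
    (hcov : weakCovB n u γ) : ∃ i < n, DescentB γ i ∧ u = γ * sB i := by
  obtain ⟨hu, hle, hne, hbetween⟩ := hcov
  obtain ⟨i, hi, hd, e, he, heu⟩ := exists_descentB_of_weakLEB hγ hu hle hne
  refine ⟨i, hi, hd, ?_⟩
  rcases hbetween _ (hγ.mul (signedPerm_sB hi)) (weakLEB_mul_sB_of_notMem hγ hu hd hle he heu)
    (weakCovB_mul_sB hγ hi hd).2.1 with h | h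
  · exact h.symm
  · exact absurd (mul_eq_left.1 h) (sB_ne_one hi)

theorem joinIrrB_iff_existsUnique_descentB {n : ℕ} {γ : Perm ℤ} (hγ : SignedPerm n γ) :
    JoinIrrB n γ ↔ ∃! i, i < n ∧ DescentB γ i := by
  constructor
  · rintro ⟨u, hu, huniq⟩
    obtain ⟨i, hi, hd, rfl⟩ := exists_eq_mul_sB_of_weakCovB hγ hu
    refine ⟨i, ⟨hi, hd⟩, fun j ⟨hj, hdj⟩ => ?_⟩
    exact eq_of_sB_eq hj (mul_left_cancel (huniq _ (weakCovB_mul_sB hγ hj hdj)))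
  · rintro ⟨i, ⟨hi, hd⟩, huniq⟩
    refine ⟨γ * sB i, weakCovB_mul_sB hγ hi hd, fun u hu => ?_⟩
    obtain ⟨j, hj, hdj, rfl⟩ := exists_eq_mul_sB_of_weakCovB hγ hu
    rw [huniq j ⟨hj, hdj⟩]

/-- The positive elements of `(±A)ᶜ`. -/
noncomputable def posCompl (n : ℕ) (A : Finset ℤ) : Finset ℤ :=
  (Finset.Icc 1 (n : ℤ)).filter fun c => c ∉ A ∧ -c ∉ A

lemma mem_posCompl {n : ℕ} {A : Finset ℤ} {c : ℤ} :
    c ∈ posCompl n A ↔ (1 ≤ c ∧ c ≤ n) ∧ c ∉ A ∧ -c ∉ A := by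
  rw [posCompl, Finset.mem_filter, Finset.mem_Icc]

lemma card_posCompl_add_card {n : ℕ} {A : Finset ℤ} (hA : SignedSubset n A) :
    (posCompl n A).card + A.card = n := by
  have himage : A.image (fun a => (a.natAbs : ℤ)) =
      (Finset.Icc 1 (n : ℤ)).filter fun c => ¬(c ∉ A ∧ -c ∉ A) := by
    ext c
    simp only [Finset.mem_image, Finset.mem_filter, Finset.mem_Icc, not_and_or, not_not]
    constructor
    · rintro ⟨a, ha, rfl⟩
      have := mem_pmn.1 (hA.1 ha)
      refine ⟨by omega, ?_⟩
      rcases Int.natAbs_eq a with h | h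
      · exact Or.inl (h ▸ ha)
      · exact Or.inr (h ▸ ha)
    · rintro ⟨hc, h | h⟩
      · exact ⟨c, h, by omega⟩
      · exact ⟨-c, h, by omega⟩
  have hinj : Set.InjOn (fun a : ℤ => (a.natAbs : ℤ)) A := by
    intro a ha b hb h
    rcases Int.natAbs_eq_natAbs_iff.1 (Nat.cast_injective h) with h | h
    · exact h
    · exact absurd (h ▸ ha) (hA.2 b hb)
  have := Finset.card_filter_add_card_filter_not (s := Finset.Icc 1 (n : ℤ))
    (fun c => c ∉ A ∧ -c ∉ A)
  rw [← himage, Finset.card_image_of_injOn hinj, Int.card_Icc] at this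
  rw [posCompl]
  omega

lemma mem_pmn_sdiff_iff {n : ℕ} {A : Finset ℤ} {c : ℤ} :
    c ∈ pmn n \ (A ∪ A.image (fun a => -a)) ↔ c ∈ pmn n ∧ c ∉ A ∧ -c ∉ A := by
  simp only [Finset.mem_sdiff, Finset.mem_union, Finset.mem_image, not_or, not_exists, not_and,
    neg_eq_iff_eq_neg]
  exact and_congr_right fun _ => and_congr_right fun _ =>
    ⟨fun h hc => h _ hc rfl, fun h a ha hac => h (hac ▸ ha)⟩

lemma mBs_eq_min' {A : Finset ℤ} (hne : A.Nonempty) : mBs A = A.min' hne := by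
  rw [mBs, ← Finset.coe_min' hne, WithTop.untopD_coe]

lemma mBs_le {A : Finset ℤ} {a : ℤ} (ha : a ∈ A) : mBs A ≤ a := by
  rw [mBs_eq_min' ⟨a, ha⟩]
  exact Finset.min'_le A a ha

lemma le_MBs {n : ℕ} {A : Finset ℤ} {c : ℤ} (hcard : A.card ≠ n) (hc : c ∈ pmn n)
    (hcA : c ∉ A) (hncA : -c ∉ A) : c ≤ MBs n A := by
  have hmem := mem_pmn_sdiff_iff.2 ⟨hc, hcA, hncA⟩
  rw [MBs, if_neg hcard, ← Finset.coe_max' ⟨c, hmem⟩, WithBot.unbotD_coe]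
  exact Finset.le_max' _ c hmem

lemma MBs_le_max'_posCompl {n : ℕ} {A : Finset ℤ} (hcard : A.card ≠ n)
    (hne : (posCompl n A).Nonempty) : MBs n A ≤ (posCompl n A).max' hne := by
  have hsub : posCompl n A ⊆ pmn n \ (A ∪ A.image (fun a => -a)) := fun c hc => by
    obtain ⟨hc, hcA, hncA⟩ := mem_posCompl.1 hc
    exact mem_pmn_sdiff_iff.2 ⟨mem_pmn.2 (by omega), hcA, hncA⟩
  have hDne := hne.mono hsub
  rw [MBs, if_neg hcard, ← Finset.coe_max' hDne, WithBot.unbotD_coe]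
  set d := (pmn n \ (A ∪ A.image (fun a => -a))).max' hDne
  obtain ⟨hd, hdA, hndA⟩ := mem_pmn_sdiff_iff.1 (Finset.max'_mem _ hDne)
  rw [mem_pmn] at hd
  rcases lt_or_gt_of_ne hd.1 with hneg | hpos
  · have := Finset.le_max' (posCompl n A) (-d) (mem_posCompl.2 ⟨by omega, hndA, by rwa [neg_neg]⟩)
    omega
  · exact Finset.le_max' (posCompl n A) d (mem_posCompl.2 ⟨⟨hpos, hd.2.2⟩, hdA, hndA⟩)

lemma strictMonoOn_Ioc_of_not_descentB {γ : Perm ℤ} {a b : ℕ}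
    (h : ∀ j : ℕ, a < j → j < b → ¬DescentB γ j) :
    StrictMonoOn γ (Finset.Ioc (a : ℤ) b : Set ℤ) := by
  rw [Finset.coe_Ioc]
  refine strictMonoOn_of_lt_add_one Set.ordConnected_Ioc fun x _ hx hx1 => ?_
  obtain ⟨hax, -⟩ := hx
  obtain ⟨-, hxb⟩ := hx1
  have hnd := h x.toNat (by omega) (by omega)
  rw [DescentB, if_neg (by omega), show ((x.toNat : ℕ) : ℤ) = x by omega] at hnd
  exact lt_of_le_of_ne (not_lt.1 hnd) (γ.injective.ne (by omega))

namespace SignedPerm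

variable {n : ℕ} {γ : Perm ℤ}

lemma signedSubset_image (hγ : SignedPerm n γ) {S : Finset ℤ} (hS : ∀ x ∈ S, 0 < x ∧ x ≤ n) :
    SignedSubset n (S.image γ) := by
  refine ⟨fun a ha => ?_, fun a ha hna => ?_⟩
  · obtain ⟨x, hx, rfl⟩ := Finset.mem_image.1 ha
    have := hS x hx
    exact hγ.apply_mem_pmn_iff.2 (mem_pmn.2 (by omega))
  · obtain ⟨x, hx, rfl⟩ := Finset.mem_image.1 ha
    obtain ⟨y, hy, hyx⟩ := Finset.mem_image.1 hna
    rw [← hγ.map_neg] at hyx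
    have := γ.injective hyx
    have := hS x hx
    have := hS y hy
    omega

lemma apply_notMem_image_Ioc (hγ : SignedPerm n γ) {i : ℕ} {x : ℤ}
    (hx : x ∈ Finset.Ioc 0 (i : ℤ)) :
    γ x ∉ (Finset.Ioc (i : ℤ) n).image γ ∧ -γ x ∉ (Finset.Ioc (i : ℤ) n).image γ := by
  rw [Finset.mem_Ioc] at hx
  refine ⟨fun h => ?_, fun h => ?_⟩ <;> obtain ⟨y, hy, hyx⟩ := Finset.mem_image.1 h <;>
    rw [Finset.mem_Ioc] at hy
  · have := γ.injective hyx
    omega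
  · rw [← hγ.map_neg] at hyx
    have := γ.injective hyx
    omega

lemma apply_pos_of_not_descentB (hγ : SignedPerm n γ) {i : ℕ}
    (h : ∀ j < i, ¬DescentB γ j) {x : ℤ} (hx : x ∈ Finset.Ioc 0 (i : ℤ)) : 0 < γ x := by
  have hx' := Finset.mem_Ioc.1 hx
  have h1 : 0 < γ 1 := by
    have hnd := h 0 (by omega)
    rw [DescentB, if_pos rfl] at hnd
    have : γ 1 ≠ 0 := fun h1 => one_ne_zero (γ.injective (h1.trans hγ.map_zero.symm))
    omega
  rcases eq_or_lt_of_le (show 1 ≤ x by omega) with rfl | hlt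
  · exact h1
  · have hmono := strictMonoOn_Ioc_of_not_descentB (a := 0) (b := i) fun j _ hj => h j hj
    exact h1.trans (hmono (Finset.mem_coe.2 (Finset.mem_Ioc.2 ⟨by omega, by omega⟩)) hx hlt)

lemma image_Ioc_zero_eq_posCompl (hγ : SignedPerm n γ) {i : ℕ} (hi : i ≤ n)
    (h : ∀ j < i, ¬DescentB γ j) :
    (Finset.Ioc 0 (i : ℤ)).image γ = posCompl n ((Finset.Ioc (i : ℤ) n).image γ) := by
  refine Finset.eq_of_subset_of_card_le (fun c hc => ?_) ?_
  · obtain ⟨x, hx, rfl⟩ := Finset.mem_image.1 hc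
    have hmem := mem_pmn.1 (hγ.apply_mem_pmn_iff (a := x) |>.2
      (mem_pmn.2 (by rw [Finset.mem_Ioc] at hx; omega)))
    have hpos := hγ.apply_pos_of_not_descentB h hx
    exact mem_posCompl.2 ⟨⟨hpos, hmem.2.2⟩, hγ.apply_notMem_image_Ioc hx⟩
  · have := card_posCompl_add_card (hγ.signedSubset_image (S := Finset.Ioc (i : ℤ) n)
      fun x hx => by rw [Finset.mem_Ioc] at hx; omega)
    rw [Finset.card_image_of_injective _ γ.injective, Int.card_Ioc] at this ⊢
    omega

lemma mBs_lt_MBs_image (hγ : SignedPerm n γ) {i : ℕ} (hi : i < n) (hd : DescentB γ i) :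
    mBs ((Finset.Ioc (i : ℤ) n).image γ) < MBs n ((Finset.Ioc (i : ℤ) n).image γ) := by
  have hm : mBs ((Finset.Ioc (i : ℤ) n).image γ) ≤ γ (i + 1) :=
    mBs_le (Finset.mem_image_of_mem γ (Finset.mem_Ioc.2 ⟨by omega, by omega⟩))
  have hcard : ((Finset.Ioc (i : ℤ) n).image γ).card = n - i := by
    rw [Finset.card_image_of_injective _ γ.injective, Int.card_Ioc]
    omega
  by_cases h0 : i = 0
  · subst h0
    rw [MBs, if_pos (by omega)]
    rw [DescentB, if_pos rfl] at hd
    push_cast at hm ⊢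
    omega
  · have hx : (i : ℤ) ∈ Finset.Ioc 0 (i : ℤ) := Finset.mem_Ioc.2 ⟨by omega, le_rfl⟩
    have hγi := le_MBs (by omega) (hγ.apply_mem_pmn_iff.2 (mem_pmn.2 (by omega)))
      (hγ.apply_notMem_image_Ioc hx).1 (hγ.apply_notMem_image_Ioc hx).2
    rw [DescentB, if_neg h0] at hd
    omega

lemma eq_of_image_Ioc_eq {i i' : ℕ} {γ' : Perm ℤ} (hγ : SignedPerm n γ)
    (hγ' : SignedPerm n γ') (huniq : ∀ j < n, DescentB γ j → j = i)
    (huniq' : ∀ j < n, DescentB γ' j → j = i') (hi : i < n)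
    (himg : (Finset.Ioc (i : ℤ) n).image γ = (Finset.Ioc (i' : ℤ) n).image γ') : γ = γ' := by
  have hii : i = i' := by
    have := congrArg Finset.card himg
    rw [Finset.card_image_of_injective _ γ.injective, Finset.card_image_of_injective _ γ'.injective,
      Int.card_Ioc, Int.card_Ioc] at this
    omega
  subst hii
  have hlow : ∀ g : Perm ℤ, (∀ j < n, DescentB g j → j = i) → ∀ j < i, ¬DescentB g j :=
    fun g hg j hj hdj => hj.ne (hg j (by omega) hdj)
  have hhigh : ∀ g : Perm ℤ, (∀ j < n, DescentB g j → j = i) →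
      StrictMonoOn g (Finset.Ioc (i : ℤ) n : Set ℤ) :=
    fun g hg => strictMonoOn_Ioc_of_not_descentB fun j hij hj hdj => hij.ne' (hg j hj hdj)
  have hC : Set.EqOn γ γ' (Finset.Ioc 0 (i : ℤ) : Set ℤ) := Equiv.eqOn_of_strictMonoOn_of_image_eq
    (strictMonoOn_Ioc_of_not_descentB fun j _ hj => hlow γ huniq j hj)
    (strictMonoOn_Ioc_of_not_descentB fun j _ hj => hlow γ' huniq' j hj)
    (by rw [hγ.image_Ioc_zero_eq_posCompl hi.le (hlow γ huniq),
      hγ'.image_Ioc_zero_eq_posCompl hi.le (hlow γ' huniq'), himg])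
  have hA := Equiv.eqOn_of_strictMonoOn_of_image_eq (hhigh γ huniq) (hhigh γ' huniq') himg
  refine hγ.ext_of_pos hγ' fun a ha han => ?_
  by_cases hai : a ≤ i
  · exact hC (Finset.mem_coe.2 (Finset.mem_Ioc.2 ⟨ha, hai⟩))
  · exact hA (Finset.mem_coe.2 (Finset.mem_Ioc.2 ⟨by omega, han⟩))

end SignedPerm

/-- The odd extension `x ↦ sign x * L[|x| - 1]` of a window `L`, and the identity beyond its
length; the leading `0` makes `x = 0` fit the same formula. -/
def windowExt (L : List ℤ) (x : ℤ) : ℤ := x.sign * (0 :: L).getD x.natAbs x.natAbs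

lemma windowExt_neg (L : List ℤ) (x : ℤ) : windowExt L (-x) = -windowExt L x := by
  simp only [windowExt, Int.sign_neg, Int.natAbs_neg, neg_mul]

lemma windowExt_succ (L : List ℤ) {k : ℕ} (hk : k < L.length) : windowExt L (k + 1) = L[k] := by
  rw [windowExt, show (k : ℤ) + 1 = ((k + 1 : ℕ) : ℤ) by push_cast; ring, Int.natAbs_natCast,
    Int.sign_natCast_of_ne_zero (by omega), List.getD_cons_succ, List.getD_eq_getElem _ _ hk,
    one_mul]

lemma windowExt_of_length_lt {L : List ℤ} {x : ℤ} (hx : L.length < x.natAbs) :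
    windowExt L x = x := by
  rw [windowExt, List.getD_eq_default _ _ (by rw [List.length_cons]; omega), Int.sign_mul_natAbs]

lemma natAbs_windowExt (L : List ℤ) (x : ℤ) :
    (windowExt L x).natAbs = (0 :: L.map Int.natAbs).getD x.natAbs x.natAbs := by
  have hmap : ((0 :: L).getD x.natAbs x.natAbs).natAbs =
      (0 :: L.map Int.natAbs).getD x.natAbs x.natAbs := by
    rw [← List.getD_map (f := Int.natAbs), Int.natAbs_natCast]
    rfl
  rw [windowExt, Int.natAbs_mul, hmap]
  rcases eq_or_ne x 0 with rfl | hx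
  · simp
  · rw [Int.natAbs_sign_of_ne_zero hx, one_mul]

lemma injective_windowExt {n : ℕ} {L : List ℤ} (hlen : L.length = n) (hL : ∀ x ∈ L, x ∈ pmn n)
    (hnd : (L.map Int.natAbs).Nodup) : Function.Injective (windowExt L) := by
  have hM : Function.Injective fun k => (0 :: L.map Int.natAbs).getD k k := by
    refine List.injective_getD_self (List.nodup_cons.2 ⟨fun h0 => ?_, hnd⟩) fun k hk => ?_
    · obtain ⟨x, hx, hx0⟩ := List.mem_map.1 h0
      exact (mem_pmn.1 (hL x hx)).1 (Int.natAbs_eq_zero.1 hx0)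
    · rcases List.mem_cons.1 hk with rfl | hk
      · simp
      · obtain ⟨x, hx, rfl⟩ := List.mem_map.1 hk
        have := mem_pmn.1 (hL x hx)
        rw [List.length_cons, List.length_map]
        omega
  intro x y hxy
  have habs : x.natAbs = y.natAbs := hM (by simp only [← natAbs_windowExt, hxy])
  rcases Int.natAbs_eq_natAbs_iff.1 habs with h | rfl
  · exact h
  · have hzero : windowExt L (-y) = 0 := by
      rw [windowExt_neg] at hxy ⊢
      omega
    have := hM ((natAbs_windowExt L (-y)).symm.trans (by rw [hzero]; rfl) :
      (0 :: L.map Int.natAbs).getD (-y).natAbs _ = (0 :: L.map Int.natAbs).getD 0 0)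
    omega

def HasWindow (γ : Perm ℤ) (L : List ℤ) : Prop := ∀ k (hk : k < L.length), γ (k + 1) = L[k]

lemma exists_signedPerm_hasWindow {n : ℕ} {L : List ℤ} (hlen : L.length = n)
    (hL : ∀ x ∈ L, x ∈ pmn n) (hnd : (L.map Int.natAbs).Nodup) :
    ∃ γ : Perm ℤ, SignedPerm n γ ∧ HasWindow γ L := by
  have hinj := injective_windowExt hlen hL hnd
  have hfix : ∀ x ∉ pmn n, windowExt L x = x := fun x hx => by
    rw [mem_pmn] at hx
    rcases eq_or_ne x 0 with rfl | hx0
    · simp [windowExt]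
    · exact windowExt_of_length_lt (by omega)
  refine ⟨Equiv.ofBijective _ ⟨hinj, hinj.surjective_of_eqOn_compl (pmn n).finite_toSet hfix⟩,
    ⟨windowExt_neg L, fun x hx => hfix x fun h => ?_⟩, fun k hk => windowExt_succ L hk⟩
  rw [mem_pmn, lt_abs] at *
  omega

lemma HasWindow.apply_left {γ : Perm ℤ} {L₁ L₂ : List ℤ} (hw : HasWindow γ (L₁ ++ L₂)) {k : ℕ}
    (hk : k < L₁.length) : γ (k + 1) = L₁[k] := by
  rw [hw k (by rw [List.length_append]; omega), List.getElem_append_left]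

lemma HasWindow.apply_right {γ : Perm ℤ} {L₁ L₂ : List ℤ} (hw : HasWindow γ (L₁ ++ L₂)) {k : ℕ}
    (hk : k < L₂.length) : γ ((L₁.length + k : ℕ) + 1) = L₂[k] := by
  rw [hw _ (by rw [List.length_append]; omega), List.getElem_append_right (by omega)]
  simp only [add_tsub_cancel_left]

lemma HasWindow.image_Ioc {γ : Perm ℤ} {L₁ L₂ : List ℤ} (hw : HasWindow γ (L₁ ++ L₂)) :
    (Finset.Ioc (L₁.length : ℤ) (L₁.length + L₂.length : ℕ)).image γ = L₂.toFinset := by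
  ext y
  rw [Finset.mem_image, List.mem_toFinset, List.mem_iff_getElem]
  constructor
  · rintro ⟨x, hx, rfl⟩
    rw [Finset.mem_Ioc] at hx
    refine ⟨x.toNat - L₁.length - 1, by omega, ?_⟩
    rw [← hw.apply_right, show ((L₁.length + (x.toNat - L₁.length - 1) : ℕ) : ℤ) + 1 = x by omega]
  · rintro ⟨k, hk, rfl⟩
    exact ⟨_, Finset.mem_Ioc.2 (by omega), hw.apply_right hk⟩

lemma HasWindow.eq_length_of_descentB {γ : Perm ℤ} {L₁ L₂ : List ℤ}
    (hw : HasWindow γ (L₁ ++ L₂)) (h₁ : L₁.SortedLT) (h₂ : L₂.SortedLT) (hpos : ∀ x ∈ L₁, 0 < x)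
    {j : ℕ} (hj : j < L₁.length + L₂.length) (hdj : DescentB γ j) : j = L₁.length := by
  by_contra hji
  rcases Nat.eq_zero_or_pos j with rfl | hj0
  · rw [DescentB, if_pos rfl] at hdj
    have := hw.apply_left (k := 0) (by omega)
    rw [Nat.cast_zero, zero_add] at this
    have := hpos _ (List.getElem_mem (l := L₁) (n := 0) (by omega))
    omega
  rw [DescentB, if_neg hj0.ne'] at hdj
  rcases lt_or_gt_of_ne hji with hlt | hgt
  · have h1 := hw.apply_left hlt
    have h2 := hw.apply_left (k := j - 1) (by omega)
    rw [show ((j - 1 : ℕ) : ℤ) + 1 = j by omega] at h2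
    have := (h₁.getElem_lt_getElem_iff (i := j - 1) (j := j) (hi := by omega)
      (hj := by omega)).2 (by omega)
    omega
  · have h1 := hw.apply_right (k := j - L₁.length) (by omega)
    have h2 := hw.apply_right (k := j - L₁.length - 1) (by omega)
    rw [show ((L₁.length + (j - L₁.length) : ℕ) : ℤ) + 1 = j + 1 by omega] at h1
    rw [show ((L₁.length + (j - L₁.length - 1) : ℕ) : ℤ) + 1 = j by omega] at h2
    have := (h₂.getElem_lt_getElem_iff (i := j - L₁.length - 1) (j := j - L₁.length)
      (hi := by omega) (hj := by omega)).2 (by omega)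
    omega

lemma exists_signedPerm_hasWindow_posCompl {n : ℕ} {A : Finset ℤ} (hA : SignedSubset n A) :
    ∃ γ : Perm ℤ, SignedPerm n γ ∧ HasWindow γ ((posCompl n A).sort ++ A.sort) := by
  set C := posCompl n A
  have hmem : ∀ x, x ∈ C.sort ++ A.sort ↔ x ∈ C ∨ x ∈ A := fun x => by
    rw [List.mem_append, Finset.mem_sort, Finset.mem_sort]
  have hnd : (C.sort ++ A.sort).Nodup :=
    List.nodup_append.2 ⟨C.sort_nodup _, A.sort_nodup _, fun a ha b hb hab =>
      (mem_posCompl.1 ((C.mem_sort _).1 ha)).2.1 (hab ▸ (A.mem_sort _).1 hb)⟩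
  refine exists_signedPerm_hasWindow
    (by rw [List.length_append, Finset.length_sort, Finset.length_sort, card_posCompl_add_card hA])
    (fun x hx => ((hmem x).1 hx).elim
      (fun hx => mem_pmn.2 (by have := (mem_posCompl.1 hx).1; omega)) fun hx => hA.1 hx)
    (hnd.map_on fun x hx y hy hxy => ?_)
  rcases Int.natAbs_eq_natAbs_iff.1 hxy with h | rfl
  · exact h
  exfalso
  rcases (hmem _).1 hx with hx | hx <;> rcases (hmem _).1 hy with hy | hy
  · have := (mem_posCompl.1 hx).1
    have := (mem_posCompl.1 hy).1
    omega
  · exact (mem_posCompl.1 hx).2.2 (by rwa [neg_neg])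
  · exact (mem_posCompl.1 hy).2.2 hx
  · exact hA.2 y hy hx

lemma descentB_card_posCompl {n : ℕ} {A : Finset ℤ} {γ : Perm ℤ} (hA : SignedSubset n A)
    (hne : A.Nonempty) (hmM : mBs A < MBs n A) (hw : HasWindow γ ((posCompl n A).sort ++ A.sort)) :
    DescentB γ (posCompl n A).card := by
  set C := posCompl n A
  have hcard : C.card + A.card = n := card_posCompl_add_card hA
  have hm : γ (C.card + 1) = mBs A := by
    have := hw.apply_right (k := 0) (by rw [Finset.length_sort]; exact Finset.card_pos.2 hne)
    rw [Finset.length_sort, add_zero] at this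
    rw [this, mBs_eq_min' hne, Finset.sorted_zero_eq_min']
  by_cases h0 : C.card = 0
  · rw [MBs, if_pos (by omega)] at hmM
    rw [DescentB, if_pos h0]
    rw [h0, Nat.cast_zero, zero_add] at hm
    omega
  · have hCne : C.Nonempty := Finset.card_pos.1 (by omega)
    have hM : γ C.card = C.max' hCne := by
      have := hw.apply_left (k := C.card - 1) (by rw [Finset.length_sort]; omega)
      rw [show ((C.card - 1 : ℕ) : ℤ) + 1 = C.card by omega] at this
      rw [this, Finset.max'_eq_sorted_last]
      simp only [Finset.length_sort]
    rw [DescentB, if_neg h0, hm, hM]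
    exact hmM.trans_le (MBs_le_max'_posCompl (by omega) hCne)

lemma exists_signedPerm_of_signedSubset {n : ℕ} {A : Finset ℤ} (hA : SignedSubset n A)
    (hne : A.Nonempty) (hmM : mBs A < MBs n A) :
    ∃ γ : Perm ℤ, SignedPerm n γ ∧ ∃ i < n, DescentB γ i ∧
      (∀ j < n, DescentB γ j → j = i) ∧ A = (Finset.Ioc (i : ℤ) n).image γ := by
  obtain ⟨γ, hγ, hw⟩ := exists_signedPerm_hasWindow_posCompl hA
  have hlenC : (posCompl n A).sort.length = (posCompl n A).card := Finset.length_sort _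
  have hlenA : A.sort.length = A.card := Finset.length_sort _
  have hcard := card_posCompl_add_card hA
  have hApos := Finset.card_pos.2 hne
  refine ⟨γ, hγ, _, by omega, descentB_card_posCompl hA hne hmM hw, fun j hj hdj => ?_, ?_⟩
  · rw [← hlenC]
    exact hw.eq_length_of_descentB (Finset.sortedLT_sort _) (Finset.sortedLT_sort _)
      (fun x hx => (mem_posCompl.1 ((Finset.mem_sort _).1 hx)).1.1) (by omega) hdj
  · rw [show (n : ℤ) = ((posCompl n A).sort.length + A.sort.length : ℕ) by omega, ← hlenC,
      hw.image_Ioc, Finset.sort_toFinset]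

/-- A signed permutation `γ ∈ B_n` is join-irreducible in the right
weak order iff it has exactly one descent position `i ∈ {0,…,n−1}`; and
`γ ↦ A = {γ_{i+1},…,γ_n}` is a bijection between join-irreducibles of `B_n` and
nonempty signed subsets `A` of `[n]` with `M > m`. -/
theorem stmt_17 (n : ℕ) :
    (∀ γ : Equiv.Perm ℤ, SignedPerm n γ →
      (JoinIrrB n γ ↔ ∃! i : ℕ, i < n ∧ DescentB γ i)) ∧
    (∀ γ : Equiv.Perm ℤ, SignedPerm n γ → JoinIrrB n γ →
      ∃ i : ℕ, i < n ∧ DescentB γ i ∧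
        SignedSubset n ((Finset.Ioc (i : ℤ) (n : ℤ)).image ⇑γ) ∧
        ((Finset.Ioc (i : ℤ) (n : ℤ)).image ⇑γ).Nonempty ∧
        mBs ((Finset.Ioc (i : ℤ) (n : ℤ)).image ⇑γ) <
          MBs n ((Finset.Ioc (i : ℤ) (n : ℤ)).image ⇑γ)) ∧
    (∀ A : Finset ℤ, SignedSubset n A → A.Nonempty → mBs A < MBs n A →
      ∃! γ : Equiv.Perm ℤ, SignedPerm n γ ∧ JoinIrrB n γ ∧
        ∃ i : ℕ, i < n ∧ DescentB γ i ∧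
          A = (Finset.Ioc (i : ℤ) (n : ℤ)).image ⇑γ) := by
  refine ⟨fun γ hγ => joinIrrB_iff_existsUnique_descentB hγ, fun γ hγ hJ => ?_,
    fun A hA hne hmM => ?_⟩
  · obtain ⟨i, ⟨hi, hd⟩, -⟩ := (joinIrrB_iff_existsUnique_descentB hγ).1 hJ
    refine ⟨i, hi, hd, hγ.signedSubset_image fun x hx => ?_,
      ⟨γ (i + 1), Finset.mem_image_of_mem γ (Finset.mem_Ioc.2 ⟨by omega, by omega⟩)⟩,
      hγ.mBs_lt_MBs_image hi hd⟩
    rw [Finset.mem_Ioc] at hx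
    omega
  · obtain ⟨γ, hγ, i, hi, hd, huniq, rfl⟩ := exists_signedPerm_of_signedSubset hA hne hmM
    refine ⟨γ, ⟨hγ, (joinIrrB_iff_existsUnique_descentB hγ).2
      ⟨i, ⟨hi, hd⟩, fun j hj => huniq j hj.1 hj.2⟩, i, hi, hd, rfl⟩, ?_⟩
    rintro γ' ⟨hγ', hJ', i', hi', hd', himg⟩
    obtain ⟨i₀, -, huniq'⟩ := (joinIrrB_iff_existsUnique_descentB hγ').1 hJ'
    have huniq' : ∀ j < n, DescentB γ' j → j = i' := fun j hj hdj =>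
      (huniq' j ⟨hj, hdj⟩).trans (huniq' i' ⟨hi', hd'⟩).symm
    exact (hγ.eq_of_image_Ioc_eq hγ' huniq huniq' hi himg).symm
end

section
/- Let L be a finite semi-distributive lattice with an anti-automorphism α, and let σ be the map sending each join-irreducible γ to the unique meet-irreducible μ with γ ∧ μ = γ∗ and γ ∨ μ = μ*. If Θ₁ is a lattice congruence contracting exactly the set C₁ of join-irreducibles, and Θ₂ is the congruence contracting exactly C₂ := α(σ(C₁)), then α maps Θ₁-classes bijectively onto Θ₂-classes, inducing an anti-isomorphism from L/Θ₁ to L/Θ₂. -/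
/-- A lattice congruence, given as a relation. -/
def IsLatCong {L : Type*} [Lattice L] (r : L → L → Prop) : Prop :=
  Equivalence r ∧ ∀ a₁ a₂ b₁ b₂ : L, r a₁ a₂ → r b₁ b₂ →
    r (a₁ ⊔ b₁) (a₂ ⊔ b₂) ∧ r (a₁ ⊓ b₁) (a₂ ⊓ b₂)

/-- A congruence `θ` contracts a join-irreducible `γ` (an element with unique lower
cover `γ∗`) if `θ γ γ∗`. -/
def Contracts {L : Type*} [Lattice L] (θ : L → L → Prop) (γ : L) : Prop :=
  ∃ γs : L, γs ⋖ γ ∧ (∀ u : L, u ⋖ γ → u = γs) ∧ θ γ γs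

/-!
A congruence of a finite lattice is determined by the covers it collapses, and a cover `u ⋖ v`
is collapsed exactly when the join-irreducible `γ` minimal among `γ ≤ v, γ ≰ u` is contracted,
since `[u ⊓ γ, γ]` transposes up to `[u, v]`. Likewise `[γ∗, γ]` transposes up to `[σ γ, (σ γ)*]`,
so a congruence contracts `γ` iff it collapses `σ γ ⋖ (σ γ)*`; in particular it contracts `γ`
iff it contracts every `γ'` with `σ γ' = σ γ`. The anti-automorphism `α` turns
`σ γ ⋖ (σ γ)*` into the join-irreducible `α (σ γ)` and its lower cover, so `θ₁` and the pullback
`x, y ↦ θ₂ (α x) (α y)` contract the same join-irreducibles, hence coincide.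
-/

section Covers

variable {L : Type*} [PartialOrder L]

def IsUniqueLowerCover (a b : L) : Prop :=
  a ⋖ b ∧ ∀ c, c ⋖ b → c = a

def IsUniqueUpperCover (b a : L) : Prop :=
  a ⋖ b ∧ ∀ c, a ⋖ c → c = b

theorem isUniqueLowerCover_of_forall_lt_le {a b : L} (hab : a < b) (h : ∀ c < b, c ≤ a) :
    IsUniqueLowerCover a b :=
  ⟨⟨hab, fun c hac hcb => (h c hcb).not_gt hac⟩,
    fun c hcb => (h c hcb.lt).eq_of_not_lt fun hca => hcb.2 hca hab⟩

theorem IsUniqueUpperCover.map_orderIso_dual {M : Type*} [PartialOrder M] (e : L ≃o Mᵒᵈ)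
    {a b : L} (h : IsUniqueUpperCover b a) :
    IsUniqueLowerCover (OrderDual.ofDual (e b)) (OrderDual.ofDual (e a)) := by
  refine ⟨ofDual_covBy_ofDual_iff.2 ((apply_covBy_apply_iff e).2 h.1), fun c hc => ?_⟩
  have hcov : a ⋖ e.symm (OrderDual.toDual c) := by
    rw [← apply_covBy_apply_iff e, e.apply_symm_apply]
    exact hc.toDual
  rw [← h.2 _ hcov, e.apply_symm_apply]
  rfl

end Covers

theorem CovBy.exists_isUniqueLowerCover_inf_sup {L : Type*} [Lattice L] [Finite L] {u v : L}
    (huv : u ⋖ v) : ∃ γ, IsUniqueLowerCover (γ ⊓ u) γ ∧ γ ⊔ u = v := by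
  obtain ⟨γ, ⟨hγv, hγu⟩, hmin⟩ := wellFounded_lt.has_min {x : L | x ≤ v ∧ ¬x ≤ u}
    ⟨v, le_rfl, huv.lt.not_ge⟩
  have hbelow : ∀ x < γ, x ≤ γ ⊓ u := fun x hx =>
    le_inf hx.le (not_not.1 fun hxu => hmin x ⟨hx.le.trans hγv, hxu⟩ hx)
  refine ⟨γ, isUniqueLowerCover_of_forall_lt_le ?_ hbelow, ?_⟩
  · exact inf_le_left.lt_of_ne fun h => hγu (h ▸ inf_le_right)
  · exact (sup_le hγv huv.le).eq_of_not_lt fun hlt => huv.2 (right_lt_sup.2 hγu) hlt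

namespace IsLatCong

variable {L : Type*} [Lattice L] {θ θ' : L → L → Prop}

theorem comm (h : IsLatCong θ) {a b : L} : θ a b ↔ θ b a :=
  ⟨h.1.symm, h.1.symm⟩

theorem of_le_of_le (h : IsLatCong θ) {x y u v : L} (hxy : θ x y) (hxu : x ≤ u) (huv : u ≤ v)
    (hvy : v ≤ y) : θ u v := by
  have hu : θ u y := by
    simpa [sup_eq_right.2 hxu, sup_eq_left.2 (huv.trans hvy)] using (h.2 x y u u hxy (h.1.refl u)).1
  simpa [inf_eq_left.2 huv, inf_eq_right.2 hvy] using (h.2 u y v v hu (h.1.refl v)).2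

theorem iff_inf_sup (h : IsLatCong θ) {a b : L} : θ a b ↔ θ (a ⊓ b) (a ⊔ b) := by
  refine ⟨fun hab => ?_, fun hab => ?_⟩
  · obtain ⟨hsup, hinf⟩ := h.2 a b b b hab (h.1.refl b)
    rw [sup_idem] at hsup
    rw [inf_idem] at hinf
    exact h.1.trans hinf (h.1.symm hsup)
  · exact h.1.trans (h.of_le_of_le hab inf_le_left le_sup_left le_rfl)
      (h.1.symm (h.of_le_of_le hab inf_le_right le_sup_right le_rfl))

theorem transpose (h : IsLatCong θ) {x y a b : L} (hinf : x ⊓ y = a) (hsup : x ⊔ y = b) :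
    θ a x ↔ θ y b := by
  subst hinf hsup
  refine ⟨fun hθ => ?_, fun hθ => ?_⟩
  · simpa using (h.2 _ _ y y hθ (h.1.refl y)).1
  · simpa [inf_comm y x] using (h.2 y (x ⊔ y) x x hθ (h.1.refl x)).2

theorem of_forall_covBy [Finite L] (h : IsLatCong θ) {x y : L} (hxy : x ≤ y)
    (hcov : ∀ u v, x ≤ u → u ⋖ v → v ≤ y → θ u v) : θ x y := by
  induction y using WellFoundedLT.induction with
  | ind y ih =>
    rcases hxy.eq_or_lt with rfl | hlt
    · exact h.1.refl x
    obtain ⟨u, hxu, huy⟩ := exists_le_covBy_of_lt hlt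
    exact h.1.trans (ih u huy.lt hxu fun a b ha hab hb => hcov a b ha hab (hb.trans huy.le))
      (hcov u y hxu huy le_rfl)

theorem iff_of_forall_covBy [Finite L] (h : IsLatCong θ) (h' : IsLatCong θ')
    (hcov : ∀ u v : L, u ⋖ v → (θ u v ↔ θ' u v)) {a b : L} : θ a b ↔ θ' a b := by
  have hdet : ∀ {ρ : L → L → Prop}, IsLatCong ρ →
      (ρ a b ↔ ∀ u v, a ⊓ b ≤ u → u ⋖ v → v ≤ a ⊔ b → ρ u v) := fun hρ =>
    hρ.iff_inf_sup.trans ⟨fun hθ _ _ hu huv hv => hρ.of_le_of_le hθ hu huv.le hv,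
      hρ.of_forall_covBy inf_le_sup⟩
  rw [hdet h, hdet h']
  exact forall₂_congr fun u v => imp_congr_right fun _ =>
    forall_congr' fun huv => imp_congr_right fun _ => hcov u v huv

theorem iff_of_forall_isUniqueLowerCover [Finite L] (h : IsLatCong θ) (h' : IsLatCong θ')
    (hjoin : ∀ γs γ : L, IsUniqueLowerCover γs γ → (θ γs γ ↔ θ' γs γ)) {a b : L} :
    θ a b ↔ θ' a b := by
  refine h.iff_of_forall_covBy h' fun u v huv => ?_
  obtain ⟨γ, hγ, hsup⟩ := huv.exists_isUniqueLowerCover_inf_sup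
  rw [← h.transpose rfl hsup, ← h'.transpose rfl hsup]
  exact hjoin _ γ hγ

theorem comap_orderIso_dual {M : Type*} [Lattice M] {θ : M → M → Prop} (h : IsLatCong θ)
    (e : L ≃o Mᵒᵈ) : IsLatCong fun x y => θ (OrderDual.ofDual (e x)) (OrderDual.ofDual (e y)) := by
  refine ⟨⟨fun x => h.1.refl _, h.1.symm, h.1.trans⟩, fun a₁ a₂ b₁ b₂ ha hb => ?_⟩
  simp only [e.map_sup, e.map_inf, ofDual_sup, ofDual_inf]
  exact (h.2 _ _ _ _ ha hb).symm

end IsLatCong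

section Contracts

variable {L : Type*} [Lattice L] {θ : L → L → Prop}

theorem IsUniqueLowerCover.contracts_iff {γs γ : L} (hγ : IsUniqueLowerCover γs γ) :
    Contracts θ γ ↔ θ γ γs :=
  ⟨fun ⟨_, hcov, _, hθ⟩ => hγ.2 _ hcov ▸ hθ, fun hθ => ⟨γs, hγ.1, hγ.2, hθ⟩⟩

theorem IsLatCong.contracts_iff_of_inf_sup (h : IsLatCong θ) {γs γ m μs : L}
    (hγ : IsUniqueLowerCover γs γ) (hinf : γ ⊓ m = γs) (hsup : γ ⊔ m = μs) :
    Contracts θ γ ↔ θ m μs :=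
  hγ.contracts_iff.trans (h.comm.trans (h.transpose hinf hsup))

def IsPartnerMap (σ : L → L) : Prop :=
  ∀ γs γ, IsUniqueLowerCover γs γ →
    ∃ μs, IsUniqueUpperCover μs (σ γ) ∧ γ ⊓ σ γ = γs ∧ γ ⊔ σ γ = μs

theorem IsPartnerMap.contracts_of_eq {σ : L → L} (hσ : IsPartnerMap σ) (h : IsLatCong θ)
    {γs γ γ' : L} (hγ : IsUniqueLowerCover γs γ) (hγ' : Contracts θ γ') (heq : σ γ' = σ γ) :
    Contracts θ γ := by
  obtain ⟨γ's, hcov', huniq', hθ⟩ := hγ'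
  have hγ's : IsUniqueLowerCover γ's γ' := ⟨hcov', huniq'⟩
  obtain ⟨μs', hμs', hinf', hsup'⟩ := hσ γ's γ' hγ's
  obtain ⟨μs, hμs, hinf, hsup⟩ := hσ γs γ hγ
  have hμ : μs' = μs := hμs.2 μs' (heq ▸ hμs'.1)
  rw [h.contracts_iff_of_inf_sup hγ hinf hsup, ← heq, ← hμ,
    ← h.contracts_iff_of_inf_sup hγ's hinf' hsup', hγ's.contracts_iff]
  exact hθ

theorem IsPartnerMap.contracts_iff_mem_image {σ : L → L} (hσ : IsPartnerMap σ)
    (h : IsLatCong θ) {M : Type*} {f : L → M} (hf : Function.Injective f) {γs γ : L}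
    (hγ : IsUniqueLowerCover γs γ) :
    Contracts θ γ ↔ f (σ γ) ∈ (fun γ => f (σ γ)) '' {γ | Contracts θ γ} :=
  ⟨fun hθ => ⟨γ, hθ, rfl⟩, fun ⟨_, hγ', heq⟩ => hσ.contracts_of_eq h hγ hγ' (hf heq)⟩

end Contracts

theorem stmt_19_general {L : Type*} [Lattice L] [Fintype L] (α : L ≃ L)
    (hα : ∀ x y : L, x ≤ y ↔ α y ≤ α x)
    (σ : L → L)
    (hσ : ∀ γ γs : L, γs ⋖ γ → (∀ u : L, u ⋖ γ → u = γs) →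
      ∃ μs : L, σ γ ⋖ μs ∧ (∀ v : L, σ γ ⋖ v → v = μs) ∧
        γ ⊓ σ γ = γs ∧ γ ⊔ σ γ = μs)
    (θ₁ θ₂ : L → L → Prop) (h1 : IsLatCong θ₁) (h2 : IsLatCong θ₂)
    (hC : {γ : L | Contracts θ₂ γ} = (fun γ => α (σ γ)) '' {γ : L | Contracts θ₁ γ}) :
    ∀ a b : L, θ₁ a b ↔ θ₂ (α a) (α b) := by
  let e : L ≃o Lᵒᵈ := ⟨α.trans OrderDual.toDual, (hα _ _).symm⟩
  have hσ' : IsPartnerMap σ := fun γs γ hγ => (hσ γ γs hγ.1 hγ.2).imp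
    fun _ ⟨hcov, huniq, hinf, hsup⟩ => ⟨⟨hcov, huniq⟩, hinf, hsup⟩
  have h2' : IsLatCong fun x y => θ₂ (α x) (α y) := h2.comap_orderIso_dual e
  refine fun a b => h1.iff_of_forall_isUniqueLowerCover h2' fun γs γ hγ => ?_
  obtain ⟨μs, hμs, hinf, hsup⟩ := hσ' γs γ hγ
  calc θ₁ γs γ ↔ θ₁ (σ γ) μs := h1.transpose hinf hsup
    _ ↔ Contracts θ₁ γ := (h1.contracts_iff_of_inf_sup hγ hinf hsup).symm
    _ ↔ Contracts θ₂ (α (σ γ)) := by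
      rw [hσ'.contracts_iff_mem_image h1 α.injective hγ, ← hC]
      rfl
    _ ↔ θ₂ (α (σ γ)) (α μs) := (hμs.map_orderIso_dual e).contracts_iff
    _ ↔ θ₂ (α γs) (α γ) := (h2'.transpose hinf hsup).symm

/-- Let `L` be a finite semi-distributive lattice with an
anti-automorphism `α`, and let `σ` send each join-irreducible `γ` to the unique
meet-irreducible `μ` with `γ ⊓ μ = γ∗` and `γ ⊔ μ = μ*`. If `θ₁` contracts exactly
the set `C₁` of join-irreducibles and `θ₂` contracts exactly `α(σ(C₁))`, then `α`
maps `θ₁`-classes to `θ₂`-classes, inducing an anti-isomorphism `L/θ₁ → L/θ₂`. -/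
theorem stmt_19 {L : Type*} [Lattice L] [Fintype L] (α : L ≃ L)
    (hα : ∀ x y : L, x ≤ y ↔ α y ≤ α x)
    (hJSD : ∀ x y z : L, x ⊔ y = x ⊔ z → x ⊔ (y ⊓ z) = x ⊔ y)
    (hMSD : ∀ x y z : L, x ⊓ y = x ⊓ z → x ⊓ (y ⊔ z) = x ⊓ y)
    (σ : L → L)
    (hσ : ∀ γ γs : L, γs ⋖ γ → (∀ u : L, u ⋖ γ → u = γs) →
      ∃ μs : L, σ γ ⋖ μs ∧ (∀ v : L, σ γ ⋖ v → v = μs) ∧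
        γ ⊓ σ γ = γs ∧ γ ⊔ σ γ = μs)
    (θ₁ θ₂ : L → L → Prop) (h1 : IsLatCong θ₁) (h2 : IsLatCong θ₂)
    (hC : {γ : L | Contracts θ₂ γ} = (fun γ => α (σ γ)) '' {γ : L | Contracts θ₁ γ}) :
    ∀ a b : L, θ₁ a b ↔ θ₂ (α a) (α b) :=
  stmt_19_general α hα σ hσ θ₁ θ₂ h1 h2 hC
end
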